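/- arXiv:1903.12385 — 4 statements merged into one kernel-verified Lean document; each statement's English description precedes it below -/
import Mathlib

section
/- Let G be a finite simple graph and let n, m be integers with 0 < n ≤ m ≤ 2n. If iso(G−S) ≤ (m/n)|S| for all subsets S ⊆ V(G), then G has a {K_{1,1}, K_{1,2}, C_m : m ≥ 3}-factor with at most ((m−n)/(m+n))|V(G)| components isomorphic to K_{1,2}. -/
open Finset

namespace SCF

variable {V : Type*}

/-- Degree of `v` in `F` (as the cardinality of its neighbor set). -/
noncomputable def deg [Fintype V] (F : SimpleGraph V) (v : V) : ℕ :=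
  (F.neighborSet v).ncard

/-- Number of isolated vertices of `G - S`. -/
noncomputable def iso [Fintype V] (G : SimpleGraph V) (S : Set V) : ℕ :=
  {v | v ∉ S ∧ ∀ w, G.Adj v w → w ∈ S}.ncard

/-- The component of `v` in `F` is a single edge `K_{1,1}`. -/
def IsK11Comp [Fintype V] (F : SimpleGraph V) (v : V) : Prop :=
  deg F v = 1 ∧ ∀ w, F.Adj v w → deg F w = 1

/-- The component of `v` in `F` is a path on three vertices `K_{1,2}`. -/
def IsK12Comp [Fintype V] (F : SimpleGraph V) (v : V) : Prop :=
  ∃ c a b, a ≠ b ∧ F.Adj c a ∧ F.Adj c b ∧ deg F c = 2 ∧ deg F a = 1 ∧ deg F b = 1 ∧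
    (v = c ∨ v = a ∨ v = b)

/-- The component of `v` in `F` is a cycle (2-regular connected, so length ≥ 3). -/
def IsCycleComp [Fintype V] (F : SimpleGraph V) (v : V) : Prop :=
  ∀ w, F.Reachable v w → deg F w = 2

/-- The component of `v` in `F` is an odd cycle. -/
def IsOddCycleComp [Fintype V] (F : SimpleGraph V) (v : V) : Prop :=
  IsCycleComp F v ∧ Odd {w | F.Reachable v w}.ncard

/-- The component of `v` in `F` is a star `K_{1,i}` for some `i ≥ 1`. -/
def IsStarComp [Fintype V] (F : SimpleGraph V) (v : V) : Prop :=
  ∃ c, (v = c ∨ F.Adj c v) ∧ 0 < deg F c ∧ ∀ w, F.Adj c w → deg F w = 1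

/-- The component of `v` in `F` is a star `K_{1,i}` with `1 ≤ i ≤ n`. -/
def IsStarAtMostComp [Fintype V] (F : SimpleGraph V) (n : ℕ) (v : V) : Prop :=
  ∃ c, (v = c ∨ F.Adj c v) ∧ 0 < deg F c ∧ deg F c ≤ n ∧ ∀ w, F.Adj c w → deg F w = 1

/-- `F` is a `{K_{1,1}, C_m : m ≥ 3}`-factor of `G`. -/
def IsK11CycleFactor [Fintype V] (G F : SimpleGraph V) : Prop :=
  F ≤ G ∧ ∀ v, IsK11Comp F v ∨ IsCycleComp F v

/-- `F` is a `{K_{1,1}, K_{1,2}, C_m : m ≥ 3}`-factor of `G`. -/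
def IsK11K12CycleFactor [Fintype V] (G F : SimpleGraph V) : Prop :=
  F ≤ G ∧ ∀ v, IsK11Comp F v ∨ IsK12Comp F v ∨ IsCycleComp F v

/-- Number of `K_{1,2}`-components of `F`, counted by their centers. -/
noncomputable def countK12 [Fintype V] (F : SimpleGraph V) : ℕ :=
  {v | deg F v = 2 ∧ ∀ w, F.Adj v w → deg F w = 1}.ncard

/-- `min(G, K_{1,2})`: the minimum number of `K_{1,2}`-components over all
`{K_{1,1}, K_{1,2}, C_m : m ≥ 3}`-factors of `G`. -/
noncomputable def minK12 [Fintype V] (G : SimpleGraph V) : ℕ :=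
  sInf {t | ∃ F, IsK11K12CycleFactor G F ∧ countK12 F = t}

/-- `f` is a fractional matching of `G`. -/
def IsFracMatching [Fintype V] [DecidableEq V] (G : SimpleGraph V) [DecidableRel G.Adj]
    (f : Sym2 V → ℝ) : Prop :=
  (∀ e, 0 ≤ f e ∧ f e ≤ 1) ∧ (∀ e, e ∉ G.edgeSet → f e = 0) ∧
    ∀ v : V, ∑ e ∈ G.edgeFinset, (if v ∈ e then f e else 0) ≤ 1

/-- Total weight of a fractional matching. -/
def weight [Fintype V] [DecidableEq V] (G : SimpleGraph V) [DecidableRel G.Adj]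
    (f : Sym2 V → ℝ) : ℝ :=
  ∑ e ∈ G.edgeFinset, f e

/-- The fractional matching number `μ_f(G)`. -/
noncomputable def nuF [Fintype V] [DecidableEq V] (G : SimpleGraph V) [DecidableRel G.Adj] : ℝ :=
  sSup (weight G '' {f | IsFracMatching G f})

/-- `f` is a maximum fractional matching of `G`. -/
def IsMaxFracMatching [Fintype V] [DecidableEq V] (G : SimpleGraph V) [DecidableRel G.Adj]
    (f : Sym2 V → ℝ) : Prop :=
  IsFracMatching G f ∧ weight G f = nuF G

/-- `s` is an independent set of vertices of `G`. -/
def IsIndepSet (G : SimpleGraph V) (s : Set V) : Prop :=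
  ∀ ⦃u⦄, u ∈ s → ∀ ⦃w⦄, w ∈ s → ¬ G.Adj u w

/-- The independence number `α(G)`. -/
noncomputable def alpha [Fintype V] (G : SimpleGraph V) : ℕ :=
  sSup {n | ∃ s : Set V, IsIndepSet G s ∧ s.ncard = n}

/-- `G` has a proper edge coloring with `k` colors. -/
def HasProperEdgeColoring (G : SimpleGraph V) (k : ℕ) : Prop :=
  ∃ c : Sym2 V → Fin k, ∀ e₁ ∈ G.edgeSet, ∀ e₂ ∈ G.edgeSet,
    e₁ ≠ e₂ → ∀ v : V, v ∈ e₁ → v ∈ e₂ → c e₁ ≠ c e₂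

/-- The chromatic index `χ'(G)`: the minimum number of colors (equivalently matchings)
needed to properly color the edges of `G`. -/
noncomputable def chromIdx (G : SimpleGraph V) : ℕ :=
  sInf {k | HasProperEdgeColoring G k}

/-- `G` is a `k`-critical graph. -/
def IsCriticalWith [Fintype V] (G : SimpleGraph V) [DecidableRel G.Adj] (k : ℕ) : Prop :=
  2 ≤ k ∧ G.maxDegree = k ∧ chromIdx G = k + 1 ∧
    ∀ H : SimpleGraph V, H < G → chromIdx H ≤ k

/-- `G` is an edge-chromatic critical graph. -/
def IsCritical [Fintype V] (G : SimpleGraph V) [DecidableRel G.Adj] : Prop :=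
  ∃ k, IsCriticalWith G k

/-- `G` is factor-critical: deleting any vertex leaves a graph with a perfect matching. -/
def IsFactorCritical (G : SimpleGraph V) : Prop :=
  ∀ v : V, ∃ M : G.Subgraph, M.verts = {v}ᶜ ∧ M.IsMatching

end SCF

open SCF

/-!
Take an independent set `W` of maximum surplus `|W| - |N(W)|` and let `S = N(W)`. Maximality gives
Hall's condition for the vertices outside `W ∪ S`, so a permutation of them moves every vertex to a
neighbour; its orbits are edges and cycles. Maximality also gives `|N(A)| ≥ |A| - |W| + |S|` for
`A ⊆ W`, and the hypothesis gives `|A| ≤ iso(G - N(A)) ≤ 2|N(A)|`; by Hall's theorem with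
`2|S| - |W|` dummy vertices, `W` is then sent along edges onto `S` with fibres of size one or two.
These stars are `K_{1,1}`s and `K_{1,2}`s, exactly `|W| - |S|` of the latter, and
`|W| ≤ iso(G - S) ≤ (m/n)|S|` together with `|W| + |S| ≤ |V|` bounds this number by
`((m - n)/(m + n))|V|`.
-/

namespace SCF

section Assignment

variable {α β ι : Type*} [DecidableEq α] [DecidableEq β]

theorem exists_perm_forall_mem_of_hall [Fintype α] (D : Finset α) (r : α → Finset α)
    (hall : ∀ s ⊆ D, #s ≤ #(s.biUnion r ∩ D)) :
    ∃ σ : Equiv.Perm α, (∀ a ∈ D, σ a ∈ r a) ∧ ∀ a ∉ D, σ a = a := by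
  have hall' : ∀ s : Finset D, #s ≤ #(s.biUnion fun a => r a ∩ D) := fun s => by
    have hs : s.map (Function.Embedding.subtype _) ⊆ D := fun _ => property_of_mem_map_subtype s
    have hunion : (s.map (Function.Embedding.subtype _)).biUnion r ∩ D =
        s.biUnion fun a => r a ∩ D := by
      ext
      simp only [mem_inter, mem_biUnion, mem_map, Function.Embedding.subtype_apply,
        Subtype.exists, exists_and_right, exists_eq_right]
      tauto
    simpa [hunion] using hall _ hs
  obtain ⟨f, hf_inj, hf⟩ := (all_card_le_biUnion_card_iff_exists_injective _).1 hall'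
  let g : D → D := fun a => ⟨f a, (mem_inter.1 (hf a)).2⟩
  have hg : g.Injective := fun a b hab => hf_inj (congrArg Subtype.val hab)
  refine ⟨Equiv.Perm.ofSubtype (Equiv.ofBijective g hg.bijective_of_finite), fun a ha => ?_,
    fun a ha => Equiv.Perm.ofSubtype_apply_of_not_mem _ ha⟩
  rw [Equiv.Perm.ofSubtype_apply_of_mem _ ha]
  exact (mem_inter.1 (hf ⟨a, ha⟩)).1

/- Hall's theorem for `ι ⊕ Fin k` against `T × Bool`: the `k = 2|T| - |ι|` dummy sources can only
use the copies `(t, false)`, so an injection saturating both copies leaves every `(t, true)` to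
a genuine source. -/
theorem exists_one_le_card_fiber_le_two [Fintype ι] (r : ι → Finset β)
    (T : Finset β) (hrT : ∀ i, r i ⊆ T) (hdouble : ∀ s : Finset ι, #s ≤ 2 * #(s.biUnion r))
    (hsurplus : ∀ s : Finset ι, #s + #T ≤ #(s.biUnion r) + Fintype.card ι) :
    ∃ φ : ι → β, (∀ i, φ i ∈ r i) ∧ ∀ t ∈ T, 1 ≤ #{i | φ i = t} ∧ #{i | φ i = t} ≤ 2 := by
  have hcard : Fintype.card ι ≤ 2 * #T :=
    (hdouble univ).trans (by gcongr; exact biUnion_subset.2 fun i _ => hrT i)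
  set k := 2 * #T - Fintype.card ι
  let R : ι ⊕ Fin k → Finset (β × Bool) := Sum.elim (fun i => r i ×ˢ univ) fun _ => T ×ˢ {false}
  have hall : ∀ s : Finset (ι ⊕ Fin k), #s ≤ #(s.biUnion R) := by
    intro s
    have hA : s.toLeft.biUnion r ×ˢ univ ⊆ s.biUnion R := by
      intro x hx
      obtain ⟨i, hi, hxi⟩ := mem_biUnion.1 (mem_product.1 hx).1
      exact mem_biUnion.2 ⟨.inl i, mem_toLeft.1 hi, mem_product.2 ⟨hxi, mem_univ _⟩⟩
    have hsplit := card_toLeft_add_card_toRight (u := s)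
    rcases s.toRight.eq_empty_or_nonempty with hR | ⟨j, hj⟩
    · calc #s = #s.toLeft := by rw [← hsplit, hR, card_empty, add_zero]
        _ ≤ 2 * #(s.toLeft.biUnion r) := hdouble _
        _ = #(s.toLeft.biUnion r ×ˢ univ) := by simp [mul_comm]
        _ ≤ _ := card_le_card hA
    · have hT : T ×ˢ {false} ⊆ s.biUnion R :=
        fun x hx => mem_biUnion.2 ⟨.inr j, mem_toRight.1 hj, hx⟩
      have hdisj : Disjoint (s.toLeft.biUnion r ×ˢ {true}) (T ×ˢ {false}) :=
        disjoint_product.2 (Or.inr (by simp))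
      have hle := card_le_card (union_subset
        ((product_subset_product_right (subset_univ {true})).trans hA) hT)
      rw [card_union_of_disjoint hdisj, card_product, card_product] at hle
      have hk : #s.toRight ≤ k := (card_le_univ _).trans (Fintype.card_fin k).le
      have := hsurplus s.toLeft
      simp only [card_singleton, mul_one] at hle
      omega
  obtain ⟨f, hf_inj, hf⟩ := (all_card_le_biUnion_card_iff_exists_injective R).1 hall
  refine ⟨fun i => (f (.inl i)).1, fun i => (mem_product.1 (hf (.inl i))).1,
    fun t ht => ⟨?_, ?_⟩⟩
  · have hmaps : Set.MapsTo f ↑(univ : Finset (ι ⊕ Fin k)) ↑(T ×ˢ univ : Finset (β × Bool)) := by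
      rintro (i | j) -
      · exact mem_product.2 ⟨hrT i (mem_product.1 (hf (.inl i))).1, mem_univ _⟩
      · exact mem_product.2 ⟨(mem_product.1 (hf (.inr j))).1, mem_univ _⟩
    obtain ⟨x, -, hx⟩ := surjOn_of_injOn_of_card_le f hmaps hf_inj.injOn
      (by
        rw [card_product, card_univ, card_univ, Fintype.card_sum, Fintype.card_fin,
          Fintype.card_bool]
        omega) (mem_product.2 ⟨ht, mem_univ true⟩ : (t, true) ∈ T ×ˢ univ)
    rcases x with i | j
    · exact card_pos.2 ⟨i, by simp [hx]⟩
    · have := (mem_product.1 (hf (.inr j))).2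
      simp [hx] at this
  · calc #{i | (f (.inl i)).1 = t} ≤ #(univ : Finset Bool) := by
          refine card_le_card_of_injOn (fun i => (f (.inl i)).2) (fun _ _ => mem_univ _) ?_
          intro a ha b hb hab
          simp only [coe_filter, mem_univ, true_and, Set.mem_ofPred_eq] at ha hb
          exact Sum.inl_injective (hf_inj (Prod.ext (ha.trans hb.symm) hab))
      _ = 2 := rfl

theorem card_eq_card_add_card_filter_fiber_eq_two [Fintype ι] (φ : ι → β) (T : Finset β)
    (hφ : ∀ i, φ i ∈ T) (hfib : ∀ t ∈ T, 1 ≤ #{i | φ i = t} ∧ #{i | φ i = t} ≤ 2) :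
    Fintype.card ι = #T + #{t ∈ T | #{i | φ i = t} = 2} := by
  rw [← card_univ, card_eq_sum_card_fiberwise fun i _ => hφ i, card_filter, card_eq_sum_ones,
    ← sum_add_distrib]
  refine sum_congr rfl fun t ht => ?_
  have := hfib t ht
  split_ifs <;> omega

end Assignment

variable {V : Type*} [DecidableEq V]

theorem apply_eq_self_of_support_eq_compl [Fintype V] {σ : Equiv.Perm V} {A : Finset V}
    (hσ : σ.support = Aᶜ) {x : V} (hx : x ∈ A) : σ x = x := by
  rw [← Equiv.Perm.notMem_support, hσ, notMem_compl]
  exact hx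

theorem apply_notMem_of_support_eq_compl [Fintype V] {σ : Equiv.Perm V} {A : Finset V}
    (hσ : σ.support = Aᶜ) {x : V} (hx : x ∉ A) : σ x ∉ A ∧ σ⁻¹ x ∉ A := by
  simp only [← mem_compl, ← hσ] at hx ⊢
  exact ⟨Equiv.Perm.apply_mem_support.2 hx, by rwa [← Equiv.Perm.support_inv,
    Equiv.Perm.apply_mem_support, Equiv.Perm.support_inv]⟩

section Factor

variable (W : Finset V) (φ : W → V) (σ : Equiv.Perm V)

def starCycleMap (x : V) : V :=
  if h : x ∈ W then φ ⟨x, h⟩ else σ x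

/- The edges are `x — starCycleMap x`; `fromRel` discards the loops at the fixed points of
`starCycleMap`, which will be the centres of the stars. -/
def starCycleFactor : SimpleGraph V :=
  SimpleGraph.fromRel fun x y => starCycleMap W φ σ x = y

variable {W φ σ}

theorem starCycleMap_of_mem {x : V} (hx : x ∈ W) : starCycleMap W φ σ x = φ ⟨x, hx⟩ :=
  dif_pos hx

theorem starCycleMap_of_notMem {x : V} (hx : x ∉ W) : starCycleMap W φ σ x = σ x :=
  dif_neg hx

theorem starCycleFactor_le {G : SimpleGraph V}
    (hG : ∀ x, starCycleMap W φ σ x ≠ x → G.Adj x (starCycleMap W φ σ x)) :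
    starCycleFactor W φ σ ≤ G := by
  rintro x y ⟨hne, rfl | rfl⟩
  exacts [hG x hne.symm, (hG y hne).symm]

variable [Fintype V] {S : Finset V} (hWS : Disjoint W S) (hφ : ∀ i, φ i ∈ S)
  (hσ : σ.support = (W ∪ S)ᶜ)

include hWS hφ hσ in
theorem neighborSet_starCycleFactor_of_mem_left {x : V} (hx : x ∈ W) :
    (starCycleFactor W φ σ).neighborSet x = {φ ⟨x, hx⟩} := by
  have hne : x ≠ φ ⟨x, hx⟩ := fun h => disjoint_left.1 hWS hx (h ▸ hφ _)
  ext y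
  simp only [SimpleGraph.mem_neighborSet, starCycleFactor, SimpleGraph.fromRel_adj,
    Set.mem_singleton_iff, starCycleMap_of_mem hx]
  refine ⟨fun ⟨_, h⟩ => (h.resolve_right fun h => ?_).symm, fun h => ⟨h ▸ hne, .inl h.symm⟩⟩
  by_cases hy : y ∈ W
  · rw [starCycleMap_of_mem hy] at h
    exact disjoint_left.1 hWS hx (h ▸ hφ _)
  · rw [starCycleMap_of_notMem hy,
      ← apply_eq_self_of_support_eq_compl hσ (mem_union_left _ hx)] at h
    exact hy (σ.injective h ▸ hx)

include hWS hσ in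
theorem neighborSet_starCycleFactor_of_mem_right {s : V} (hs : s ∈ S) :
    (starCycleFactor W φ σ).neighborSet s =
      ↑((univ.filter fun i => φ i = s).map (Function.Embedding.subtype _)) := by
  have hsW : s ∉ W := disjoint_right.1 hWS hs
  have hfix : starCycleMap W φ σ s = s := by
    rw [starCycleMap_of_notMem hsW, apply_eq_self_of_support_eq_compl hσ (mem_union_right _ hs)]
  ext y
  simp only [SimpleGraph.mem_neighborSet, starCycleFactor, SimpleGraph.fromRel_adj, hfix,
    coe_map, coe_filter, mem_univ, true_and, Set.mem_image, Function.Embedding.coe_subtype]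
  constructor
  · rintro ⟨hne, h | h⟩
    · exact absurd h hne
    by_cases hy : y ∈ W
    · exact ⟨⟨y, hy⟩, (starCycleMap_of_mem hy).symm.trans h, rfl⟩
    · rw [starCycleMap_of_notMem hy,
        ← apply_eq_self_of_support_eq_compl hσ (mem_union_right _ hs)] at h
      exact absurd (σ.injective h).symm hne
  · rintro ⟨i, hi, rfl⟩
    exact ⟨fun h => hsW (h ▸ i.2), .inr ((starCycleMap_of_mem i.2).trans hi)⟩

include hφ hσ in
theorem neighborSet_starCycleFactor_of_notMem {x : V} (hx : x ∉ W ∪ S) :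
    (starCycleFactor W φ σ).neighborSet x = {σ x, σ⁻¹ x} := by
  have hxW : x ∉ W := fun h => hx (mem_union_left _ h)
  have hmove : σ x ≠ x := fun h => hx (by
    rw [← notMem_compl, ← hσ, Equiv.Perm.notMem_support]; exact h)
  ext y
  simp only [SimpleGraph.mem_neighborSet, starCycleFactor, SimpleGraph.fromRel_adj,
    starCycleMap_of_notMem hxW, Set.mem_insert_iff, Set.mem_singleton_iff]
  constructor
  · rintro ⟨-, h | h⟩
    · exact .inl h.symm
    by_cases hy : y ∈ W
    · rw [starCycleMap_of_mem hy] at h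
      exact absurd (mem_union_right _ (h ▸ hφ _)) hx
    · rw [starCycleMap_of_notMem hy] at h
      exact .inr (Equiv.Perm.eq_inv_iff_eq.2 h)
  · have hinv : σ⁻¹ x ∉ W := fun h =>
      (apply_notMem_of_support_eq_compl hσ hx).2 (mem_union_left _ h)
    rintro (rfl | rfl)
    · exact ⟨hmove.symm, .inl rfl⟩
    · refine ⟨fun h => hmove ?_, .inr ?_⟩
      · exact (Equiv.Perm.inv_eq_iff_eq.1 h.symm).symm
      · rw [starCycleMap_of_notMem hinv]
        exact Equiv.Perm.eq_inv_iff_eq.1 rfl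

include hWS hφ hσ in
theorem deg_starCycleFactor_of_mem_left {x : V} (hx : x ∈ W) :
    deg (starCycleFactor W φ σ) x = 1 := by
  rw [deg, neighborSet_starCycleFactor_of_mem_left hWS hφ hσ hx, Set.ncard_singleton]

include hWS hσ in
theorem deg_starCycleFactor_of_mem_right {s : V} (hs : s ∈ S) :
    deg (starCycleFactor W φ σ) s = #{i | φ i = s} := by
  rw [deg, neighborSet_starCycleFactor_of_mem_right hWS hσ hs, Set.ncard_coe_finset, card_map]

include hφ hσ in
theorem deg_starCycleFactor_of_notMem {x : V} (hx : x ∉ W ∪ S) :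
    deg (starCycleFactor W φ σ) x = if σ (σ x) = x then 1 else 2 := by
  rw [deg, neighborSet_starCycleFactor_of_notMem hφ hσ hx]
  split_ifs with h
  · rw [Equiv.Perm.inv_eq_iff_eq.2 h.symm, Set.pair_eq_singleton, Set.ncard_singleton]
  · exact Set.ncard_pair fun h' => h (Equiv.Perm.inv_eq_iff_eq.1 h'.symm).symm

include hWS hφ hσ in
theorem isK11Comp_or_isK12Comp_starCycleFactor
    (hfib : ∀ s ∈ S, 1 ≤ #{i | φ i = s} ∧ #{i | φ i = s} ≤ 2) {v : V} (hv : v ∈ W ∪ S) :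
    IsK11Comp (starCycleFactor W φ σ) v ∨ IsK12Comp (starCycleFactor W φ σ) v := by
  set F := starCycleFactor W φ σ
  obtain ⟨s, hs, hvs⟩ : ∃ s ∈ S, v = s ∨ ∃ h : v ∈ W, φ ⟨v, h⟩ = s := by
    rcases mem_union.1 hv with hvW | hvS
    exacts [⟨_, hφ _, .inr ⟨hvW, rfl⟩⟩, ⟨v, hvS, .inl rfl⟩]
  set L := (univ.filter fun i => φ i = s).map (Function.Embedding.subtype _)
  have hNs : F.neighborSet s = ↑L := neighborSet_starCycleFactor_of_mem_right hWS hσ hs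
  have hNleaf : ∀ y ∈ L, F.neighborSet y = {s} := fun y hy => by
    obtain ⟨i, hi, rfl⟩ := mem_map.1 hy
    rw [← (mem_filter.1 hi).2]
    exact neighborSet_starCycleFactor_of_mem_left hWS hφ hσ i.2
  have hdeg_leaf : ∀ y ∈ L, deg F y = 1 := fun y hy => by rw [deg, hNleaf y hy, Set.ncard_singleton]
  have hadj_leaf : ∀ y ∈ L, F.Adj s y := fun y hy => by
    rw [← SimpleGraph.mem_neighborSet, hNs]; exact hy
  have hdeg_s : deg F s = #L := by rw [deg_starCycleFactor_of_mem_right hWS hσ hs, card_map]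
  have hvL : v = s ∨ v ∈ L := hvs.imp_right fun ⟨h, hφv⟩ =>
    mem_map.2 ⟨⟨v, h⟩, mem_filter.2 ⟨mem_univ _, hφv⟩, rfl⟩
  have hL : 1 ≤ #L ∧ #L ≤ 2 := by rw [card_map]; exact hfib s hs
  obtain hL1 | hL2 : #L = 1 ∨ #L = 2 := by omega
  · left
    rcases hvL with rfl | hv
    · refine ⟨hdeg_s.trans hL1, fun w hw => hdeg_leaf w ?_⟩
      rwa [← SimpleGraph.mem_neighborSet, hNs] at hw
    · refine ⟨hdeg_leaf v hv, fun w hw => ?_⟩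
      rw [← SimpleGraph.mem_neighborSet, hNleaf v hv, Set.mem_singleton_iff] at hw
      rw [hw, hdeg_s, hL1]
  · right
    obtain ⟨a, b, hab, hLab⟩ := card_eq_two.1 hL2
    have ha : a ∈ L := hLab ▸ mem_insert_self a {b}
    have hb : b ∈ L := hLab ▸ mem_insert_of_mem (mem_singleton_self b)
    refine ⟨s, a, b, hab, hadj_leaf a ha, hadj_leaf b hb, hdeg_s.trans hL2, hdeg_leaf a ha,
      hdeg_leaf b hb, hvL.imp_right fun hv => ?_⟩
    simpa [hLab] using hv

include hφ hσ in
theorem isK11Comp_or_isCycleComp_starCycleFactor {x : V} (hx : x ∉ W ∪ S) :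
    IsK11Comp (starCycleFactor W φ σ) x ∨ IsCycleComp (starCycleFactor W φ σ) x := by
  set F := starCycleFactor W φ σ
  by_cases h2 : σ (σ x) = x
  · left
    have hinv : σ⁻¹ x = σ x := Equiv.Perm.inv_eq_iff_eq.2 h2.symm
    refine ⟨by rw [deg_starCycleFactor_of_notMem hφ hσ hx, if_pos h2], fun w hw => ?_⟩
    rw [← SimpleGraph.mem_neighborSet, neighborSet_starCycleFactor_of_notMem hφ hσ hx, hinv,
      Set.pair_eq_singleton, Set.mem_singleton_iff] at hw
    rw [hw, deg_starCycleFactor_of_notMem hφ hσ (apply_notMem_of_support_eq_compl hσ hx).1,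
      if_pos (by rw [h2])]
  · right
    have hstep : ∀ y z, F.Adj y z → y ∉ W ∪ S ∧ σ (σ y) ≠ y → z ∉ W ∪ S ∧ σ (σ z) ≠ z := by
      rintro y z hyz ⟨hy, hy2⟩
      rw [← SimpleGraph.mem_neighborSet, neighborSet_starCycleFactor_of_notMem hφ hσ hy] at hyz
      rcases hyz with rfl | rfl
      · exact ⟨(apply_notMem_of_support_eq_compl hσ hy).1, fun h => hy2 (σ.injective h)⟩
      · refine ⟨(apply_notMem_of_support_eq_compl hσ hy).2, fun h => hy2 ?_⟩
        rw [show σ (σ⁻¹ y) = y from Equiv.Perm.eq_inv_iff_eq.1 rfl] at h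
        exact (Equiv.Perm.inv_eq_iff_eq.1 h.symm).symm
    intro w hw
    have hPw : w ∉ W ∪ S ∧ σ (σ w) ≠ w := by
      replace hw := (SimpleGraph.reachable_iff_reflTransGen _ _).1 hw
      induction hw with
      | refl => exact ⟨hx, h2⟩
      | tail _ hadj ih => exact hstep _ _ hadj ih
    rw [deg_starCycleFactor_of_notMem hφ hσ hPw.1, if_neg hPw.2]

include hWS hφ hσ in
theorem countK12_starCycleFactor_le :
    countK12 (starCycleFactor W φ σ) ≤ #{s ∈ S | #{i | φ i = s} = 2} := by
  rw [countK12, ← Set.ncard_coe_finset]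
  refine Set.ncard_le_ncard (fun v ⟨hdeg, hleaf⟩ => ?_) (Finset.finite_toSet _)
  by_cases hvW : v ∈ W
  · rw [deg_starCycleFactor_of_mem_left hWS hφ hσ hvW] at hdeg
    exact absurd hdeg (by decide)
  by_cases hvS : v ∈ S
  · rw [deg_starCycleFactor_of_mem_right hWS hσ hvS] at hdeg
    exact mem_filter.2 ⟨hvS, hdeg⟩
  have hv : v ∉ W ∪ S := by simp [hvW, hvS]
  have hv2 : σ (σ v) ≠ v := fun h => by
    rw [deg_starCycleFactor_of_notMem hφ hσ hv, if_pos h] at hdeg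
    exact absurd hdeg (by decide)
  have hadj : (starCycleFactor W φ σ).Adj v (σ v) := by
    rw [← SimpleGraph.mem_neighborSet, neighborSet_starCycleFactor_of_notMem hφ hσ hv]
    exact .inl rfl
  have := hleaf _ hadj
  rw [deg_starCycleFactor_of_notMem hφ hσ (apply_notMem_of_support_eq_compl hσ hv).1,
    if_neg fun h => hv2 (σ.injective h)] at this
  exact absurd this (by decide)

end Factor

section Surplus

variable [Fintype V] {G : SimpleGraph V} [DecidableRel G.Adj]

variable (G) in
def nbhd (W : Finset V) : Finset V :=
  W.biUnion fun v => G.neighborFinset v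

variable (G) in
def surplus (W : Finset V) : ℤ :=
  #W - #(nbhd G W)

theorem mem_nbhd {W : Finset V} {x : V} : x ∈ nbhd G W ↔ ∃ w ∈ W, G.Adj w x := by
  simp [nbhd]

@[gcongr]
theorem nbhd_mono {A B : Finset V} (h : A ⊆ B) : nbhd G A ⊆ nbhd G B :=
  biUnion_subset_biUnion_of_subset_left _ h

theorem IsIndepSet.disjoint_nbhd {W : Finset V} (hW : IsIndepSet G ↑W) :
    Disjoint W (nbhd G W) :=
  disjoint_left.2 fun _ hx hxN =>
    let ⟨_, hw, hadj⟩ := mem_nbhd.1 hxN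
    hW hw hx hadj

theorem IsIndepSet.card_le_iso_nbhd {B : Finset V} (hB : IsIndepSet G ↑B) :
    #B ≤ iso G ↑(nbhd G B) := by
  rw [iso, ← Set.ncard_coe_finset]
  refine Set.ncard_le_ncard (fun b hb => ⟨fun hbN => ?_, fun w hadj => ?_⟩)
  · obtain ⟨w, hw, hadj⟩ := mem_nbhd.1 hbN
    exact hB hw hb hadj
  · exact mem_nbhd.2 ⟨b, hb, hadj⟩

theorem IsIndepSet.card_le_mul_card_nbhd {c : ℝ} (hiso : ∀ S : Set V, (iso G S : ℝ) ≤ c * S.ncard)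
    {B : Finset V} (hB : IsIndepSet G ↑B) : (#B : ℝ) ≤ c * #(nbhd G B) :=
  calc (#B : ℝ) ≤ iso G ↑(nbhd G B) := by exact_mod_cast hB.card_le_iso_nbhd
    _ ≤ c * #(nbhd G B) := by simpa only [Set.ncard_coe_finset] using hiso ↑(nbhd G B)

/- Hall's condition inside `D` only needs checking on independent sets: the vertices of `A`
with a neighbour in `A` are their own neighbours in `D`, and the rest of `A` is independent. -/
theorem card_le_card_nbhd_inter_of_isIndepSet (D : Finset V)
    (hD : ∀ B ⊆ D, IsIndepSet G ↑B → #B ≤ #(nbhd G B ∩ D)) {A : Finset V} (hA : A ⊆ D) :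
    #A ≤ #(nbhd G A ∩ D) := by
  have hindep : IsIndepSet G ↑(A \ nbhd G A) := fun a ha b hb hadj =>
    (mem_sdiff.1 hb).2 (mem_nbhd.2 ⟨a, (mem_sdiff.1 ha).1, hadj⟩)
  have hdisj : Disjoint (A ∩ nbhd G A) (nbhd G (A \ nbhd G A) ∩ D) := by
    refine disjoint_left.2 fun x hx hx' => ?_
    obtain ⟨a, ha, hadj⟩ := mem_nbhd.1 (mem_inter.1 hx').1
    exact (mem_sdiff.1 ha).2 (mem_nbhd.2 ⟨x, (mem_inter.1 hx).1, hadj.symm⟩)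
  have hsub : A ∩ nbhd G A ∪ nbhd G (A \ nbhd G A) ∩ D ⊆ nbhd G A ∩ D :=
    union_subset (fun x hx => mem_inter.2 ⟨(mem_inter.1 hx).2, hA (mem_inter.1 hx).1⟩)
      (inter_subset_inter_right (nbhd_mono sdiff_subset))
  calc #A = #(A ∩ nbhd G A) + #(A \ nbhd G A) := (card_inter_add_card_sdiff _ _).symm
    _ ≤ #(A ∩ nbhd G A) + #(nbhd G (A \ nbhd G A) ∩ D) :=
      Nat.add_le_add_left (hD _ (sdiff_subset.trans hA) hindep) _
    _ ≤ #(nbhd G A ∩ D) := by rw [← card_union_of_disjoint hdisj]; exact card_le_card hsub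

theorem exists_isIndepSet_forall_surplus_le :
    ∃ W : Finset V, IsIndepSet G ↑W ∧
      ∀ B : Finset V, IsIndepSet G ↑B → surplus G B ≤ surplus G W := by
  classical
  obtain ⟨W, hW, hmax⟩ := exists_max_image {W : Finset V | IsIndepSet G ↑W} (surplus G)
    ⟨∅, by simp [IsIndepSet]⟩
  simp only [mem_filter, mem_univ, true_and] at hW hmax
  exact ⟨W, hW, hmax⟩

section MaxSurplus

variable {W : Finset V} (hW : IsIndepSet G ↑W)
  (hmax : ∀ B : Finset V, IsIndepSet G ↑B → surplus G B ≤ surplus G W)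
include hW hmax

theorem card_le_card_nbhd_inter_compl_of_isIndepSet {B : Finset V}
    (hBD : B ⊆ (W ∪ nbhd G W)ᶜ) (hB : IsIndepSet G ↑B) :
    #B ≤ #(nbhd G B ∩ (W ∪ nbhd G W)ᶜ) := by
  have hBW : ∀ b ∈ B, ∀ w ∈ W, ¬G.Adj w b := fun b hb w hw hadj =>
    (mem_compl.1 (hBD hb)) (mem_union_right _ (mem_nbhd.2 ⟨w, hw, hadj⟩))
  have hindep : IsIndepSet G ↑(W ∪ B) := by
    intro a ha b hb
    rcases mem_union.1 ha with ha | ha <;> rcases mem_union.1 hb with hb | hb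
    exacts [hW ha hb, hBW b hb a ha, fun h => hBW a ha b hb h.symm, hB ha hb]
  have hdisj : Disjoint W B :=
    disjoint_right.2 fun b hb hbW => mem_compl.1 (hBD hb) (mem_union_left _ hbW)
  have hsub : nbhd G (W ∪ B) ⊆ nbhd G W ∪ nbhd G B ∩ (W ∪ nbhd G W)ᶜ := by
    intro x hx
    rw [nbhd, union_biUnion] at hx
    by_cases hxW : x ∈ nbhd G W
    · exact mem_union_left _ hxW
    obtain ⟨b, hb, hadj⟩ := mem_nbhd.1 ((mem_union.1 hx).resolve_left hxW)
    refine mem_union_right _ (mem_inter.2 ⟨mem_nbhd.2 ⟨b, hb, hadj⟩, ?_⟩)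
    simp only [mem_compl, mem_union, not_or]
    exact ⟨fun hxW' => hBW b hb x hxW' hadj.symm, hxW⟩
  have hsurplus := hmax _ hindep
  have hcard := (card_le_card hsub).trans (card_union_le _ _)
  simp only [surplus, card_union_of_disjoint hdisj] at hsurplus
  omega

theorem exists_perm_adj_of_forall_surplus_le :
    ∃ σ : Equiv.Perm V, (∀ a ∉ W ∪ nbhd G W, G.Adj a (σ a)) ∧ ∀ a ∈ W ∪ nbhd G W, σ a = a := by
  obtain ⟨σ, hadj, hfix⟩ := exists_perm_forall_mem_of_hall (W ∪ nbhd G W)ᶜ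
    (fun v => G.neighborFinset v) fun _ hA =>
      card_le_card_nbhd_inter_of_isIndepSet _
        (fun _ hBD hB => card_le_card_nbhd_inter_compl_of_isIndepSet hW hmax hBD hB) hA
  exact ⟨σ, fun a ha => (G.mem_neighborFinset _ _).1 (hadj a (mem_compl.2 ha)),
    fun a ha => hfix a (notMem_compl.2 ha)⟩

theorem exists_adj_one_le_card_fiber_le_two_of_forall_surplus_le
    (hdouble : ∀ B ⊆ W, #B ≤ 2 * #(nbhd G B)) :
    ∃ φ : W → V, (∀ i : W, G.Adj i (φ i)) ∧
      ∀ s ∈ nbhd G W, 1 ≤ #{i : W | φ i = s} ∧ #{i : W | φ i = s} ≤ 2 := by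
  have hsubW : ∀ s : Finset W, s.map (Function.Embedding.subtype _) ⊆ W :=
    fun s _ => property_of_mem_map_subtype s
  have hnbhd : ∀ s : Finset W, s.biUnion (fun i => G.neighborFinset i) =
      nbhd G (s.map (Function.Embedding.subtype _)) := fun s => by
    ext; simp [nbhd]
  obtain ⟨φ, hφ, hfib⟩ := exists_one_le_card_fiber_le_two (fun i : W => G.neighborFinset i)
    (nbhd G W) (fun i _ hx => mem_nbhd.2 ⟨i, i.2, (G.mem_neighborFinset _ _).1 hx⟩)
    (fun s => by
      rw [hnbhd, ← card_map (Function.Embedding.subtype _)]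
      exact hdouble _ (hsubW s))
    (fun s => by
      have := hmax _ fun a ha b hb => hW (hsubW s ha) (hsubW s hb)
      rw [hnbhd, ← card_map (Function.Embedding.subtype _), Fintype.card_coe]
      simp only [surplus] at this
      omega)
  exact ⟨φ, fun i => (G.mem_neighborFinset _ _).1 (hφ i), hfib⟩

end MaxSurplus

theorem exists_isK11K12CycleFactor_countK12_add_card_nbhd_le
    (hdouble : ∀ B : Finset V, IsIndepSet G ↑B → #B ≤ 2 * #(nbhd G B)) :
    ∃ F : SimpleGraph V, ∃ W : Finset V, IsIndepSet G ↑W ∧ IsK11K12CycleFactor G F ∧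
      countK12 F + #(nbhd G W) ≤ #W := by
  obtain ⟨W, hW, hmax⟩ := exists_isIndepSet_forall_surplus_le (G := G)
  obtain ⟨φ, hφG, hfib⟩ := exists_adj_one_le_card_fiber_le_two_of_forall_surplus_le hW hmax
    fun B hB => hdouble B fun _ ha _ hb => hW (hB ha) (hB hb)
  obtain ⟨σ, hσG, hσfix⟩ := exists_perm_adj_of_forall_surplus_le hW hmax
  have hWS := hW.disjoint_nbhd
  have hφ : ∀ i : W, φ i ∈ nbhd G W := fun i => mem_nbhd.2 ⟨i, i.2, hφG i⟩
  have hσ : σ.support = (W ∪ nbhd G W)ᶜ := by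
    ext x
    rw [Equiv.Perm.mem_support, mem_compl]
    exact ⟨fun h hx => h (hσfix x hx), fun hx => (hσG x hx).ne'⟩
  have hle : starCycleFactor W φ σ ≤ G := starCycleFactor_le fun x hx => by
    by_cases hxW : x ∈ W
    · rw [starCycleMap_of_mem hxW]
      exact hφG ⟨x, hxW⟩
    · rw [starCycleMap_of_notMem hxW] at hx ⊢
      exact hσG x fun h => hx (hσfix x h)
  refine ⟨starCycleFactor W φ σ, W, hW, ⟨hle, fun v => ?_⟩, ?_⟩
  · by_cases hv : v ∈ W ∪ nbhd G W
    · exact (isK11Comp_or_isK12Comp_starCycleFactor hWS hφ hσ hfib hv).imp_right .inl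
    · exact (isK11Comp_or_isCycleComp_starCycleFactor hφ hσ hv).imp_right .inr
  · have hcount := countK12_starCycleFactor_le hWS hφ hσ
    have hcard := card_eq_card_add_card_filter_fiber_eq_two φ _ hφ hfib
    rw [Fintype.card_coe] at hcard
    omega

end Surplus

end SCF

/-- if `0 < n ≤ m ≤ 2n` and `iso(G-S) ≤ (m/n)|S|` for all `S`, then `G` has a
`{K_{1,1}, K_{1,2}, C_m : m ≥ 3}`-factor with at most `((m-n)/(m+n))|V(G)|`
components isomorphic to `K_{1,2}`. -/
theorem stmt10 {V : Type*} [Fintype V] (G : SimpleGraph V) (n m : ℕ)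
    (hn : 0 < n) (hnm : n ≤ m) (hm2n : m ≤ 2 * n)
    (h : ∀ S : Set V, (iso G S : ℝ) ≤ ((m : ℝ) / (n : ℝ)) * (S.ncard : ℝ)) :
    ∃ F, IsK11K12CycleFactor G F ∧
      (countK12 F : ℝ) ≤ (((m : ℝ) - (n : ℝ)) / ((m : ℝ) + (n : ℝ))) * (Fintype.card V : ℝ) := by
  classical
  have hn' : (0 : ℝ) < n := by exact_mod_cast hn
  have hdouble : ∀ B : Finset V, IsIndepSet G ↑B → #B ≤ 2 * #(nbhd G B) := fun B hB => by
    have hm2n' : (m : ℝ) / n ≤ 2 := by rw [div_le_iff₀ hn']; exact_mod_cast hm2n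
    exact_mod_cast (hB.card_le_mul_card_nbhd h).trans (by gcongr : _ ≤ (2 : ℝ) * #(nbhd G B))
  obtain ⟨F, W, hW, hF, hcount⟩ := exists_isK11K12CycleFactor_countK12_add_card_nbhd_le hdouble
  refine ⟨F, hF, ?_⟩
  have hcount' : (countK12 F : ℝ) ≤ #W - #(nbhd G W) := by
    rw [le_sub_iff_add_le]; exact_mod_cast hcount
  have hWn : (n : ℝ) * #W ≤ m * #(nbhd G W) := by
    have := mul_le_mul_of_nonneg_left (hW.card_le_mul_card_nbhd h) hn'.le
    rwa [← mul_assoc, mul_div_cancel₀ _ hn'.ne'] at this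
  have hV : (#W : ℝ) + #(nbhd G W) ≤ Fintype.card V := by
    rw [← card_univ]
    exact_mod_cast (card_union_of_disjoint hW.disjoint_nbhd).symm.trans_le (card_le_univ _)
  have hmn : (0 : ℝ) ≤ m - n := sub_nonneg.2 (by exact_mod_cast hnm)
  rw [div_mul_eq_mul_div, le_div_iff₀ (by positivity)]
  calc (countK12 F : ℝ) * (m + n) ≤ (#W - #(nbhd G W)) * (m + n) := by gcongr
    _ = (m - n) * (#W - #(nbhd G W)) + 2 * (n * #W - n * #(nbhd G W)) := by ring
    _ ≤ (m - n) * (#W - #(nbhd G W)) + 2 * ((m - n) * #(nbhd G W)) := by linarith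
    _ = (m - n) * (#W + #(nbhd G W)) := by ring
    _ ≤ (m - n) * Fintype.card V := mul_le_mul_of_nonneg_left hV hmn
end

section
/- Let G be a finite simple graph and let n, m be integers with 0 < n ≤ m ≤ 2n. If iso(G−S) ≤ (m/n)|S| for all subsets S ⊆ V(G), then the independence number of G satisfies α(G) ≤ (m/(m+n))|V(G)|. -/
open Finset

open SCF

namespace SCF

variable {V : Type*} [Fintype V] {G : SimpleGraph V}

theorem IsIndepSet.iso_compl {s : Set V} (hs : IsIndepSet G s) : iso G sᶜ = s.ncard := by
  unfold iso
  congr 1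
  ext v
  simp only [Set.mem_ofPred_eq, Set.mem_compl_iff, not_not]
  exact ⟨And.left, fun hv => ⟨hv, fun w hvw hw => hs hv hw hvw⟩⟩

variable (G) in
theorem exists_isIndepSet_ncard_eq_alpha : ∃ s : Set V, IsIndepSet G s ∧ s.ncard = alpha G := by
  have hempty : IsIndepSet G ∅ := fun _ hu => absurd hu (Set.notMem_empty _)
  refine Nat.sSup_mem (s := {n | ∃ s : Set V, IsIndepSet G s ∧ s.ncard = n})
    ⟨0, ∅, hempty, Set.ncard_empty V⟩ ⟨Fintype.card V, ?_⟩
  rintro _ ⟨s, -, rfl⟩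
  simpa only [Set.ncard_univ, Nat.card_eq_fintype_card] using
    Set.ncard_le_ncard (Set.subset_univ s)

end SCF

theorem stmt11_general {V : Type*} [Fintype V] (G : SimpleGraph V) (n m : ℕ)
    (hn : 0 < n)
    (h : ∀ S : Set V, (iso G S : ℝ) ≤ ((m : ℝ) / (n : ℝ)) * (S.ncard : ℝ)) :
    (alpha G : ℝ) ≤ ((m : ℝ) / ((m : ℝ) + (n : ℝ))) * (Fintype.card V : ℝ) := by
  obtain ⟨s, hs, hcard⟩ := exists_isIndepSet_ncard_eq_alpha G
  have hcompl : (sᶜ.ncard : ℝ) = Fintype.card V - alpha G := by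
    have := congrArg (Nat.cast : ℕ → ℝ) (Set.ncard_add_ncard_compl s)
    push_cast [hcard, Nat.card_eq_fintype_card] at this
    linarith
  have key : (alpha G : ℝ) ≤ m / n * (Fintype.card V - alpha G) := by
    simpa only [hs.iso_compl, hcard, hcompl] using h sᶜ
  have hn' : (0 : ℝ) < n := by exact_mod_cast hn
  rw [div_mul_eq_mul_div, le_div_iff₀ (by positivity)]
  rw [div_mul_eq_mul_div, le_div_iff₀ hn'] at key
  linarith

/-- if `0 < n ≤ m ≤ 2n` and `iso(G-S) ≤ (m/n)|S|` for all `S`, then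
`α(G) ≤ (m/(m+n))|V(G)|`. -/
theorem stmt11 {V : Type*} [Fintype V] (G : SimpleGraph V) (n m : ℕ)
    (hn : 0 < n) (hnm : n ≤ m) (hm2n : m ≤ 2 * n)
    (h : ∀ S : Set V, (iso G S : ℝ) ≤ ((m : ℝ) / (n : ℝ)) * (S.ncard : ℝ)) :
    (alpha G : ℝ) ≤ ((m : ℝ) / ((m : ℝ) + (n : ℝ))) * (Fintype.card V : ℝ) :=
  stmt11_general G n m hn h
end

section
/- Let G be a finite simple graph and e' an edge of G. If there is a maximum fractional matching f of G with f(e') ≠ 0, then there is a maximum fractional matching f' of G with f'(e) ∈ {0, 1/2, 1} for all edges e, f'(e') ≠ 0, and such that every component of the subgraph spanned by the support of f' is a single edge or an odd cycle. -/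
open Finset

open SCF



set_option linter.unusedSectionVars false

namespace SCFAux

variable {V : Type*} [Fintype V] [DecidableEq V]

/-- Spec for "the other neighbor of `w` besides `u`" in a graph where `w` has
exactly two neighbors. -/
def nbhdSpec (K : SimpleGraph V) (w u b : V) : Prop :=
  K.Adj w b ∧ b ≠ u ∧ ∀ c, K.Adj w c → c = u ∨ c = b

lemma exists_nbhdSpec {K : SimpleGraph V} {w u : V}
    (h2 : (K.neighborSet w).ncard = 2) (hu : K.Adj w u) : ∃ b, nbhdSpec K w u b := by
  obtain ⟨a, b, hab, hset⟩ := Set.ncard_eq_two.mp h2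
  have hu' : u ∈ ({a, b} : Set V) := by rw [← hset]; exact hu
  have ha : K.Adj w a := by
    have : a ∈ K.neighborSet w := by rw [hset]; exact Set.mem_insert a {b}
    exact this
  have hb : K.Adj w b := by
    have : b ∈ K.neighborSet w := by rw [hset]; exact Set.mem_insert_iff.mpr (Or.inr rfl)
    exact this
  have hcompl : ∀ c, K.Adj w c → c = a ∨ c = b := by
    intro c hc
    have : c ∈ ({a, b} : Set V) := by rw [← hset]; exact hc
    simpa using this
  rcases hu' with h | h
  · exact ⟨b, hb, by rw [h]; exact hab.symm, by
      intro c hc; rcases hcompl c hc with h1 | h1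
      · exact Or.inl (by rw [h1, h])
      · exact Or.inr h1⟩
  · exact ⟨a, ha, by rw [h]; exact hab, by
      intro c hc; rcases hcompl c hc with h1 | h1
      · exact Or.inr h1
      · exact Or.inl (by rw [h1, h])⟩

lemma nbhdSpec_unique {K : SimpleGraph V} {w u b b' : V}
    (h : nbhdSpec K w u b) (h' : nbhdSpec K w u b') : b = b' := by
  rcases h'.2.2 b h.1 with h1 | h1
  · exact absurd h1 h.2.1
  · exact h1

open Classical in
noncomputable def otherV (K : SimpleGraph V) (w u : V) : V :=
  if h : ∃ b, nbhdSpec K w u b then h.choose else w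

lemma otherV_spec {K : SimpleGraph V} {w u : V}
    (h2 : (K.neighborSet w).ncard = 2) (hu : K.Adj w u) : nbhdSpec K w u (otherV K w u) := by
  have h := exists_nbhdSpec h2 hu
  classical
  rw [otherV]
  rw [dif_pos h]
  exact h.choose_spec

lemma otherV_eq {K : SimpleGraph V} {w u b : V}
    (h2 : (K.neighborSet w).ncard = 2) (hu : K.Adj w u) (hb : nbhdSpec K w u b) :
    otherV K w u = b :=
  nbhdSpec_unique (otherV_spec h2 hu) hb

lemma otherV_adj {K : SimpleGraph V} {w u : V}
    (h2 : (K.neighborSet w).ncard = 2) (hu : K.Adj w u) : K.Adj w (otherV K w u) :=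
  (otherV_spec h2 hu).1

lemma otherV_ne {K : SimpleGraph V} {w u : V}
    (h2 : (K.neighborSet w).ncard = 2) (hu : K.Adj w u) : otherV K w u ≠ u :=
  (otherV_spec h2 hu).2.1

lemma otherV_complete {K : SimpleGraph V} {w u c : V}
    (h2 : (K.neighborSet w).ncard = 2) (hu : K.Adj w u) (hc : K.Adj w c) :
    c = u ∨ c = otherV K w u :=
  (otherV_spec h2 hu).2.2 c hc

lemma otherV_other {K : SimpleGraph V} {w u : V}
    (h2 : (K.neighborSet w).ncard = 2) (hu : K.Adj w u) :
    otherV K w (otherV K w u) = u := by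
  have hs := otherV_spec h2 hu
  refine otherV_eq h2 hs.1 ⟨hu, Ne.symm hs.2.1, ?_⟩
  intro c hc
  exact (hs.2.2 c hc).symm

end SCFAux

namespace SCFAux

variable {V : Type*} [Fintype V] [DecidableEq V]

lemma traversal (K : SimpleGraph V) (v₀ : V)
    (hdeg : ∀ w, K.Reachable v₀ w → (K.neighborSet w).ncard = 2) :
    Odd {w | K.Reachable v₀ w}.ncard ∨
      ∃ z : Sym2 V → ℝ, z ≠ 0 ∧
        (∀ e, z e ≠ 0 → e ∈ K.edgeSet ∧ ∀ a ∈ e, K.Reachable v₀ a) ∧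
        ∀ v : V, ∑ e : Sym2 V, (if v ∈ e then z e else 0) = 0 := by
  classical
  -- pick a starting neighbor
  obtain ⟨a0, b0', hab0, hset0⟩ := Set.ncard_eq_two.mp (hdeg v₀ (SimpleGraph.Reachable.refl v₀))
  have hb₀ : K.Adj v₀ a0 := by
    have : a0 ∈ K.neighborSet v₀ := by rw [hset0]; exact Set.mem_insert a0 {b0'}
    exact this
  set b₀ := a0 with hb₀def
  clear hab0 hset0 hb₀def b0'
  -- the traversal
  set σ : V × V → V × V := fun q => (q.2, otherV K q.2 q.1) with hσ
  set x : ℕ → V × V := fun n => σ^[n] (v₀, b₀) with hx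
  have hx0 : x 0 = (v₀, b₀) := rfl
  have hxs : ∀ n, x (n + 1) = σ (x n) := by
    intro n; simp only [hx, Function.iterate_succ_apply']
  have inv : ∀ n, K.Reachable v₀ (x n).1 ∧ K.Reachable v₀ (x n).2 ∧ K.Adj (x n).1 (x n).2 := by
    intro n; induction n with
    | zero => exact ⟨SimpleGraph.Reachable.refl v₀, hb₀.reachable, hb₀⟩
    | succ n ih =>
      rw [hxs n, hσ]
      refine ⟨ih.2.1, ?_, ?_⟩
      · exact ih.2.1.trans (otherV_adj (hdeg _ ih.2.1) ih.2.2.symm).reachable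
      · exact otherV_adj (hdeg _ ih.2.1) ih.2.2.symm
  have xsucc1 : ∀ n, (x (n + 1)).1 = (x n).2 := by intro n; rw [hxs n]
  have xsucc2 : ∀ n, (x (n + 1)).2 = otherV K (x n).2 (x n).1 := by intro n; rw [hxs n]
  have backstep : ∀ n, (otherV K (x (n + 1)).1 (x (n + 1)).2, (x (n + 1)).1) = x n := by
    intro n
    rw [xsucc1, xsucc2]
    have h1 : otherV K (x n).2 (otherV K (x n).2 (x n).1) = (x n).1 :=
      otherV_other (hdeg _ (inv n).2.1) (inv n).2.2.symm
    rw [h1]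
  have cancel : ∀ d k, x d = x (d + k) → x 0 = x k := by
    intro d
    induction d with
    | zero => intro k h; simpa using h
    | succ d ih =>
      intro k h
      apply ih
      have h2 := congrArg (fun q : V × V => (otherV K q.1 q.2, q.1)) h
      rw [backstep d] at h2
      rw [show d + 1 + k = (d + k) + 1 by omega] at h2
      rw [backstep (d + k)] at h2
      exact h2
  -- periodicity
  obtain ⟨i0, j0, hne0, heq0⟩ : ∃ a b, a ≠ b ∧ x a = x b := by
    have := Finite.exists_ne_map_eq_of_infinite x
    tauto
  have hper0 : ∃ m, 0 < m ∧ x 0 = x m := by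
    rcases Nat.lt_or_ge i0 j0 with h | h
    · exact ⟨j0 - i0, by omega, cancel i0 _ (by rw [show i0 + (j0 - i0) = j0 by omega]; exact heq0)⟩
    · have h' : j0 < i0 := by omega
      exact ⟨i0 - j0, by omega, cancel j0 _ (by rw [show j0 + (i0 - j0) = i0 by omega]; exact heq0.symm)⟩
  obtain ⟨m, hm_pos, hm⟩ := hper0
  have hperpt : Function.IsPeriodicPt σ m (v₀, b₀) := by
    show σ^[m] (v₀, b₀) = (v₀, b₀)
    exact hm.symm
  set p := Function.minimalPeriod σ (v₀, b₀) with hpdef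
  have hp_pos : 0 < p := hperpt.minimalPeriod_pos hm_pos
  have hxp : x p = x 0 := by
    show σ^[p] (v₀, b₀) = x 0
    rw [hpdef]
    exact Function.iterate_minimalPeriod
  have hx1ne : x 1 ≠ x 0 := by
    intro h
    have : (x 1).1 = (x 0).1 := by rw [h]
    rw [xsucc1 0, hx0] at this
    exact hb₀.symm.ne this
  have hx2ne : x 2 ≠ x 0 := by
    intro h
    have h1 : (x 2).1 = (x 0).1 := by rw [h]
    rw [xsucc1 1, xsucc2 0, hx0] at h1
    exact otherV_ne (hdeg _ (inv 0).2.1) (inv 0).2.2.symm (by rw [hx0]; simpa using h1)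
  have hp3 : 3 ≤ p := by
    rcases Nat.lt_or_ge p 3 with h | h
    · interval_cases p
      · exact absurd hxp hx1ne
      · exact absurd hxp hx2ne
    · exact h
  haveI : NeZero p := ⟨by omega⟩
  have xmod : ∀ n, x (n % p) = x n := by
    intro n
    show σ^[n % p] (v₀, b₀) = σ^[n] (v₀, b₀)
    rw [hpdef]
    exact Function.iterate_mod_minimalPeriod_eq
  have xinj : ∀ i j, i < p → j < p → x i = x j → i = j := by
    have key : ∀ i j, i ≤ j → j < p → x i = x j → i = j := by
      intro i j hij hj h
      have h0 : x 0 = x (j - i) := cancel i _ (by rw [show i + (j - i) = j by omega]; exact h)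
      by_contra hne
      have hpos : 0 < j - i := by omega
      have : p ≤ j - i := by
        have hpt : Function.IsPeriodicPt σ (j - i) (v₀, b₀) := by
          show σ^[j - i] (v₀, b₀) = (v₀, b₀)
          exact h0.symm
        exact hpt.minimalPeriod_le hpos
      omega
    intro i j hi hj h
    rcases Nat.le_total i j with hij | hij
    · exact key i j hij hj h
    · exact (key j i hij hi h.symm).symm
  -- index by ZMod p
  set Y : ZMod p → V := fun k => (x k.val).1 with hY
  have kval : ∀ k : ZMod p, ((k.val : ℕ) : ZMod p) = k := fun k => ZMod.natCast_rightInverse k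
  have Ycast : ∀ n : ℕ, Y (n : ZMod p) = (x n).1 := by
    intro n
    show (x ((n : ZMod p)).val).1 = (x n).1
    rw [ZMod.val_natCast, xmod]
  have Yadd : ∀ (k : ZMod p) (m : ℕ), Y (k + m) = (x (k.val + m)).1 := by
    intro k m
    have : k + (m : ZMod p) = ((k.val + m : ℕ) : ZMod p) := by push_cast [kval]; ring
    rw [this, Ycast]
  have Ysucc : ∀ k : ZMod p, Y (k + 1) = (x (k.val + 1)).1 := by
    intro k
    have := Yadd k 1
    simpa using this
  have Y2 : ∀ k : ZMod p, Y (k + 2) = (x (k.val + 2)).1 := by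
    intro k
    have := Yadd k 2
    simpa using this
  have Yzero : Y 0 = v₀ := by
    show (x ((0 : ZMod p)).val).1 = v₀
    rw [ZMod.val_zero, hx0]
  have YmemR : ∀ k, K.Reachable v₀ (Y k) := fun k => (inv k.val).1
  have YadjY : ∀ k, K.Adj (Y k) (Y (k + 1)) := by
    intro k
    rw [Ysucc, xsucc1]
    exact (inv k.val).2.2
  have Yrec : ∀ k, Y (k + 2) = otherV K (Y (k + 1)) (Y k) := by
    intro k
    rw [Y2, Ysucc]
    show (x (k.val + 1 + 1)).1 = otherV K ((x (k.val + 1)).1) (Y k)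
    rw [xsucc1 (k.val + 1), xsucc2 k.val, xsucc1 k.val]
  have Yback : ∀ k, otherV K (Y (k + 1)) (Y (k + 2)) = Y k := by
    intro k
    rw [Yrec k]
    exact otherV_other (hdeg _ (YmemR (k + 1))) (YadjY k).symm
  have Ynbt : ∀ k, Y (k + 2) ≠ Y k := by
    intro k
    rw [Yrec k]
    exact otherV_ne (hdeg _ (YmemR (k + 1))) (YadjY k).symm
  have Yspec : ∀ k, nbhdSpec K (Y k) (Y (k + 1)) (Y (k - 1)) := by
    intro k
    have h1 := otherV_spec (hdeg _ (YmemR k)) (YadjY k)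
    have h2 : otherV K (Y k) (Y (k + 1)) = Y (k - 1) := by
      have := Yback (k - 1)
      rw [show k - 1 + 1 = k by ring, show k - 1 + 2 = k + 1 by ring] at this
      exact this
    rwa [h2] at h1
  have Ypairinj : ∀ k j : ZMod p, Y k = Y j → Y (k + 1) = Y (j + 1) → k = j := by
    intro k j h1 h2
    rw [Ysucc, Ysucc, xsucc1, xsucc1] at h2
    have hx' : x k.val = x j.val := by
      apply Prod.ext
      · exact h1
      · exact h2
    have := xinj k.val j.val (ZMod.val_lt k) (ZMod.val_lt j) hx'
    rw [← kval k, ← kval j, this]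
  have Yinj : Function.Injective Y := by
    intro i j hYij
    by_contra hne
    have hadj : K.Adj (Y j) (Y (i + 1)) := by rw [← hYij]; exact YadjY i
    rcases (Yspec j).2.2 _ hadj with hcase | hcase
    · exact hne (Ypairinj i j hYij hcase)
    · -- hcase : Y (i+1) = Y (j-1); build reflection
      have hrefl : ∀ t : ℕ, Y (i + t) = Y (j - t) ∧ Y (i + t + 1) = Y (j - t - 1) := by
        intro t
        induction t with
        | zero =>
          constructor
          · simpa using hYij
          · simpa using hcase
        | succ t ih =>
          constructor
          · have := ih.2
            rw [show i + (t + 1 : ℕ) = i + t + 1 by push_cast; ring,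
                show j - (t + 1 : ℕ) = j - t - 1 by push_cast; ring]
            exact this
          · have h1 : Y (i + t + 2) = otherV K (Y (i + t + 1)) (Y (i + t)) := Yrec (i + t)
            rw [ih.1, ih.2] at h1
            have h2 := Yback (j - t - 2)
            have e1 : j - (t : ZMod p) - 2 + 1 = j - t - 1 := by ring
            have e2 : j - (t : ZMod p) - 2 + 2 = j - t := by ring
            rw [e1, e2] at h2
            have e3 : i + ((t + 1 : ℕ) : ZMod p) + 1 = i + t + 2 := by push_cast; ring
            have e4 : j - ((t + 1 : ℕ) : ZMod p) - 1 = j - t - 2 := by push_cast; ring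
            rw [e3, e4, h1]
            exact h2
      have hdval : (((((j - i : ZMod p) - 1).val : ℕ)) : ZMod p) = (j - i) - 1 := kval _
      rcases Nat.even_or_odd ((j - i : ZMod p) - 1).val with hN | hN
      · obtain ⟨t, ht⟩ := hN
        have hcast : (t : ZMod p) + t = (j - i) - 1 := by
          rw [← hdval, ht]; push_cast; ring
        have h3 : Y (i + t) = Y (i + t + 1) := by
          have h4 := (hrefl t).1
          rw [show j - (t : ZMod p) = i + t + 1 by linear_combination -hcast] at h4
          exact h4
        exact K.irrefl (h3 ▸ YadjY (i + (t : ZMod p)))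
      · obtain ⟨t, ht⟩ := hN
        have hcast : (t : ZMod p) + t = (j - i) - 2 := by
          have : ((j - i : ZMod p)) - 2 = ((j - i) - 1) - 1 := by ring
          rw [this, ← hdval, ht]; push_cast; ring
        have h3 : Y (i + t) = Y (i + t + 2) := by
          have h4 := (hrefl t).1
          rw [show j - (t : ZMod p) = i + t + 2 by linear_combination -hcast] at h4
          exact h4
        exact Ynbt (i + (t : ZMod p)) h3.symm
  have rangeY : Set.range Y = {w | K.Reachable v₀ w} := by
    apply Set.eq_of_subset_of_subset
    · rintro w ⟨k, rfl⟩
      exact YmemR k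
    · intro w hw
      have aux : ∀ (a c : V) (_ : K.Walk a c), a ∈ Set.range Y → c ∈ Set.range Y := by
        intro a c W
        induction W with
        | nil => exact id
        | @cons u v' c' h W ih =>
          rintro ⟨k, hk⟩
          apply ih
          rw [← hk] at h
          rcases (Yspec k).2.2 _ h with h1 | h1
          · exact ⟨k + 1, h1.symm⟩
          · exact ⟨k - 1, h1.symm⟩
      obtain ⟨W⟩ := hw
      exact aux v₀ w W ⟨0, Yzero⟩
  have hcardR : {w | K.Reachable v₀ w}.ncard = p := by
    rw [← rangeY]
    have h1 : (Set.range Y).ncard = Nat.card (Set.range Y) := rfl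
    rw [h1, Nat.card_congr (Equiv.ofInjective Y Yinj).symm, Nat.card_zmod]
  rcases Nat.even_or_odd p with hpe | hpo
  swap
  · left
    rw [hcardR]
    exact hpo
  · right
    haveI : Fact (1 < p) := ⟨by omega⟩
    set sgn : ZMod p → ℝ := fun k => (-1 : ℝ) ^ (k.val) with hsgn
    have sgnflip : ∀ k : ZMod p, sgn (k + 1) = - sgn k := by
      intro k
      show (-1 : ℝ) ^ ((k + 1 : ZMod p).val) = -(-1 : ℝ) ^ (k.val)
      have hv : (k + 1 : ZMod p).val = (k.val + 1) % p := by
        rw [ZMod.val_add, ZMod.val_one]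
      rw [hv, neg_one_pow_eq_pow_mod_two]
      have hmod : ((k.val + 1) % p) % 2 = (k.val + 1) % 2 := (Nat.mod_modEq _ p).of_dvd hpe.two_dvd
      rw [hmod, ← neg_one_pow_eq_pow_mod_two, pow_succ]
      ring
    set ed : ZMod p → Sym2 V := fun k => s(Y k, Y (k + 1)) with hed
    set z : Sym2 V → ℝ := fun e => ∑ k : ZMod p, if e = ed k then sgn k else 0 with hz
    have h2ne0 : ((2 : ℕ) : ZMod p) ≠ 0 := by
      intro h
      have := (ZMod.natCast_eq_zero_iff 2 p).mp h
      have := Nat.le_of_dvd (by norm_num) this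
      omega
    refine ⟨z, ?_, ?_, ?_⟩
    · -- z ≠ 0
      intro hz0
      have h1 : z (ed 0) = sgn 0 := by
        have h2 : (∑ k : ZMod p, if ed 0 = ed k then sgn k else 0) =
            (if ed 0 = ed 0 then sgn 0 else 0) := by
          apply Finset.sum_eq_single_of_mem (0 : ZMod p) (Finset.mem_univ _)
          intro k _ hk
          rw [if_neg]
          intro heq
          rw [hed] at heq
          simp only at heq
          rcases Sym2.eq_iff.mp heq with ⟨h1, _⟩ | ⟨h1, h2⟩
          · exact hk (Yinj h1).symm
          · have hk1 : (0 : ZMod p) + 1 = k := Yinj h2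
            have hk2 : (0 : ZMod p) = k + 1 := Yinj h1
            apply h2ne0
            push_cast
            linear_combination hk1 - hk2
        show (∑ k : ZMod p, if ed 0 = ed k then sgn k else 0) = sgn 0
        rw [h2, if_pos rfl]
      rw [hz0] at h1
      simp only [Pi.zero_apply] at h1
      have : sgn 0 = 1 := by
        show (-1 : ℝ) ^ ((0 : ZMod p).val) = 1
        rw [ZMod.val_zero, pow_zero]
      rw [this] at h1
      norm_num at h1
    · -- support
      intro e hne
      have : ∃ k : ZMod p, e = ed k := by
        by_contra hcon
        push_neg at hcon
        apply hne
        show (∑ k : ZMod p, if e = ed k then sgn k else 0) = 0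
        apply Finset.sum_eq_zero
        intro k _
        rw [if_neg (hcon k)]
      obtain ⟨k, rfl⟩ := this
      constructor
      · exact YadjY k
      · intro a ha
        rw [hed] at ha
        simp only [Sym2.mem_iff] at ha
        rcases ha with h | h
        · rw [h]; exact YmemR k
        · rw [h]; exact YmemR (k + 1)
    · -- vertex sums
      intro v
      have step1 : ∀ e : Sym2 V, (if v ∈ e then z e else 0) =
          ∑ k : ZMod p, (if e = ed k ∧ v ∈ e then sgn k else 0) := by
        intro e
        by_cases hv : v ∈ e
        · rw [if_pos hv]
          show (∑ k : ZMod p, if e = ed k then sgn k else 0) = _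
          apply Finset.sum_congr rfl
          intro k _
          by_cases h : e = ed k
          · rw [if_pos h, if_pos ⟨h, hv⟩]
          · rw [if_neg h, if_neg (by tauto)]
        · rw [if_neg hv]
          symm
          apply Finset.sum_eq_zero
          intro k _
          rw [if_neg (by tauto)]
      rw [Finset.sum_congr rfl (fun e _ => step1 e), Finset.sum_comm]
      have step2 : ∀ k : ZMod p, (∑ e : Sym2 V, if e = ed k ∧ v ∈ e then sgn k else 0) =
          (if v = Y k then sgn k else 0) + (if v = Y (k + 1) then sgn k else 0) := by
        intro k
        have h1 : (∑ e : Sym2 V, if e = ed k ∧ v ∈ e then sgn k else 0) =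
            (if v ∈ ed k then sgn k else 0) := by
          rw [Finset.sum_eq_single_of_mem (ed k) (Finset.mem_univ _)]
          · by_cases h : v ∈ ed k
            · rw [if_pos ⟨rfl, h⟩, if_pos h]
            · rw [if_neg (by tauto), if_neg h]
          · intro e _ he
            rw [if_neg (by tauto)]
        rw [h1]
        have hmem : v ∈ ed k ↔ v = Y k ∨ v = Y (k + 1) := by
          rw [hed]; exact Sym2.mem_iff
        have hneq : Y k ≠ Y (k + 1) := (YadjY k).ne
        by_cases h2 : v = Y k
        · rw [if_pos (hmem.mpr (Or.inl h2)), if_pos h2, if_neg (by rw [h2]; exact hneq)]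
          ring
        · by_cases h3 : v = Y (k + 1)
          · rw [if_pos (hmem.mpr (Or.inr h3)), if_neg h2, if_pos h3]
            ring
          · rw [if_neg (by rw [hmem]; tauto), if_neg h2, if_neg h3]
            ring
      rw [Finset.sum_congr rfl (fun k _ => step2 k), Finset.sum_add_distrib]
      have step3 : (∑ k : ZMod p, if v = Y (k + 1) then sgn k else 0) =
          ∑ k : ZMod p, (if v = Y k then sgn (k - 1) else 0) := by
        apply Fintype.sum_equiv (Equiv.addRight (1 : ZMod p))
        intro k
        simp only [Equiv.coe_addRight]
        congr 1
        rw [add_sub_cancel_right]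
      rw [step3, ← Finset.sum_add_distrib]
      apply Finset.sum_eq_zero
      intro k _
      by_cases h : v = Y k
      · rw [if_pos h, if_pos h]
        have := sgnflip (k - 1)
        rw [sub_add_cancel] at this
        rw [this]
        ring
      · rw [if_neg h, if_neg h]
        ring

end SCFAux


-- MORE

namespace SCFAux

variable {V : Type*} [Fintype V] [DecidableEq V]

lemma isFracMatching_zero (G : SimpleGraph V) [DecidableRel G.Adj] :
    IsFracMatching G (0 : Sym2 V → ℝ) := by
  refine ⟨fun e => ⟨le_refl 0, zero_le_one⟩, fun e _ => rfl, fun v => ?_⟩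
  simp

lemma isClosed_fracMatching (G : SimpleGraph V) [DecidableRel G.Adj] :
    IsClosed {f : Sym2 V → ℝ | IsFracMatching G f} := by
  have hrw : {f : Sym2 V → ℝ | IsFracMatching G f} =
      (⋂ e : Sym2 V, {f : Sym2 V → ℝ | 0 ≤ f e}) ∩
      (⋂ e : Sym2 V, {f : Sym2 V → ℝ | f e ≤ 1}) ∩
      (⋂ e ∈ {e : Sym2 V | e ∉ G.edgeSet}, {f : Sym2 V → ℝ | f e = 0}) ∩
      (⋂ v : V, {f : Sym2 V → ℝ | ∑ e ∈ G.edgeFinset, (if v ∈ e then f e else 0) ≤ 1}) := by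
    ext f
    simp only [IsFracMatching, Set.mem_setOf_eq, Set.mem_inter_iff, Set.mem_iInter]
    constructor
    · intro hf
      exact ⟨⟨⟨fun e => (hf.1 e).1, fun e => (hf.1 e).2⟩, fun e he => hf.2.1 e he⟩,
        fun v => hf.2.2 v⟩
    · intro hf
      exact ⟨fun e => ⟨hf.1.1.1 e, hf.1.1.2 e⟩, fun e he => hf.1.2 e he, hf.2⟩
  rw [hrw]
  have hsum : ∀ v : V, Continuous fun f : Sym2 V → ℝ =>
      ∑ e ∈ G.edgeFinset, (if v ∈ e then f e else 0) := by
    intro v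
    apply continuous_finset_sum
    intro e _
    by_cases h : v ∈ e
    · simpa [h] using continuous_apply e
    · simpa [h] using continuous_const
  refine IsClosed.inter (IsClosed.inter (IsClosed.inter ?_ ?_) ?_) ?_
  · exact isClosed_iInter fun e => isClosed_le continuous_const (continuous_apply e)
  · exact isClosed_iInter fun e => isClosed_le (continuous_apply e) continuous_const
  · exact isClosed_iInter fun e => isClosed_iInter fun _ =>
      isClosed_eq (continuous_apply e) continuous_const
  · exact isClosed_iInter fun v => isClosed_le (hsum v) continuous_const

lemma isCompact_fracMatching (G : SimpleGraph V) [DecidableRel G.Adj] :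
    IsCompact {f : Sym2 V → ℝ | IsFracMatching G f} := by
  apply IsCompact.of_isClosed_subset (isCompact_Icc (a := (0 : Sym2 V → ℝ)) (b := 1))
    (isClosed_fracMatching G)
  intro f hf
  constructor
  · intro e; exact (hf.1 e).1
  · intro e; exact (hf.1 e).2

lemma continuous_weight (G : SimpleGraph V) [DecidableRel G.Adj] :
    Continuous (weight G) := by
  apply continuous_finset_sum
  intro e _
  exact continuous_apply e

/-- Existence of a lexicographic optimum. -/
lemma exists_opt (G : SimpleGraph V) [DecidableRel G.Adj] (e' : Sym2 V)
    (h : ∃ f : Sym2 V → ℝ, IsMaxFracMatching G f ∧ f e' ≠ 0) :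
    ∃ g : Sym2 V → ℝ, IsMaxFracMatching G g ∧ 0 < g e' ∧
      (∀ f, IsMaxFracMatching G f → f e' ≤ g e') ∧
      (∀ f, IsMaxFracMatching G f → f e' = g e' →
        (∑ e : Sym2 V, (f e) ^ 2) ≤ ∑ e : Sym2 V, (g e) ^ 2) := by
  classical
  obtain ⟨f₀, hf₀, hf₀e⟩ := h
  have hf₀pos : 0 < f₀ e' := lt_of_le_of_ne (hf₀.1.1 e').1 (Ne.symm hf₀e)
  set B : Set (Sym2 V → ℝ) := {f | IsMaxFracMatching G f} with hB
  have hBeq : B = {f | IsFracMatching G f} ∩ {f | weight G f = nuF G} := by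
    ext f; simp [hB, IsMaxFracMatching, Set.mem_setOf_eq]
  have hB_cpt : IsCompact B := by
    rw [hBeq]
    exact (isCompact_fracMatching G).inter_right
      (isClosed_eq (continuous_weight G) continuous_const)
  have hB_ne : B.Nonempty := ⟨f₀, hf₀⟩
  obtain ⟨f₁, hf₁B, hf₁max⟩ := hB_cpt.exists_isMaxOn hB_ne (continuous_apply e').continuousOn
  set C : Set (Sym2 V → ℝ) := B ∩ {f | f e' = f₁ e'} with hC
  have hC_cpt : IsCompact C := by
    rw [hC, hBeq]
    exact ((isCompact_fracMatching G).inter_right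
      (isClosed_eq (continuous_weight G) continuous_const)).inter_right
      (isClosed_eq (continuous_apply e') continuous_const)
  have hC_ne : C.Nonempty := ⟨f₁, hf₁B, rfl⟩
  have hφ : Continuous fun f : Sym2 V → ℝ => ∑ e : Sym2 V, (f e) ^ 2 := by
    apply continuous_finset_sum
    intro e _
    exact (continuous_apply e).pow 2
  obtain ⟨g, hgC, hgmax⟩ := hC_cpt.exists_isMaxOn hC_ne hφ.continuousOn
  refine ⟨g, hgC.1, ?_, ?_, ?_⟩
  · have h1 : f₀ e' ≤ f₁ e' := hf₁max (by exact hf₀)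
    have h2 : g e' = f₁ e' := hgC.2
    rw [h2]; exact lt_of_lt_of_le hf₀pos h1
  · intro f hf
    have h3 : f e' ≤ f₁ e' := hf₁max (by exact hf)
    have h2 : g e' = f₁ e' := hgC.2
    rw [h2]; exact h3
  · intro f hf hfe
    have hfC : f ∈ C := ⟨hf, by show f e' = f₁ e'; rw [hfe]; exact hgC.2⟩
    exact hgmax hfC

end SCFAux

namespace SCFAux

variable {V : Type*} [Fintype V] [DecidableEq V]

lemma weight_le_nuF (G : SimpleGraph V) [DecidableRel G.Adj] (f : Sym2 V → ℝ)
    (hf : IsFracMatching G f) : weight G f ≤ nuF G := by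
  apply le_csSup
  · refine ⟨(G.edgeFinset.card : ℝ), ?_⟩
    rintro y ⟨f', hf', rfl⟩
    calc weight G f' ≤ ∑ _e ∈ G.edgeFinset, (1 : ℝ) :=
          Finset.sum_le_sum fun e _ => (hf'.1 e).2
      _ = (G.edgeFinset.card : ℝ) := by simp
  · exact Set.mem_image_of_mem _ hf

lemma kernel_eq_zero (G : SimpleGraph V) [DecidableRel G.Adj] (e' : Sym2 V)
    (g z : Sym2 V → ℝ)
    (hg : IsMaxFracMatching G g)
    (hmax2 : ∀ f, IsMaxFracMatching G f → f e' ≤ g e')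
    (hmax3 : ∀ f, IsMaxFracMatching G f → f e' = g e' →
      (∑ e : Sym2 V, (f e) ^ 2) ≤ ∑ e : Sym2 V, (g e) ^ 2)
    (hz0 : ∀ e, ¬(g e ≠ 0 ∧ g e ≠ 1 ∧ e ∈ G.edgeSet) → z e = 0)
    (hzsat : ∀ v, (∑ e ∈ G.edgeFinset, (if v ∈ e then g e else 0)) = 1 →
      (∑ e ∈ G.edgeFinset, (if v ∈ e then z e else 0)) = 0) :
    z = 0 := by
  classical
  by_cases hV : Nonempty V
  swap
  · funext e
    exact absurd ⟨(Quot.out e).1⟩ hV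
  have hSym : Nonempty (Sym2 V) := ⟨s(Classical.arbitrary V, Classical.arbitrary V)⟩
  -- bound on z
  set M : ℝ := 1 + ∑ e : Sym2 V, |z e| with hM
  have hMpos : 0 < M := by
    have : (0 : ℝ) ≤ ∑ e : Sym2 V, |z e| := Finset.sum_nonneg fun e _ => abs_nonneg _
    rw [hM]; linarith
  have hzbd : ∀ e, |z e| ≤ M - 1 := by
    intro e
    have := Finset.single_le_sum (f := fun e => |z e|) (fun e _ => abs_nonneg _)
      (Finset.mem_univ e)
    rw [hM]; linarith
  have hsbd : ∀ v, |∑ e ∈ G.edgeFinset, (if v ∈ e then z e else 0)| ≤ M - 1 := by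
    intro v
    calc |∑ e ∈ G.edgeFinset, (if v ∈ e then z e else 0)|
        ≤ ∑ e ∈ G.edgeFinset, |if v ∈ e then z e else 0| := Finset.abs_sum_le_sum_abs _ _
      _ ≤ ∑ e ∈ G.edgeFinset, |z e| := by
          apply Finset.sum_le_sum
          intro e _
          by_cases h : v ∈ e
          · rw [if_pos h]
          · rw [if_neg h, abs_zero]; exact abs_nonneg _
      _ ≤ ∑ e : Sym2 V, |z e| :=
          Finset.sum_le_sum_of_subset_of_nonneg (Finset.subset_univ _)
            (fun e _ _ => abs_nonneg _)
      _ = M - 1 := by rw [hM]; ring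
  -- the step sizes
  set δ : Sym2 V → ℝ := fun e =>
    if (g e ≠ 0 ∧ g e ≠ 1 ∧ e ∈ G.edgeSet) then min (g e) (1 - g e) else 1 with hδ
  set sδ : V → ℝ := fun v =>
    if (∑ e ∈ G.edgeFinset, (if v ∈ e then g e else 0)) = 1 then 1
    else 1 - ∑ e ∈ G.edgeFinset, (if v ∈ e then g e else 0) with hsδ
  have hδpos : ∀ e, 0 < δ e := by
    intro e
    by_cases h : (g e ≠ 0 ∧ g e ≠ 1 ∧ e ∈ G.edgeSet)
    · simp only [hδ]
      rw [if_pos h]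
      have h1 : 0 < g e := lt_of_le_of_ne (hg.1.1 e).1 (Ne.symm h.1)
      have h2 : g e < 1 := lt_of_le_of_ne (hg.1.1 e).2 h.2.1
      exact lt_min h1 (by linarith)
    · simp only [hδ]
      rw [if_neg h]; norm_num
  have hsδpos : ∀ v, 0 < sδ v := by
    intro v
    by_cases h : (∑ e ∈ G.edgeFinset, (if v ∈ e then g e else 0)) = 1
    · simp only [hsδ]
      rw [if_pos h]; norm_num
    · simp only [hsδ]
      rw [if_neg h]
      have := hg.1.2.2 v
      have hlt : (∑ e ∈ G.edgeFinset, (if v ∈ e then g e else 0)) < 1 := lt_of_le_of_ne this h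
      linarith
  set ε₀ : ℝ := min (Finset.univ.inf' Finset.univ_nonempty δ)
      (Finset.univ.inf' Finset.univ_nonempty sδ) with hε₀
  have hε₀pos : 0 < ε₀ := by
    apply lt_min
    · exact (Finset.lt_inf'_iff _).mpr fun e _ => hδpos e
    · exact (Finset.lt_inf'_iff _).mpr fun v _ => hsδpos v
  have hε₀δ : ∀ e, ε₀ ≤ δ e := fun e =>
    le_trans (min_le_left _ _) (Finset.inf'_le _ (Finset.mem_univ e))
  have hε₀sδ : ∀ v, ε₀ ≤ sδ v := fun v =>
    le_trans (min_le_right _ _) (Finset.inf'_le _ (Finset.mem_univ v))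
  set ε : ℝ := ε₀ / M with hε
  have hεpos : 0 < ε := div_pos hε₀pos hMpos
  have hεM : ε * M = ε₀ := div_mul_cancel₀ ε₀ (ne_of_gt hMpos)
  -- perturbation feasibility
  have hpert : ∀ s : ℝ, |s| ≤ ε → IsFracMatching G (fun e => g e + s * z e) := by
    intro s hs
    have hsz : ∀ e, |s * z e| ≤ ε₀ := by
      intro e
      rw [abs_mul]
      calc |s| * |z e| ≤ ε * M := by
            apply mul_le_mul hs (le_trans (hzbd e) (by linarith)) (abs_nonneg _)
              (le_of_lt hεpos)
        _ = ε₀ := hεM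
    refine ⟨?_, ?_, ?_⟩
    · intro e
      show 0 ≤ g e + s * z e ∧ g e + s * z e ≤ 1
      by_cases h : (g e ≠ 0 ∧ g e ≠ 1 ∧ e ∈ G.edgeSet)
      · have hδe : δ e = min (g e) (1 - g e) := by simp only [hδ]; rw [if_pos h]
        have h1 : |s * z e| ≤ min (g e) (1 - g e) := le_trans (hsz e) (hδe ▸ hε₀δ e)
        have h2 := abs_le.mp h1
        constructor
        · have := min_le_left (g e) (1 - g e); linarith [h2.1]
        · have := min_le_right (g e) (1 - g e); linarith [h2.2]
      · rw [hz0 e h, mul_zero, add_zero]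
        exact hg.1.1 e
    · intro e he
      show g e + s * z e = 0
      have h1 : g e = 0 := hg.1.2.1 e he
      have h2 : z e = 0 := hz0 e (by tauto)
      rw [h1, h2, mul_zero, add_zero]
    · intro v
      show (∑ e ∈ G.edgeFinset, (if v ∈ e then g e + s * z e else 0)) ≤ 1
      have hsplit : (∑ e ∈ G.edgeFinset, (if v ∈ e then g e + s * z e else 0)) =
          (∑ e ∈ G.edgeFinset, (if v ∈ e then g e else 0)) +
          s * (∑ e ∈ G.edgeFinset, (if v ∈ e then z e else 0)) := by
        rw [Finset.mul_sum, ← Finset.sum_add_distrib]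
        apply Finset.sum_congr rfl
        intro e _
        by_cases h : v ∈ e
        · rw [if_pos h, if_pos h, if_pos h]
        · rw [if_neg h, if_neg h, if_neg h]; ring
      rw [hsplit]
      by_cases h : (∑ e ∈ G.edgeFinset, (if v ∈ e then g e else 0)) = 1
      · rw [hzsat v h, mul_zero, add_zero, h]
      · have hsum_lt : (∑ e ∈ G.edgeFinset, (if v ∈ e then g e else 0)) < 1 :=
          lt_of_le_of_ne (hg.1.2.2 v) h
        have hsδv : sδ v = 1 - ∑ e ∈ G.edgeFinset, (if v ∈ e then g e else 0) := by
          simp only [hsδ]; rw [if_neg h]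
        have h1 : |s * (∑ e ∈ G.edgeFinset, (if v ∈ e then z e else 0))| ≤ ε₀ := by
          rw [abs_mul]
          calc |s| * _ ≤ ε * M := by
                apply mul_le_mul hs (le_trans (hsbd v) (by linarith)) (abs_nonneg _)
                  (le_of_lt hεpos)
            _ = ε₀ := hεM
        have h2 := (abs_le.mp h1).2
        have h3 : ε₀ ≤ sδ v := hε₀sδ v
        rw [hsδv] at h3
        linarith
  -- both perturbations are maximum fractional matchings with value g e' at e'
  have hfmP := hpert ε (by rw [abs_of_pos hεpos])
  have hfmN := hpert (-ε) (by rw [abs_neg, abs_of_pos hεpos])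
  have hwsplit : ∀ s : ℝ, weight G (fun e => g e + s * z e) =
      weight G g + s * (∑ e ∈ G.edgeFinset, z e) := by
    intro s
    rw [weight, weight, Finset.mul_sum, ← Finset.sum_add_distrib]
  have hSz : (∑ e ∈ G.edgeFinset, z e) = 0 := by
    have h1 := weight_le_nuF G _ hfmP
    have h2 := weight_le_nuF G _ hfmN
    rw [hwsplit] at h1 h2
    rw [hg.2] at h1 h2
    nlinarith
  have hmmP : IsMaxFracMatching G (fun e => g e + ε * z e) := by
    refine ⟨hfmP, ?_⟩
    rw [hwsplit, hSz, mul_zero, add_zero, hg.2]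
  have hmmN : IsMaxFracMatching G (fun e => g e + (-ε) * z e) := by
    refine ⟨hfmN, ?_⟩
    rw [hwsplit, hSz, mul_zero, add_zero, hg.2]
  have hze' : z e' = 0 := by
    have h1 : g e' + ε * z e' ≤ g e' := hmax2 _ hmmP
    have h2 : g e' + (-ε) * z e' ≤ g e' := hmax2 _ hmmN
    nlinarith
  have hsqP : (∑ e : Sym2 V, (g e + ε * z e) ^ 2) ≤ ∑ e : Sym2 V, (g e) ^ 2 :=
    hmax3 _ hmmP (show g e' + ε * z e' = g e' by rw [hze']; ring)
  have hsqN : (∑ e : Sym2 V, (g e + (-ε) * z e) ^ 2) ≤ ∑ e : Sym2 V, (g e) ^ 2 :=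
    hmax3 _ hmmN (show g e' + (-ε) * z e' = g e' by rw [hze']; ring)
  have hexp : ∀ s : ℝ, (∑ e : Sym2 V, (g e + s * z e) ^ 2) =
      (∑ e : Sym2 V, (g e) ^ 2) + 2 * s * (∑ e : Sym2 V, g e * z e) +
      s ^ 2 * (∑ e : Sym2 V, (z e) ^ 2) := by
    intro s
    rw [Finset.mul_sum, Finset.mul_sum, ← Finset.sum_add_distrib, ← Finset.sum_add_distrib]
    apply Finset.sum_congr rfl
    intro e _
    ring
  rw [hexp] at hsqP hsqN
  have hnegsq : (-ε) ^ 2 = ε ^ 2 := by ring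
  rw [hnegsq] at hsqN
  have hzsq : (∑ e : Sym2 V, (z e) ^ 2) ≤ 0 := by
    by_contra hpos
    push_neg at hpos
    have h5 : 0 < ε ^ 2 * (∑ e : Sym2 V, (z e) ^ 2) := mul_pos (pow_pos hεpos 2) hpos
    linarith
  have hzsq0 : (∑ e : Sym2 V, (z e) ^ 2) = 0 :=
    le_antisymm hzsq (Finset.sum_nonneg fun e _ => sq_nonneg _)
  funext e
  have := (Finset.sum_eq_zero_iff_of_nonneg (fun e _ => sq_nonneg (z e))).mp hzsq0 e
    (Finset.mem_univ e)
  exact pow_eq_zero_iff (by norm_num) |>.mp this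

end SCFAux

namespace SCFAux

variable {V : Type*} [Fintype V] [DecidableEq V]

lemma sum_ite_mem_eq_filter (G : SimpleGraph V) [DecidableRel G.Adj] (g : Sym2 V → ℝ) (v : V) :
    (∑ e ∈ G.edgeFinset, if v ∈ e then g e else 0) =
      ∑ e ∈ G.edgeFinset.filter (fun e => v ∈ e), g e := by
  rw [Finset.sum_filter]

lemma one_edge_le (G : SimpleGraph V) [DecidableRel G.Adj] (g : Sym2 V → ℝ)
    (hfm : IsFracMatching G g) {v : V} {e₀ : Sym2 V}
    (h₀ : e₀ ∈ G.edgeFinset) (hv : v ∈ e₀) :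
    g e₀ ≤ ∑ e ∈ G.edgeFinset, (if v ∈ e then g e else 0) := by
  classical
  rw [sum_ite_mem_eq_filter]
  apply Finset.single_le_sum (f := g) (fun e _ => (hfm.1 e).1)
  rw [Finset.mem_filter]
  exact ⟨h₀, hv⟩

lemma two_edges_le (G : SimpleGraph V) [DecidableRel G.Adj] (g : Sym2 V → ℝ)
    (hfm : IsFracMatching G g) {v : V} {e₀ e₁ : Sym2 V}
    (h₀ : e₀ ∈ G.edgeFinset) (h₁ : e₁ ∈ G.edgeFinset) (hne : e₀ ≠ e₁)
    (hv₀ : v ∈ e₀) (hv₁ : v ∈ e₁) : g e₀ + g e₁ ≤ 1 := by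
  classical
  have h2 : ({e₀, e₁} : Finset (Sym2 V)) ⊆ G.edgeFinset.filter (fun e => v ∈ e) := by
    intro e he
    rw [Finset.mem_insert, Finset.mem_singleton] at he
    rw [Finset.mem_filter]
    rcases he with rfl | rfl
    · exact ⟨h₀, hv₀⟩
    · exact ⟨h₁, hv₁⟩
  calc g e₀ + g e₁ = ∑ e ∈ ({e₀, e₁} : Finset (Sym2 V)), g e := (Finset.sum_pair hne).symm
    _ ≤ ∑ e ∈ G.edgeFinset.filter (fun e => v ∈ e), g e :=
        Finset.sum_le_sum_of_subset_of_nonneg h2 (fun e _ _ => (hfm.1 e).1)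
    _ = ∑ e ∈ G.edgeFinset, (if v ∈ e then g e else 0) := (sum_ite_mem_eq_filter G g v).symm
    _ ≤ 1 := hfm.2.2 v

lemma one_edge_isolated (G : SimpleGraph V) [DecidableRel G.Adj] (g : Sym2 V → ℝ)
    (hfm : IsFracMatching G g) {v : V} {e₀ e₁ : Sym2 V}
    (h₀ : e₀ ∈ G.edgeFinset) (hv0 : v ∈ e₀) (hg0 : g e₀ = 1)
    (hv1 : v ∈ e₁) (hne : e₁ ≠ e₀) : g e₁ = 0 := by
  classical
  by_cases h₁ : e₁ ∈ G.edgeFinset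
  · have := two_edges_le G g hfm h₀ h₁ (Ne.symm hne) hv0 hv1
    rw [hg0] at this
    have h2 := (hfm.1 e₁).1
    linarith
  · exact hfm.2.1 e₁ (by rwa [SimpleGraph.mem_edgeFinset] at h₁)

lemma filter_mem_sym2_card (e : Sym2 V) (h : ¬ e.IsDiag) :
    (Finset.univ.filter (fun v => v ∈ e)).card = 2 := by
  induction e with
  | _ a b =>
    rw [Sym2.mk_isDiag_iff] at h
    have : Finset.univ.filter (fun v => v ∈ s(a, b)) = {a, b} := by
      ext v
      simp [Sym2.mem_iff]
    rw [this, Finset.card_insert_of_notMem (by simpa using h), Finset.card_singleton]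

lemma handshake (F : Finset (Sym2 V)) (hF : ∀ e ∈ F, ¬ e.IsDiag) :
    ∑ v : V, (F.filter (fun e => v ∈ e)).card = 2 * F.card := by
  classical
  have h1 : ∀ v : V, (F.filter (fun e => v ∈ e)).card = ∑ e ∈ F, (if v ∈ e then 1 else 0) := by
    intro v
    rw [Finset.card_filter]
  calc ∑ v : V, (F.filter (fun e => v ∈ e)).card
      = ∑ v : V, ∑ e ∈ F, (if v ∈ e then 1 else 0) := Finset.sum_congr rfl fun v _ => h1 v
    _ = ∑ e ∈ F, ∑ v : V, (if v ∈ e then 1 else 0) := Finset.sum_comm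
    _ = ∑ e ∈ F, 2 := by
        apply Finset.sum_congr rfl
        intro e he
        rw [← Finset.card_filter]
        exact filter_mem_sym2_card e (hF e he)
    _ = 2 * F.card := by rw [Finset.sum_const, smul_eq_mul, mul_comm]

end SCFAux

namespace SCFAux

variable {V : Type*} [Fintype V] [DecidableEq V]

lemma opt_structure (G : SimpleGraph V) [DecidableRel G.Adj] (e' : Sym2 V) (g : Sym2 V → ℝ)
    (hg : IsMaxFracMatching G g)
    (hmax2 : ∀ f, IsMaxFracMatching G f → f e' ≤ g e')
    (hmax3 : ∀ f, IsMaxFracMatching G f → f e' = g e' →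
      (∑ e : Sym2 V, (f e) ^ 2) ≤ ∑ e : Sym2 V, (g e) ^ 2) :
    (∀ e, g e = 0 ∨ g e = 1 / 2 ∨ g e = 1) ∧
    (∀ v : V, (∃ e, e ∈ G.edgeFinset ∧ v ∈ e ∧ g e = 1 / 2) →
      ({e : Sym2 V | e ∈ G.edgeFinset ∧ v ∈ e ∧ g e = 1 / 2}.ncard = 2 ∧
        (∑ e ∈ G.edgeFinset, if v ∈ e then g e else 0) = 1 ∧
        ∀ e₁, v ∈ e₁ → g e₁ ≠ 1)) := by
  classical
  have hker : ∀ z : Sym2 V → ℝ,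
      (∀ e, ¬(g e ≠ 0 ∧ g e ≠ 1 ∧ e ∈ G.edgeSet) → z e = 0) →
      (∀ v, (∑ e ∈ G.edgeFinset, (if v ∈ e then g e else 0)) = 1 →
        (∑ e ∈ G.edgeFinset, (if v ∈ e then z e else 0)) = 0) → z = 0 :=
    fun z hz0 hzs => kernel_eq_zero G e' g z hg hmax2 hmax3 hz0 hzs
  set F : Finset (Sym2 V) := G.edgeFinset.filter (fun e => g e ≠ 0 ∧ g e ≠ 1) with hFdef
  have hFmem : ∀ e, e ∈ F ↔ (g e ≠ 0 ∧ g e ≠ 1 ∧ e ∈ G.edgeSet) := by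
    intro e
    rw [hFdef, Finset.mem_filter, SimpleGraph.mem_edgeFinset]
    tauto
  have hFedge : F ⊆ G.edgeFinset := Finset.filter_subset _ _
  have hFdiag : ∀ e ∈ F, ¬ e.IsDiag := fun e he =>
    SimpleGraph.not_isDiag_of_mem_edgeSet G (((hFmem e).mp he).2.2)
  have hFrange : ∀ e ∈ F, 0 < g e ∧ g e < 1 := by
    intro e he
    obtain ⟨h0, h1, _⟩ := (hFmem e).mp he
    exact ⟨lt_of_le_of_ne (hg.1.1 e).1 (Ne.symm h0), lt_of_le_of_ne (hg.1.1 e).2 h1⟩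
  set A' : Finset V := Finset.univ.filter (fun v => ∃ e ∈ F, v ∈ e) with hA'def
  have hA'mem : ∀ v, v ∈ A' ↔ ∃ e ∈ F, v ∈ e := by
    intro v; rw [hA'def, Finset.mem_filter]; simp
  have no_one : ∀ (v : V) (e₀ e₁ : Sym2 V), e₀ ∈ F → v ∈ e₀ → v ∈ e₁ → g e₁ ≠ 1 := by
    intro v e₀ e₁ he₀ hv₀ hv₁ hg1
    have h₁ : e₁ ∈ G.edgeFinset := by
      rw [SimpleGraph.mem_edgeFinset]
      by_contra h
      rw [hg.1.2.1 e₁ h] at hg1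
      norm_num at hg1
    have hne : e₁ ≠ e₀ := by
      intro h
      rw [h] at hg1
      exact ((hFmem e₀).mp he₀).2.1 hg1
    have := one_edge_isolated G g hg.1 h₁ hv₁ hg1 hv₀ (Ne.symm hne)
    exact ((hFmem e₀).mp he₀).1 this
  set sat : V → Prop := fun v => (∑ e ∈ G.edgeFinset, if v ∈ e then g e else 0) = 1
    with hsatdef
  set S' : Finset V := A'.filter sat with hS'def
  -- dimension bound
  have hdim : F.card ≤ S'.card := by
    let L : ({e // e ∈ F} → ℝ) →ₗ[ℝ] ({v // v ∈ S'} → ℝ) :=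
      { toFun := fun ζ => fun v => ∑ e ∈ F.attach, (if (v : V) ∈ (e : Sym2 V) then ζ e else 0)
        map_add' := by
          intro ζ η
          funext v
          show (∑ e ∈ F.attach, (_ : ℝ)) = (∑ e ∈ F.attach, _) + (∑ e ∈ F.attach, _)
          rw [← Finset.sum_add_distrib]
          apply Finset.sum_congr rfl
          intro e _
          by_cases h : (v : V) ∈ (e : Sym2 V) <;> simp [h]
        map_smul' := by
          intro c ζ
          funext v
          show (∑ e ∈ F.attach, (_ : ℝ)) = c * (∑ e ∈ F.attach, _)
          rw [Finset.mul_sum]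
          apply Finset.sum_congr rfl
          intro e _
          by_cases h : (v : V) ∈ (e : Sym2 V) <;> simp [h] }
    have hLinj : Function.Injective L := by
      rw [injective_iff_map_eq_zero]
      intro ζ hζ
      set z : Sym2 V → ℝ := fun e => if h : e ∈ F then ζ ⟨e, h⟩ else 0 with hzdef
      have hz_eq : z = 0 := by
        apply hker
        · intro e he
          have : e ∉ F := fun hF' => he ((hFmem e).mp hF')
          simp only [hzdef]
          rw [dif_neg this]
        · intro v hv
          have hstep : (∑ e ∈ G.edgeFinset, (if v ∈ e then z e else 0)) =
              ∑ e ∈ F, (if v ∈ e then z e else 0) := by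
            symm
            apply Finset.sum_subset hFedge
            intro e _ heF
            have : z e = 0 := by simp only [hzdef]; rw [dif_neg heF]
            rw [this, ite_self]
          rw [hstep]
          by_cases hvA : v ∈ A'
          · have hvS : v ∈ S' := by
              rw [hS'def, Finset.mem_filter]
              exact ⟨hvA, hv⟩
            have h2 : (∑ e ∈ F.attach, (if (v : V) ∈ (e : Sym2 V) then ζ e else 0)) = 0 :=
              congrFun hζ ⟨v, hvS⟩
            calc (∑ e ∈ F, if v ∈ e then z e else 0)
                = ∑ e ∈ F.attach, (if (v : V) ∈ (e : Sym2 V) then ζ e else 0) := by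
                  rw [← Finset.sum_attach F (fun e => if v ∈ e then z e else 0)]
                  apply Finset.sum_congr rfl
                  intro e _
                  by_cases h : v ∈ (e : Sym2 V)
                  · rw [if_pos h, if_pos h]
                    simp only [hzdef]
                    rw [dif_pos e.2]
                  · rw [if_neg h, if_neg h]
              _ = 0 := h2
          · apply Finset.sum_eq_zero
            intro e he
            rw [if_neg]
            intro hv'
            exact hvA ((hA'mem v).mpr ⟨e, he, hv'⟩)
      funext e
      have : z (e : Sym2 V) = 0 := by rw [hz_eq]; rfl
      simp only [hzdef] at this
      rw [dif_pos e.2] at this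
      exact this
    have h1 : Module.finrank ℝ ({e // e ∈ F} → ℝ) ≤
        Module.finrank ℝ ({v // v ∈ S'} → ℝ) :=
      LinearMap.finrank_le_finrank_of_injective hLinj
    rwa [Module.finrank_pi ℝ, Module.finrank_pi ℝ, Fintype.card_coe, Fintype.card_coe] at h1
  -- handshake restricted to A'
  have hhs : ∑ v ∈ A', (F.filter (fun e => v ∈ e)).card = 2 * F.card := by
    rw [← handshake F hFdiag]
    apply Finset.sum_subset (Finset.subset_univ A')
    intro v _ hvA
    rw [Finset.card_eq_zero, Finset.filter_eq_empty_iff]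
    intro e he hv
    exact hvA ((hA'mem v).mpr ⟨e, he, hv⟩)
  have dF_ge1 : ∀ v ∈ A', 1 ≤ (F.filter (fun e => v ∈ e)).card := by
    intro v hv
    obtain ⟨e, he, hve⟩ := (hA'mem v).mp hv
    exact Finset.card_pos.mpr ⟨e, Finset.mem_filter.mpr ⟨he, hve⟩⟩
  have dF_ge2 : ∀ v ∈ A', sat v → 2 ≤ (F.filter (fun e => v ∈ e)).card := by
    intro v hv hsat
    obtain ⟨e₀, he₀, hve₀⟩ := (hA'mem v).mp hv
    by_contra hlt
    push_neg at hlt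
    have huniq : ∀ e ∈ F, v ∈ e → e = e₀ := by
      intro e he hve
      by_contra hne
      have h2 : 2 ≤ (F.filter (fun e => v ∈ e)).card := by
        apply Finset.one_lt_card.mpr
        exact ⟨e, Finset.mem_filter.mpr ⟨he, hve⟩, e₀, Finset.mem_filter.mpr ⟨he₀, hve₀⟩, hne⟩
      omega
    have hsum : (∑ e ∈ G.edgeFinset, if v ∈ e then g e else 0) = g e₀ := by
      rw [sum_ite_mem_eq_filter]
      apply Finset.sum_eq_single_of_mem e₀
        (Finset.mem_filter.mpr ⟨hFedge he₀, hve₀⟩)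
      intro e he hne
      obtain ⟨heE, hve⟩ := Finset.mem_filter.mp he
      by_contra hne0
      have heF : e ∈ F := by
        rw [hFmem]
        refine ⟨hne0, ?_, (SimpleGraph.mem_edgeFinset).mp heE⟩
        exact no_one v e₀ e he₀ hve₀ hve
      exact hne (huniq e heF hve)
    simp only [hsatdef] at hsat
    rw [hsum] at hsat
    exact ((hFmem e₀).mp he₀).2.1 hsat
  have all_sat : ∀ v ∈ A', sat v := by
    by_contra hcon
    push_neg at hcon
    obtain ⟨u, huA, husat⟩ := hcon
    have hsplit : ∑ v ∈ A', (F.filter (fun e => v ∈ e)).card =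
        (∑ v ∈ S', (F.filter (fun e => v ∈ e)).card) +
        ∑ v ∈ A'.filter (fun v => ¬ sat v), (F.filter (fun e => v ∈ e)).card := by
      rw [hS'def]
      exact (Finset.sum_filter_add_sum_filter_not A' sat _).symm
    have h1 : S'.card * 2 ≤ ∑ v ∈ S', (F.filter (fun e => v ∈ e)).card := by
      have := Finset.card_nsmul_le_sum S' (fun v => (F.filter (fun e => v ∈ e)).card) 2
        (fun v hv => dF_ge2 v (Finset.mem_filter.mp hv).1 (Finset.mem_filter.mp hv).2)
      simpa [smul_eq_mul] using this
    have hu' : u ∈ A'.filter (fun v => ¬ sat v) := Finset.mem_filter.mpr ⟨huA, husat⟩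
    have h2 : 1 ≤ ∑ v ∈ A'.filter (fun v => ¬ sat v), (F.filter (fun e => v ∈ e)).card := by
      calc 1 ≤ (F.filter (fun e => u ∈ e)).card := dF_ge1 u huA
        _ ≤ _ := Finset.single_le_sum
            (f := fun v => (F.filter (fun e => v ∈ e)).card) (fun v _ => Nat.zero_le _) hu'
    omega
  have hS'A : S' = A' := by
    rw [hS'def]
    exact Finset.filter_eq_self.mpr all_sat
  have dF_eq2 : ∀ v ∈ A', (F.filter (fun e => v ∈ e)).card = 2 := by
    have hub : ∑ v ∈ A', (F.filter (fun e => v ∈ e)).card ≤ 2 * A'.card := by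
      rw [hhs]
      have : S'.card = A'.card := by rw [hS'A]
      omega
    intro v hv
    by_contra hne
    have h3 : 3 ≤ (F.filter (fun e => v ∈ e)).card := by
      have := dF_ge2 v hv (all_sat v hv)
      omega
    have hsplit : (F.filter (fun e => v ∈ e)).card +
        ∑ w ∈ A'.erase v, (F.filter (fun e => w ∈ e)).card =
        ∑ w ∈ A', (F.filter (fun e => w ∈ e)).card :=
      Finset.add_sum_erase A' (fun v => (F.filter (fun e => v ∈ e)).card) hv
    have herase : (A'.erase v).card * 2 ≤
        ∑ w ∈ A'.erase v, (F.filter (fun e => w ∈ e)).card := by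
      have := Finset.card_nsmul_le_sum (A'.erase v)
        (fun w => (F.filter (fun e => w ∈ e)).card) 2
        (fun w hw => dF_ge2 w (Finset.mem_of_mem_erase hw)
          (all_sat w (Finset.mem_of_mem_erase hw)))
      simpa [smul_eq_mul] using this
    have hcarde : (A'.erase v).card = A'.card - 1 := Finset.card_erase_of_mem hv
    have hA'pos : 1 ≤ A'.card := Finset.card_pos.mpr ⟨v, hv⟩
    omega
  -- all fractional values are 1/2
  have half : ∀ e ∈ F, g e = 1 / 2 := by
    set z : Sym2 V → ℝ := fun e => if e ∈ F then g e - 1 / 2 else 0 with hzdef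
    have hz_eq : z = 0 := by
      apply hker
      · intro e he
        have : e ∉ F := fun hF' => he ((hFmem e).mp hF')
        simp only [hzdef]
        rw [if_neg this]
      · intro v hv
        have hstep : (∑ e ∈ G.edgeFinset, (if v ∈ e then z e else 0)) =
            ∑ e ∈ F.filter (fun e => v ∈ e), (g e - 1 / 2) := by
          have h1 : (∑ e ∈ G.edgeFinset, (if v ∈ e then z e else 0)) =
              ∑ e ∈ F, (if v ∈ e then z e else 0) := by
            symm
            apply Finset.sum_subset hFedge
            intro e _ heF
            have : z e = 0 := by simp only [hzdef]; rw [if_neg heF]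
            rw [this, ite_self]
          rw [h1, ← Finset.sum_filter]
          apply Finset.sum_congr rfl
          intro e he
          have heF : e ∈ F := (Finset.mem_filter.mp he).1
          simp only [hzdef]
          rw [if_pos heF]
        rw [hstep]
        by_cases hvA : v ∈ A'
        · have hcard : (F.filter (fun e => v ∈ e)).card = 2 := dF_eq2 v hvA
          obtain ⟨e₀, he₀, hve₀⟩ := (hA'mem v).mp hvA
          have hgsum : (∑ e ∈ F.filter (fun e => v ∈ e), g e) = 1 := by
            rw [sum_ite_mem_eq_filter] at hv
            rw [← hv]
            apply Finset.sum_subset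
            · intro e he
              obtain ⟨h1, h2⟩ := Finset.mem_filter.mp he
              exact Finset.mem_filter.mpr ⟨hFedge h1, h2⟩
            · intro e he heF
              obtain ⟨heE, hve⟩ := Finset.mem_filter.mp he
              by_contra hne0
              have : e ∈ F := by
                rw [hFmem]
                refine ⟨hne0, no_one v e₀ e he₀ hve₀ hve, (SimpleGraph.mem_edgeFinset).mp heE⟩
              exact heF (Finset.mem_filter.mpr ⟨this, hve⟩)
          rw [Finset.sum_sub_distrib, hgsum, Finset.sum_const, hcard]
          norm_num
        · rw [Finset.filter_eq_empty_iff.mpr, Finset.sum_empty]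
          intro e he hve
          exact hvA ((hA'mem v).mpr ⟨e, he, hve⟩)
    intro e he
    have := congrFun hz_eq e
    simp only [hzdef] at this
    rw [if_pos he] at this
    have h0 : g e - 1 / 2 = 0 := this
    linarith
  constructor
  · intro e
    by_cases h0 : g e = 0
    · exact Or.inl h0
    by_cases h1 : g e = 1
    · exact Or.inr (Or.inr h1)
    have heF : e ∈ F := by
      rw [hFmem]
      refine ⟨h0, h1, ?_⟩
      by_contra h
      exact h0 (hg.1.2.1 e h)
    exact Or.inr (Or.inl (half e heF))
  · intro v ⟨e₀, he₀E, hve₀, hhalf₀⟩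
    have he₀F : e₀ ∈ F := by
      rw [hFmem]
      refine ⟨by rw [hhalf₀]; norm_num, by rw [hhalf₀]; norm_num,
        (SimpleGraph.mem_edgeFinset).mp he₀E⟩
    have hvA : v ∈ A' := (hA'mem v).mpr ⟨e₀, he₀F, hve₀⟩
    refine ⟨?_, all_sat v hvA, fun e₁ hv₁ => no_one v e₀ e₁ he₀F hve₀ hv₁⟩
    have hseteq : {e : Sym2 V | e ∈ G.edgeFinset ∧ v ∈ e ∧ g e = 1 / 2} =
        ↑(F.filter (fun e => v ∈ e)) := by
      ext e
      simp only [Set.mem_setOf_eq, Finset.coe_filter, Finset.mem_filter]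
      constructor
      · rintro ⟨h1, h2, h3⟩
        refine ⟨(hFmem e).mpr ⟨by rw [h3]; norm_num, by rw [h3]; norm_num,
          (SimpleGraph.mem_edgeFinset).mp h1⟩, h2⟩
      · rintro ⟨h1, h2⟩
        exact ⟨hFedge h1, h2, half e h1⟩
    rw [hseteq, Set.ncard_coe_finset]
    exact dF_eq2 v hvA

end SCFAux

namespace SCFAux

variable {V : Type*} [Fintype V] [DecidableEq V]

lemma ncard_neighbors_eq (P : Sym2 V → Prop) (hdiag : ∀ e, P e → ¬ e.IsDiag) (v : V) :
    {u : V | P s(v, u)}.ncard = {e : Sym2 V | P e ∧ v ∈ e}.ncard := by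
  have himg : {e : Sym2 V | P e ∧ v ∈ e} = (fun u => s(v, u)) '' {u : V | P s(v, u)} := by
    ext e
    constructor
    · rintro ⟨hP, hv⟩
      obtain ⟨u, rfl⟩ := Sym2.mem_iff_exists.mp hv
      exact ⟨u, hP, rfl⟩
    · rintro ⟨u, hu, rfl⟩
      exact ⟨hu, Sym2.mem_mk_left v u⟩
  rw [himg, Set.ncard_image_of_injective]
  intro u u' huu'
  rcases Sym2.eq_iff.mp huu' with ⟨_, h⟩ | ⟨h1, h2⟩
  · exact h
  · rw [← h1, h2]

end SCFAux


open SCFAux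

/-- if some maximum fractional matching is nonzero on `e'`, then there is a
maximum fractional matching `f'` with values in `{0, 1/2, 1}`, nonzero on `e'`, whose support
spans a graph each of whose components is a single edge or an odd cycle. -/
theorem stmt12 {V : Type*} [Fintype V] [DecidableEq V] (G : SimpleGraph V)
    [DecidableRel G.Adj] (e' : Sym2 V) (he' : e' ∈ G.edgeSet)
    (h : ∃ f : Sym2 V → ℝ, IsMaxFracMatching G f ∧ f e' ≠ 0) :
    ∃ f' : Sym2 V → ℝ, IsMaxFracMatching G f' ∧
      (∀ e : Sym2 V, f' e ∈ ({0, 1/2, 1} : Set ℝ)) ∧ f' e' ≠ 0 ∧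
      (let H := SimpleGraph.fromEdgeSet {e | f' e ≠ 0};
        ∀ v, deg H v = 0 ∨ IsK11Comp H v ∨ IsOddCycleComp H v) := by
  classical
  obtain ⟨g, hgm, hgpos, hmax2, hmax3⟩ := exists_opt G e' h
  obtain ⟨hvals, hB⟩ := opt_structure G e' g hgm hmax2 hmax3
  refine ⟨g, hgm, ?_, ne_of_gt hgpos, ?_⟩
  · intro e
    rcases hvals e with h0 | h0 | h0 <;> rw [h0] <;> simp
  show ∀ v, deg (SimpleGraph.fromEdgeSet {e | g e ≠ 0}) v = 0 ∨ _ ∨ _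
  set H := SimpleGraph.fromEdgeSet {e : Sym2 V | g e ≠ 0} with hHdef
  -- basic facts about the support graph H
  have hsupp0 : ∀ e : Sym2 V, g e ≠ 0 → e ∈ G.edgeSet := by
    intro e hne
    by_contra hmem
    exact hne (hgm.1.2.1 e hmem)
  have hHadj : ∀ a b : V, H.Adj a b ↔ g s(a, b) ≠ 0 := by
    intro a b
    rw [hHdef, SimpleGraph.fromEdgeSet_adj]
    constructor
    · exact fun h => h.1
    · intro h
      refine ⟨h, ?_⟩
      have := G.not_isDiag_of_mem_edgeSet (hsupp0 _ h)
      rwa [Sym2.mk_isDiag_iff] at this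
  have hHnbr : ∀ w : V, H.neighborSet w = {u : V | g s(w, u) ≠ 0} := by
    intro w
    ext u
    rw [SimpleGraph.mem_neighborSet, hHadj]
    rfl
  have hdegH : ∀ w : V, deg H w = {e : Sym2 V | g e ≠ 0 ∧ w ∈ e}.ncard := by
    intro w
    rw [deg, hHnbr]
    exact ncard_neighbors_eq (fun e => g e ≠ 0)
      (fun e hP => G.not_isDiag_of_mem_edgeSet (hsupp0 e hP)) w
  intro v
  by_cases hv0 : ∀ e, v ∈ e → g e = 0
  · left
    rw [hdegH]
    have : {e : Sym2 V | g e ≠ 0 ∧ v ∈ e} = ∅ := by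
      ext e
      simp only [Set.mem_setOf_eq, Set.mem_empty_iff_false, iff_false, not_and]
      intro hne hv
      exact hne (hv0 e hv)
    rw [this, Set.ncard_empty]
  push_neg at hv0
  obtain ⟨e₀, hve₀, hgne₀⟩ := hv0
  have he₀E : e₀ ∈ G.edgeFinset := by
    rw [SimpleGraph.mem_edgeFinset]
    exact hsupp0 e₀ hgne₀
  rcases hvals e₀ with h0 | hhalf | hone
  · exact absurd h0 hgne₀
  · -- v is on an odd cycle of half edges
    right; right
    set VF : Set V := {w : V | ∃ e, e ∈ G.edgeFinset ∧ w ∈ e ∧ g e = 1 / 2} with hVFdef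
    have hvVF : v ∈ VF := ⟨e₀, he₀E, hve₀, hhalf⟩
    have hVFhalf : ∀ w ∈ VF, ∀ e : Sym2 V, w ∈ e → g e ≠ 0 → g e = 1 / 2 := by
      intro w hw e hwe hne
      rcases hvals e with h1 | h1 | h1
      · exact absurd h1 hne
      · exact h1
      · exact absurd h1 ((hB w hw).2.2 e hwe)
    have hVFdeg : ∀ w ∈ VF, deg H w = 2 := by
      intro w hw
      rw [hdegH]
      have hseteq : {e : Sym2 V | g e ≠ 0 ∧ w ∈ e} =
          {e : Sym2 V | e ∈ G.edgeFinset ∧ w ∈ e ∧ g e = 1 / 2} := by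
        ext e
        simp only [Set.mem_setOf_eq]
        constructor
        · rintro ⟨h1, h2⟩
          exact ⟨by rw [SimpleGraph.mem_edgeFinset]; exact hsupp0 e h1, h2,
            hVFhalf w hw e h2 h1⟩
        · rintro ⟨h1, h2, h3⟩
          exact ⟨by rw [h3]; norm_num, h2⟩
      rw [hseteq]
      exact (hB w hw).1
    have hVFstep : ∀ a b : V, H.Adj a b → a ∈ VF → b ∈ VF := by
      intro a b hab ha
      have h1 : g s(a, b) ≠ 0 := (hHadj a b).mp hab
      have h2 : g s(a, b) = 1 / 2 := hVFhalf a ha _ (Sym2.mem_mk_left a b) h1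
      exact ⟨s(a, b), by rw [SimpleGraph.mem_edgeFinset]; exact hsupp0 _ h1,
        Sym2.mem_mk_right a b, h2⟩
    have hreach : ∀ w, H.Reachable v w → w ∈ VF := by
      intro w hw
      have aux : ∀ (a c : V) (_ : H.Walk a c), a ∈ VF → c ∈ VF := by
        intro a c W
        induction W with
        | nil => exact id
        | cons hadj W ih => exact fun ha => ih (hVFstep _ _ hadj ha)
      obtain ⟨W⟩ := hw
      exact aux v w W hvVF
    constructor
    · intro w hw
      exact hVFdeg w (hreach w hw)
    · rcases traversal H v (fun w hw => by
        have := hVFdeg w (hreach w hw)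
        rwa [deg] at this) with hodd | ⟨z, hzne, hzsupp, hzsum⟩
      · exact hodd
      · exfalso
        apply hzne
        apply kernel_eq_zero G e' g z hgm hmax2 hmax3
        · intro e he
          by_contra hzne'
          apply he
          obtain ⟨heH, hreache⟩ := hzsupp e hzne'
          have hge : g e ≠ 0 := by
            revert heH
            refine e.ind (fun a b heH => ?_)
            exact (hHadj a b).mp heH
          refine ⟨hge, ?_, hsupp0 e hge⟩
          have hex : ∃ a, a ∈ e := e.ind (fun a b => ⟨a, Sym2.mem_mk_left a b⟩)
          obtain ⟨a, ha⟩ := hex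
          have haVF : a ∈ VF := hreach a (hreache a ha)
          exact (hB a haVF).2.2 e ha
        · intro w _
          calc (∑ e ∈ G.edgeFinset, if w ∈ e then z e else 0)
              = ∑ e : Sym2 V, (if w ∈ e then z e else 0) := by
                apply Finset.sum_subset (Finset.subset_univ G.edgeFinset)
                intro e _ heE
                have hze : z e = 0 := by
                  by_contra hzne'
                  exact heE ((SimpleGraph.mem_edgeFinset).mpr
                    (hsupp0 e (by
                      obtain ⟨heH, _⟩ := hzsupp e hzne'
                      revert heH
                      refine e.ind (fun a b heH => ?_)
                      exact (hHadj a b).mp heH)))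
                rw [hze, ite_self]
            _ = 0 := hzsum w
  · -- v is an endpoint of an edge of weight 1
    right; left
    obtain ⟨u₀, he₀eq⟩ := Sym2.mem_iff_exists.mp hve₀
    have hu₀v : u₀ ≠ v := by
      have := G.not_isDiag_of_mem_edgeSet (hsupp0 e₀ hgne₀)
      rw [he₀eq, Sym2.mk_isDiag_iff] at this
      exact fun h => this h.symm
    have hnbrv : H.neighborSet v = {u₀} := by
      rw [hHnbr]
      ext u
      simp only [Set.mem_setOf_eq, Set.mem_singleton_iff]
      constructor
      · intro hgu
        by_contra hne
        have hne' : s(v, u) ≠ e₀ := by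
          rw [he₀eq]
          intro heq
          rcases Sym2.eq_iff.mp heq with ⟨_, h⟩ | ⟨h, _⟩
          · exact hne h
          · exact (hu₀v h.symm).elim
        exact hgu (one_edge_isolated G g hgm.1 he₀E hve₀ hone
          (Sym2.mem_mk_left v u) hne')
      · intro h
        rw [h, ← he₀eq]  -- s(v,u₀) = e₀?
        exact hgne₀
    have hdegv : deg H v = 1 := by
      rw [deg, hnbrv, Set.ncard_singleton]
    refine ⟨hdegv, ?_⟩
    intro w hw
    have hwu₀ : w = u₀ := by
      have : w ∈ H.neighborSet v := hw
      rwa [hnbrv] at this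
    rw [hwu₀]
    have hnbru : H.neighborSet u₀ = {v} := by
      rw [hHnbr]
      ext u
      simp only [Set.mem_setOf_eq, Set.mem_singleton_iff]
      constructor
      · intro hgu
        by_contra hne
        have hne' : s(u₀, u) ≠ e₀ := by
          rw [he₀eq]
          intro heq
          rcases Sym2.eq_iff.mp heq with ⟨h1, h2⟩ | ⟨h1, h2⟩
          · exact hu₀v h1
          · exact hne h2
        have hu₀e₀ : u₀ ∈ e₀ := by rw [he₀eq]; exact Sym2.mem_mk_right v u₀
        exact hgu (one_edge_isolated G g hgm.1 he₀E hu₀e₀ hone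
          (Sym2.mem_mk_left u₀ u) hne')
      · intro h
        rw [h]
        have : s(u₀, v) = e₀ := by rw [he₀eq, Sym2.eq_swap]
        rw [this]
        exact hgne₀
    rw [deg, hnbru, Set.ncard_singleton]
end

section
/- Let G be a finite simple graph that has a {K_{1,1}, K_{1,2}, C_m : m ≥ 3}-factor, and let e = uv be an edge of G. There is no {K_{1,1}, K_{1,2}, C_m : m ≥ 3}-factor of G containing e if and only if there exists S ⊆ V(G) with u, v ∈ S and 2|S| − 2 ≤ iso(G−S) ≤ 2|S|. -/
open Finset

open SCF

namespace SCF13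

open scoped Classical

variable {V : Type*} [Fintype V]

/-- Isolated vertices of the graph induced on `A`, after removing `S`. -/
noncomputable def isoSet (G : SimpleGraph V) (A S : Finset V) : Finset V :=
  (A \ S).filter (fun x => ∀ w, G.Adj x w → w ∈ A → w ∈ S)

lemma mem_isoSet {G : SimpleGraph V} {A S : Finset V} {x : V} :
    x ∈ isoSet G A S ↔ (x ∈ A ∧ x ∉ S) ∧ ∀ w, G.Adj x w → w ∈ A → w ∈ S := by
  simp [isoSet, Finset.mem_filter, Finset.mem_sdiff, and_assoc]

lemma isoSet_subset {G : SimpleGraph V} {A S : Finset V} : isoSet G A S ⊆ A := by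
  intro x hx; exact ((mem_isoSet.1 hx).1).1

lemma iso_eq_isoSet (G : SimpleGraph V) (S : Set V) :
    iso G S = (isoSet G Finset.univ S.toFinset).card := by
  have h : {v | v ∉ S ∧ ∀ w, G.Adj v w → w ∈ S} =
      ↑(isoSet G Finset.univ S.toFinset) := by
    ext x
    simp [mem_isoSet, Set.mem_toFinset]
  rw [iso, h, Set.ncard_coe_finset]

/-- the "stars" graph: for each `x ∈ D` an edge from `x` to `m x`. -/
noncomputable def stars (m : V → V) (D : Finset V) : SimpleGraph V :=
  SimpleGraph.fromEdgeSet {e | ∃ x ∈ D, e = s(x, m x)}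

lemma stars_adj {m : V → V} {D : Finset V} {a b : V} :
    (stars m D).Adj a b ↔ a ≠ b ∧ ((a ∈ D ∧ b = m a) ∨ (b ∈ D ∧ a = m b)) := by
  constructor
  · rintro ⟨⟨x, hx, he⟩, hne⟩
    refine ⟨hne, ?_⟩
    rw [Sym2.eq_iff] at he
    rcases he with ⟨h1, h2⟩ | ⟨h1, h2⟩
    · subst h1; exact Or.inl ⟨hx, h2⟩
    · subst h2; exact Or.inr ⟨hx, h1⟩
  · rintro ⟨hne, ⟨hD, rfl⟩ | ⟨hD, rfl⟩⟩
    · exact ⟨⟨a, hD, rfl⟩, hne⟩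
    · exact ⟨⟨b, hD, Sym2.eq_swap⟩, hne⟩

end SCF13

section C2
open scoped Classical
set_option linter.unusedSectionVars false

namespace SCF13
variable {V : Type*} [Fintype V]

section starsAPI
variable {G : SimpleGraph V} {m : V → V} {D : Finset V}

/-- fiber of a center -/
noncomputable def fib (m : V → V) (D : Finset V) (c : V) : Finset V :=
  D.filter (fun x => m x = c)

lemma stars_le (hadj : ∀ x ∈ D, G.Adj x (m x)) : stars m D ≤ G := by
  intro a b hab
  rcases stars_adj.1 hab with ⟨hne, ⟨hD, rfl⟩ | ⟨hD, rfl⟩⟩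
  · exact hadj a hD
  · exact (hadj b hD).symm

lemma stars_nbr_dom (hadj : ∀ x ∈ D, x ≠ m x) (hd : ∀ x ∈ D, m x ∉ D)
    {a : V} (ha : a ∈ D) : (stars m D).neighborSet a = {m a} := by
  ext y
  simp only [SimpleGraph.mem_neighborSet, Set.mem_singleton_iff, stars_adj]
  constructor
  · rintro ⟨hne, ⟨_, rfl⟩ | ⟨hy, rfl⟩⟩
    · rfl
    · exact absurd ha (hd y hy)
  · rintro rfl; exact ⟨hadj a ha, Or.inl ⟨ha, rfl⟩⟩

lemma stars_nbr_center (hd : ∀ x ∈ D, m x ∉ D) {c : V} (hc : c ∉ D) :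
    (stars m D).neighborSet c = ↑(fib m D c) := by
  ext y
  simp only [SimpleGraph.mem_neighborSet, Finset.coe_filter, Set.mem_setOf_eq, stars_adj, fib,
    Finset.mem_filter]
  constructor
  · rintro ⟨hne, ⟨hcD, _⟩ | ⟨hy, rfl⟩⟩
    · exact absurd hcD hc
    · exact ⟨hy, rfl⟩
  · rintro ⟨hy, hmy⟩
    have hcy : c ≠ y := fun h => hc (h ▸ hy)
    exact ⟨hcy, Or.inr ⟨hy, hmy.symm⟩⟩

lemma stars_deg_dom (hadj : ∀ x ∈ D, x ≠ m x) (hd : ∀ x ∈ D, m x ∉ D)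
    {a : V} (ha : a ∈ D) : deg (stars m D) a = 1 := by
  rw [deg, stars_nbr_dom hadj hd ha, Set.ncard_singleton]

lemma stars_deg_center (hd : ∀ x ∈ D, m x ∉ D) {c : V} (hc : c ∉ D) :
    deg (stars m D) c = (fib m D c).card := by
  rw [deg, stars_nbr_center hd hc, Set.ncard_coe_finset]

lemma stars_support {y : V} (hy : y ∈ (stars m D).support) :
    y ∈ D ∨ ∃ x ∈ D, m x = y := by
  obtain ⟨w, hw⟩ := hy
  rcases stars_adj.1 hw with ⟨_, ⟨hD, _⟩ | ⟨hD, rfl⟩⟩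
  · exact Or.inl hD
  · exact Or.inr ⟨w, hD, rfl⟩

/-- main classification lemma for star graphs -/
lemma stars_class (hadj : ∀ x ∈ D, x ≠ m x) (hd : ∀ x ∈ D, m x ∉ D)
    (hfib : ∀ c, (fib m D c).card ≤ 2) :
    ∀ y, (y ∈ D ∨ ∃ x ∈ D, m x = y) →
      IsK11Comp (stars m D) y ∨ IsK12Comp (stars m D) y := by
  -- reduce to classification "at the center"
  have key : ∀ c, (fib m D c).Nonempty → c ∉ D →
      (IsK11Comp (stars m D) c ∨ IsK12Comp (stars m D) c) ∧
      (∀ x ∈ fib m D c, IsK11Comp (stars m D) x ∨ IsK12Comp (stars m D) x) := by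
    intro c hne hcD
    have hcard1 : 1 ≤ (fib m D c).card := Finset.card_pos.2 hne
    have hdegc : deg (stars m D) c = (fib m D c).card := stars_deg_center hd hcD
    have hmemfib : ∀ x ∈ fib m D c, x ∈ D ∧ m x = c := by
      intro x hx; exact Finset.mem_filter.1 hx
    have hub := hfib c
    obtain h | h : (fib m D c).card = 1 ∨ (fib m D c).card = 2 := by omega
    · -- card = 1
      obtain ⟨x, hxf⟩ := Finset.card_eq_one.1 h
      obtain ⟨hxD, hmx⟩ := hmemfib x (hxf ▸ Finset.mem_singleton_self x)
      have hnbrc : (stars m D).neighborSet c = {x} := by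
        rw [stars_nbr_center hd hcD, hxf]; simp
      have hdx : deg (stars m D) x = 1 := stars_deg_dom hadj hd hxD
      have hdc : deg (stars m D) c = 1 := by rw [hdegc, h]
      have hK : IsK11Comp (stars m D) c := by
        refine ⟨hdc, fun w hw => ?_⟩
        have : w ∈ (stars m D).neighborSet c := hw
        rw [hnbrc] at this
        rwa [Set.mem_singleton_iff.1 this]
      constructor
      · exact Or.inl hK
      · intro x' hx'
        rw [hxf, Finset.mem_singleton] at hx'
        subst hx'
        refine Or.inl ⟨hdx, fun w hw => ?_⟩
        have : w ∈ (stars m D).neighborSet x' := hw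
        rw [stars_nbr_dom hadj hd hxD, hmx] at this
        rwa [Set.mem_singleton_iff.1 this]
    · -- card = 2
      obtain ⟨a, b, hab, hexp⟩ := Finset.card_eq_two.1 h
      obtain ⟨haD, hma⟩ := hmemfib a (hexp ▸ by simp)
      obtain ⟨hbD, hmb⟩ := hmemfib b (hexp ▸ by simp)
      have hca : (stars m D).Adj c a := by
        rw [stars_adj]
        exact ⟨fun hh => hcD (hh ▸ haD), Or.inr ⟨haD, hma.symm⟩⟩
      have hcb : (stars m D).Adj c b := by
        rw [stars_adj]
        exact ⟨fun hh => hcD (hh ▸ hbD), Or.inr ⟨hbD, hmb.symm⟩⟩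
      have hK : IsK12Comp (stars m D) c :=
        ⟨c, a, b, hab, hca, hcb, by rw [hdegc, h], stars_deg_dom hadj hd haD,
          stars_deg_dom hadj hd hbD, Or.inl rfl⟩
      refine ⟨Or.inr hK, fun x hx => Or.inr ?_⟩
      rw [hexp] at hx
      rcases Finset.mem_insert.1 hx with rfl | hx
      · exact ⟨c, x, b, hab, hca, hcb, by rw [hdegc, h], stars_deg_dom hadj hd haD,
          stars_deg_dom hadj hd hbD, Or.inr (Or.inl rfl)⟩
      · rw [Finset.mem_singleton] at hx; subst hx
        exact ⟨c, a, x, hab, hca, hcb, by rw [hdegc, h], stars_deg_dom hadj hd haD,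
          stars_deg_dom hadj hd hbD, Or.inr (Or.inr rfl)⟩
  intro y hy
  rcases hy with hyD | ⟨x, hxD, hmx⟩
  · have h1 : y ∈ fib m D (m y) := Finset.mem_filter.2 ⟨hyD, rfl⟩
    exact (key (m y) ⟨y, h1⟩ (hd y hyD)).2 y h1
  · have h1 : x ∈ fib m D y := Finset.mem_filter.2 ⟨hxD, hmx⟩
    exact (key y ⟨x, h1⟩ (hmx ▸ hd x hxD)).1

end starsAPI
end SCF13
end C2

section C3
open scoped Classical
set_option linter.unusedSectionVars false
set_option linter.unusedVariables false

namespace SCF13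
variable {V : Type*} [Fintype V]

section supTransfer
variable {P Q : SimpleGraph V}

lemma sup_nbr_left (h : Disjoint P.support Q.support) {v : V} (hv : v ∈ P.support) :
    (P ⊔ Q).neighborSet v = P.neighborSet v := by
  ext w
  simp only [SimpleGraph.mem_neighborSet, SimpleGraph.sup_adj]
  constructor
  · rintro (h1 | h2)
    · exact h1
    · exact absurd (Q.mem_support.2 ⟨w, h2⟩) (fun hq => (Set.disjoint_left.1 h) hv hq)
  · exact Or.inl

lemma sup_deg_left (h : Disjoint P.support Q.support) {v : V} (hv : v ∈ P.support) :
    deg (P ⊔ Q) v = deg P v := by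
  rw [deg, sup_nbr_left h hv, deg]

lemma support_of_deg_pos {v : V} (hv : 0 < deg P v) : v ∈ P.support := by
  rw [deg] at hv
  obtain ⟨w, hw⟩ := Set.nonempty_of_ncard_ne_zero hv.ne'
  exact ⟨w, hw⟩

lemma K11_sup_left (h : Disjoint P.support Q.support) {v : V}
    (hv : IsK11Comp P v) : IsK11Comp (P ⊔ Q) v := by
  obtain ⟨h1, h2⟩ := hv
  have hvs : v ∈ P.support := support_of_deg_pos (by rw [h1]; norm_num)
  refine ⟨by rw [sup_deg_left h hvs, h1], fun w hw => ?_⟩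
  have hPw : P.Adj v w := by
    rcases (SimpleGraph.sup_adj _ _ _ _).1 hw with h' | h'
    · exact h'
    · exact absurd (Q.mem_support.2 ⟨w, h'⟩) (fun hq => (Set.disjoint_left.1 h) hvs hq)
  have hws : w ∈ P.support := P.mem_support.2 ⟨v, hPw.symm⟩
  rw [sup_deg_left h hws]
  exact h2 w hPw

lemma K12_sup_left (h : Disjoint P.support Q.support) {v : V}
    (hv : IsK12Comp P v) : IsK12Comp (P ⊔ Q) v := by
  obtain ⟨c, a, b, hab, hca, hcb, h2, h1a, h1b, hor⟩ := hv
  have hcs : c ∈ P.support := P.mem_support.2 ⟨a, hca⟩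
  have has : a ∈ P.support := P.mem_support.2 ⟨c, hca.symm⟩
  have hbs : b ∈ P.support := P.mem_support.2 ⟨c, hcb.symm⟩
  exact ⟨c, a, b, hab, Or.inl hca, Or.inl hcb, by rw [sup_deg_left h hcs]; exact h2,
    by rw [sup_deg_left h has]; exact h1a, by rw [sup_deg_left h hbs]; exact h1b, hor⟩

lemma class_sup_left (h : Disjoint P.support Q.support) {v : V}
    (hv : IsK11Comp P v ∨ IsK12Comp P v) :
    IsK11Comp (P ⊔ Q) v ∨ IsK12Comp (P ⊔ Q) v := by
  rcases hv with h1 | h1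
  · exact Or.inl (K11_sup_left h h1)
  · exact Or.inr (K12_sup_left h h1)

lemma class_sup_right (h : Disjoint P.support Q.support) {v : V}
    (hv : IsK11Comp Q v ∨ IsK12Comp Q v) :
    IsK11Comp (P ⊔ Q) v ∨ IsK12Comp (P ⊔ Q) v := by
  rw [sup_comm]
  exact class_sup_left h.symm hv

/-- combining two vertex-disjoint partial factors -/
lemma combine {G : SimpleGraph V} {B C : Finset V} (hPG : P ≤ G) (hQG : Q ≤ G)
    (hPs : ∀ z ∈ P.support, z ∈ B) (hQs : ∀ z ∈ Q.support, z ∈ C)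
    (hBC : Disjoint B C)
    (hPc : ∀ x ∈ B, IsK11Comp P x ∨ IsK12Comp P x)
    (hQc : ∀ x ∈ C, IsK11Comp Q x ∨ IsK12Comp Q x) :
    P ⊔ Q ≤ G ∧ (∀ z ∈ (P ⊔ Q).support, z ∈ B ∪ C) ∧
      (∀ x ∈ B ∪ C, IsK11Comp (P ⊔ Q) x ∨ IsK12Comp (P ⊔ Q) x) := by
  have hd : Disjoint P.support Q.support := by
    rw [Set.disjoint_left]
    intro z hz hz'
    exact (Finset.disjoint_left.1 hBC) (hPs z hz) (hQs z hz')
  refine ⟨sup_le hPG hQG, ?_, ?_⟩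
  · intro z hz
    obtain ⟨w, hw⟩ := hz
    rcases (SimpleGraph.sup_adj _ _ _ _).1 hw with h' | h'
    · exact Finset.mem_union_left _ (hPs z (P.mem_support.2 ⟨w, h'⟩))
    · exact Finset.mem_union_right _ (hQs z (Q.mem_support.2 ⟨w, h'⟩))
  · intro x hx
    rcases Finset.mem_union.1 hx with h' | h'
    · exact class_sup_left hd (hPc x h')
    · exact class_sup_right hd (hQc x h')

end supTransfer

/-- packaged stars construction -/
lemma starsCover {G : SimpleGraph V} {m : V → V} {I W : Finset V}
    (h1 : ∀ x ∈ I, G.Adj x (m x)) (h2 : ∀ x ∈ I, m x ∈ W)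
    (h3 : Disjoint I W) (h4 : ∀ c, (fib m I c).card ≤ 2)
    (h5 : ∀ c ∈ W, (fib m I c).Nonempty) :
    stars m I ≤ G ∧ (∀ z ∈ (stars m I).support, z ∈ W ∪ I) ∧
      (∀ x ∈ W ∪ I, IsK11Comp (stars m I) x ∨ IsK12Comp (stars m I) x) := by
  have hadj : ∀ x ∈ I, x ≠ m x := fun x hx => (h1 x hx).ne
  have hd : ∀ x ∈ I, m x ∉ I := fun x hx hmem =>
    (Finset.disjoint_left.1 h3) hmem (h2 x hx)
  refine ⟨stars_le h1, ?_, ?_⟩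
  · intro z hz
    rcases stars_support hz with h | ⟨x, hx, hmx⟩
    · exact Finset.mem_union_right _ h
    · exact Finset.mem_union_left _ (hmx ▸ h2 x hx)
  · intro x hx
    rcases Finset.mem_union.1 hx with h | h
    · obtain ⟨y, hy⟩ := h5 x h
      obtain ⟨hyI, hmy⟩ := Finset.mem_filter.1 hy
      exact stars_class hadj hd h4 x (Or.inr ⟨y, hyI, hmy⟩)
    · exact stars_class hadj hd h4 x (Or.inl h)

end SCF13
end C3

section C4
open scoped Classical
set_option linter.unusedSectionVars false
set_option linter.unusedVariables false

namespace SCF13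
variable {V : Type*} [Fintype V]

section counting
variable {G F : SimpleGraph V}

lemma deg12 (hcl : ∀ v, IsK11Comp F v ∨ IsK12Comp F v ∨ IsCycleComp F v) (v : V) :
    deg F v = 1 ∨ deg F v = 2 := by
  rcases hcl v with h | h | h
  · exact Or.inl h.1
  · obtain ⟨c, a, b, hab, hca, hcb, h2, h1a, h1b, hor⟩ := h
    rcases hor with rfl | rfl | rfl
    · exact Or.inr h2
    · exact Or.inl h1a
    · exact Or.inl h1b
  · exact Or.inr (h v (SimpleGraph.Reachable.refl v))

noncomputable def nb (F : SimpleGraph V) (x : V) : Finset V := (F.neighborSet x).toFinset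

lemma mem_nb {F : SimpleGraph V} {x y : V} : y ∈ nb F x ↔ F.Adj x y := by simp [nb]

lemma nb_card (F : SimpleGraph V) (x : V) : (nb F x).card = deg F x :=
  (Set.ncard_eq_toFinset_card' _).symm

lemma pair_count (I S : Finset V) :
    ∑ x ∈ I, (S.filter (fun s => F.Adj x s)).card
      = ∑ s ∈ S, (I.filter (fun x => F.Adj x s)).card := by
  simp_rw [Finset.card_filter]
  exact Finset.sum_comm

lemma count_lower {S : Finset V} (hFG : F ≤ G)
    {x : V} (hx : x ∈ isoSet G Finset.univ S) :
    (S.filter (fun s => F.Adj x s)).card = deg F x := by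
  obtain ⟨⟨_, hxS⟩, hiso⟩ := mem_isoSet.1 hx
  have h : S.filter (fun s => F.Adj x s) = nb F x := by
    ext w; simp only [Finset.mem_filter, mem_nb]
    exact ⟨fun h => h.2, fun h => ⟨hiso w (hFG h) (Finset.mem_univ w), h⟩⟩
  rw [h, nb_card]

lemma count_upper {I : Finset V} (s : V) :
    (I.filter (fun x => F.Adj x s)).card ≤ deg F s := by
  calc (I.filter (fun x => F.Adj x s)).card ≤ (nb F s).card := by
        apply Finset.card_le_card
        intro x hxm
        exact mem_nb.2 ((Finset.mem_filter.1 hxm).2.symm)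
    _ = deg F s := nb_card F s

/-- A classified factor forces `iso(G-S) ≤ 2|S|`. -/
lemma factor_iso_bound (hFG : F ≤ G) (hdeg : ∀ x, deg F x = 1 ∨ deg F x = 2)
    (S : Finset V) : (isoSet G Finset.univ S).card ≤ 2 * S.card := by
  set I := isoSet G Finset.univ S with hI
  have h1 : I.card ≤ ∑ x ∈ I, (S.filter (fun s => F.Adj x s)).card := by
    rw [Finset.card_eq_sum_ones I]
    apply Finset.sum_le_sum
    intro x hx
    rw [count_lower hFG hx]
    rcases hdeg x with h | h <;> omega
  have h2 : ∑ s ∈ S, (I.filter (fun x => F.Adj x s)).card ≤ ∑ _s ∈ S, 2 := by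
    apply Finset.sum_le_sum
    intro s hs
    have := count_upper (F := F) (I := I) s
    rcases hdeg s with h | h <;> omega
  calc I.card ≤ _ := h1
    _ = _ := pair_count I S
    _ ≤ ∑ _s ∈ S, 2 := h2
    _ = 2 * S.card := by rw [Finset.sum_const, smul_eq_mul, mul_comm]

/-- easy direction core: a classified factor containing edge `uv` with `u,v ∈ S`
contradicts `iso(G-S) ≥ 2|S| - 2`. -/
lemma factor_edge_contra (hFG : F ≤ G)
    (hcl : ∀ v, IsK11Comp F v ∨ IsK12Comp F v ∨ IsCycleComp F v)
    {u v : V} (huv : F.Adj u v) {S : Finset V} (hu : u ∈ S) (hv : v ∈ S)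
    (hlow : 2 * (S.card : ℤ) - 2 ≤ ((isoSet G Finset.univ S).card : ℤ)) : False := by
  have hdeg := deg12 hcl
  set I := isoSet G Finset.univ S with hIdef
  have hune : u ≠ v := huv.ne
  set t : V → ℕ := fun s => (I.filter (fun x => F.Adj x s)).card with htdef
  -- sum splitting
  have hvS : v ∈ S.erase u := Finset.mem_erase.2 ⟨fun h => hune h.symm, hv⟩
  have hsplit : ∑ s ∈ S, t s = t u + (t v + ∑ s ∈ (S.erase u).erase v, t s) := by
    rw [Finset.add_sum_erase _ t hvS, Finset.add_sum_erase _ t hu]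
  have hrest : ∑ s ∈ (S.erase u).erase v, t s ≤ 2 * (S.card - 2) := by
    have hstep : ∑ s ∈ (S.erase u).erase v, t s ≤ ∑ _s ∈ (S.erase u).erase v, 2 := by
      apply Finset.sum_le_sum
      intro s hs
      have h1 := count_upper (F := F) (I := I) s
      have h2 : t s = (I.filter (fun x => F.Adj x s)).card := rfl
      rcases hdeg s with h | h <;> omega
    have hcc : ((S.erase u).erase v).card = S.card - 1 - 1 := by
      rw [Finset.card_erase_of_mem hvS, Finset.card_erase_of_mem hu]
    have hS2 : 2 ≤ S.card := Finset.one_lt_card.2 ⟨u, hu, v, hv, hune⟩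
    rw [Finset.sum_const, smul_eq_mul, hcc] at hstep
    omega
  -- u, v terms are bounded by deg - 1
  have hterm : ∀ a b : V, a ∈ S → b ∈ S → F.Adj a b → t a + 1 ≤ deg F a := by
    intro a b haS hbS hab
    have hsub : I.filter (fun x => F.Adj x a) ⊆ (nb F a).erase b := by
      intro x hxm
      obtain ⟨hxI, hxa⟩ := Finset.mem_filter.1 hxm
      have hxS : x ∉ S := (mem_isoSet.1 hxI).1.2
      refine Finset.mem_erase.2 ⟨fun h => hxS (h ▸ hbS), mem_nb.2 hxa.symm⟩
    have hbnb : b ∈ nb F a := mem_nb.2 hab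
    have hcc := Finset.card_le_card hsub
    rw [Finset.card_erase_of_mem hbnb, nb_card] at hcc
    have hta : t a = (I.filter (fun x => F.Adj x a)).card := rfl
    have hd1 : 1 ≤ deg F a := by rcases hdeg a with h | h <;> omega
    omega
  have htu := hterm u v hu hv huv
  have htv := hterm v u hv hu huv.symm
  -- left side
  have hL : ∑ x ∈ I, (S.filter (fun s => F.Adj x s)).card = ∑ x ∈ I, deg F x := by
    apply Finset.sum_congr rfl
    intro x hx
    exact count_lower hFG hx
  have hLl : I.card ≤ ∑ x ∈ I, deg F x := by
    rw [Finset.card_eq_sum_ones I]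
    apply Finset.sum_le_sum
    intro x hx
    rcases hdeg x with h | h <;> omega
  have hPC : ∑ x ∈ I, deg F x = ∑ s ∈ S, t s := by rw [← hL]; exact pair_count I S
  -- |S| ≥ 2
  have hS2 : 2 ≤ S.card := Finset.one_lt_card.2 ⟨u, hu, v, hv, hune⟩
  have hdu2 : deg F u ≤ 2 := by rcases hdeg u with h | h <;> omega
  have hdv2 : deg F v ≤ 2 := by rcases hdeg v with h | h <;> omega
  have hIlow : 2 * S.card - 2 ≤ I.card := by
    have : (2 * S.card - 2 : ℤ) ≤ I.card := by exact_mod_cast hlow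
    omega
  -- tightness
  have hdegu : deg F u = 2 := by omega
  have hdegv : deg F v = 2 := by omega
  have htu1 : t u = 1 := by omega
  have hsumI : ∑ x ∈ I, deg F x = I.card := by omega
  -- get the pendant neighbor of u
  have : (I.filter (fun x => F.Adj x u)).Nonempty := by
    rw [← Finset.card_pos]
    have hh : t u = (I.filter (fun x => F.Adj x u)).card := rfl
    omega
  obtain ⟨x, hxm⟩ := this
  obtain ⟨hxI, hxu⟩ := Finset.mem_filter.1 hxm
  have hxdeg : deg F x = 1 := by
    by_contra hne
    have hx2 : deg F x = 2 := (hdeg x).resolve_left hne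
    have : ∑ x ∈ I, (1 : ℕ) < ∑ x ∈ I, deg F x := by
      apply Finset.sum_lt_sum
      · intro i hi; rcases hdeg i with h | h <;> omega
      · exact ⟨x, hxI, by omega⟩
    rw [Finset.sum_const, smul_eq_mul, mul_one] at this
    omega
  have hxS : x ∉ S := (mem_isoSet.1 hxI).1.2
  have hxv : x ≠ v := fun h => hxS (h ▸ hv)
  -- classification of u gives the contradiction
  rcases hcl u with h | h | h
  · have := h.1
    omega
  · obtain ⟨c, a, b, hab, hca, hcb, h2, h1a, h1b, hor⟩ := h
    rcases hor with rfl | rfl | rfl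
    · -- u = c
      have hpair : ({a, b} : Set V) ⊆ F.neighborSet u := by
        intro z hz
        rcases hz with rfl | hz
        · exact hca
        · rw [Set.mem_singleton_iff] at hz; subst hz; exact hcb
      have hpc : ({a, b} : Set V).ncard = 2 := Set.ncard_pair hab
      have heq : ({a, b} : Set V) = F.neighborSet u := by
        refine Set.eq_of_subset_of_ncard_le hpair ?_ (Set.toFinite _)
        rw [hpc]
        exact le_of_eq hdegu
      have hvmem : v ∈ F.neighborSet u := huv
      rw [← heq] at hvmem
      rcases hvmem with rfl | hz
      · omega
      · rw [Set.mem_singleton_iff] at hz; subst hz; omega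
    · omega
    · omega
  · have := h x (SimpleGraph.Adj.reachable hxu.symm)
    omega

end counting
end SCF13
end C4

section C5
open scoped Classical
set_option linter.unusedSectionVars false
set_option linter.unusedVariables false

namespace SCF13
variable {V : Type*} [Fintype V]

/-- capacity-2 Hall: if every subset `s` of `I` has `|s| ≤ 2|N(s)|` then there is an
assignment `m` of each element of `I` to one of its allowed targets with fibers ≤ 2. -/
lemma hall2 {I : Finset V} (N : V → Finset V)
    (hcond : ∀ s ⊆ I, s.card ≤ 2 * (s.biUnion N).card) :
    ∃ m : V → V, (∀ x ∈ I, m x ∈ N x) ∧ ∀ c, (fib m I c).card ≤ 2 := by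
  set t : ↥I → Finset (V × Fin 2) := fun x => (N x.1) ×ˢ (Finset.univ : Finset (Fin 2))
    with ht
  have hH : ∀ s : Finset ↥I, s.card ≤ (s.biUnion t).card := by
    intro s
    have himg : (s.image Subtype.val).card = s.card :=
      Finset.card_image_of_injective _ Subtype.val_injective
    have hbi : s.biUnion t
        = ((s.image Subtype.val).biUnion N) ×ˢ (Finset.univ : Finset (Fin 2)) := by
      ext p
      simp only [Finset.mem_biUnion, Finset.mem_product, Finset.mem_image, ht,
        Finset.mem_univ, and_true]
      constructor
      · rintro ⟨x, hx, hp⟩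
        exact ⟨x.1, ⟨x, hx, rfl⟩, hp⟩
      · rintro ⟨a, ⟨x, hx, rfl⟩, hp⟩
        exact ⟨x, hx, hp⟩
    have hc := hcond (s.image Subtype.val)
      (by intro a ha; obtain ⟨x, _, rfl⟩ := Finset.mem_image.1 ha; exact x.2)
    rw [hbi, Finset.card_product]
    simp only [Finset.card_univ, Fintype.card_fin] at *
    omega
  obtain ⟨f, hfinj, hft⟩ := (Finset.all_card_le_biUnion_card_iff_exists_injective t).1 hH
  set m : V → V := fun v => if h : v ∈ I then (f ⟨v, h⟩).1 else v with hm
  have hm1 : ∀ (x : V) (hx : x ∈ I), m x = (f ⟨x, hx⟩).1 := by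
    intro x hx; simp [hm, dif_pos hx]
  refine ⟨m, ?_, ?_⟩
  · intro x hx
    rw [hm1 x hx]
    exact (Finset.mem_product.1 (hft ⟨x, hx⟩)).1
  · intro c
    have h2 : (Finset.univ : Finset (Fin 2)).card = 2 := by simp
    rw [← h2]
    apply Finset.card_le_card_of_injOn
      (fun v => if h : v ∈ I then (f ⟨v, h⟩).2 else 0)
    · intro a _; exact Finset.mem_univ _
    · intro x hx y hy hxy
      obtain ⟨hxI, hxc⟩ := Finset.mem_filter.1 hx
      obtain ⟨hyI, hyc⟩ := Finset.mem_filter.1 hy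
      rw [hm1 x hxI] at hxc
      rw [hm1 y hyI] at hyc
      simp only [dif_pos hxI, dif_pos hyI] at hxy
      have : f ⟨x, hxI⟩ = f ⟨y, hyI⟩ := Prod.ext (hxc.trans hyc.symm) hxy
      exact congrArg Subtype.val (hfinj this)

end SCF13
end C5

section C6
open scoped Classical
set_option linter.unusedSectionVars false
set_option linter.unusedVariables false

namespace SCF13
variable {V : Type*} [Fintype V]

/-- Recursion bound: removing `W` together with its isolated set preserves the condition. -/
lemma recur_bound {G : SimpleGraph V} {A W : Finset V} (hWA : W ⊆ A)
    (hmax : ∀ T ⊆ A, W ⊆ T →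
      ((isoSet G A T).card : ℤ) - 2 * T.card ≤ ((isoSet G A W).card : ℤ) - 2 * W.card) :
    ∀ S' ⊆ A \ (W ∪ isoSet G A W),
      (isoSet G (A \ (W ∪ isoSet G A W)) S').card ≤ 2 * S'.card := by
  intro S' hS'
  set I := isoSet G A W with hI
  set A' := A \ (W ∪ I) with hA'
  have hdisjSW : Disjoint S' W := by
    rw [Finset.disjoint_left]
    intro a ha haW
    have := hS' ha
    rw [hA', Finset.mem_sdiff] at this
    exact this.2 (Finset.mem_union_left _ haW)
  have hsub : I ∪ isoSet G A' S' ⊆ isoSet G A (S' ∪ W) := by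
    intro x hx
    rcases Finset.mem_union.1 hx with hxI | hxA'
    · obtain ⟨⟨hxA, hxW⟩, hcl⟩ := mem_isoSet.1 hxI
      refine mem_isoSet.2 ⟨⟨hxA, ?_⟩, ?_⟩
      · intro hmem
        rcases Finset.mem_union.1 hmem with h | h
        · have hmem2 := hS' h
          rw [hA', Finset.mem_sdiff] at hmem2
          exact hmem2.2 (Finset.mem_union_right _ hxI)
        · exact hxW h
      · intro w hadj hwA
        exact Finset.mem_union_right _ (hcl w hadj hwA)
    · obtain ⟨⟨hxA', hxS'⟩, hcl⟩ := mem_isoSet.1 hxA'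
      rw [hA', Finset.mem_sdiff] at hxA'
      obtain ⟨hxA, hxWI⟩ := hxA'
      refine mem_isoSet.2 ⟨⟨hxA, ?_⟩, ?_⟩
      · intro hmem
        rcases Finset.mem_union.1 hmem with h | h
        · exact hxS' h
        · exact hxWI (Finset.mem_union_left _ h)
      · intro w hadj hwA
        by_cases hwW : w ∈ W
        · exact Finset.mem_union_right _ hwW
        by_cases hwI : w ∈ I
        · -- impossible: x would be in W
          obtain ⟨⟨_, _⟩, hclw⟩ := mem_isoSet.1 hwI
          have : x ∈ W := hclw x hadj.symm hxA
          exact absurd this (fun h => hxWI (Finset.mem_union_left _ h))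
        · -- w ∈ A'
          have hwA' : w ∈ A' := by
            rw [hA', Finset.mem_sdiff]
            exact ⟨hwA, fun h => (Finset.mem_union.1 h).elim hwW hwI⟩
          exact Finset.mem_union_left _ (hcl w hadj hwA')
  have hdisj : Disjoint I (isoSet G A' S') := by
    rw [Finset.disjoint_left]
    intro a haI haiso
    have := isoSet_subset haiso
    rw [hA', Finset.mem_sdiff] at this
    exact this.2 (Finset.mem_union_right _ haI)
  have hcard : I.card + (isoSet G A' S').card ≤ (isoSet G A (S' ∪ W)).card := by
    rw [← Finset.card_union_of_disjoint hdisj]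
    exact Finset.card_le_card hsub
  have hSWA : S' ∪ W ⊆ A := by
    apply Finset.union_subset _ hWA
    intro a ha
    exact (Finset.mem_sdiff.1 (hS' ha)).1
  have hb := hmax (S' ∪ W) hSWA Finset.subset_union_right
  have hcc : (S' ∪ W).card = S'.card + W.card := Finset.card_union_of_disjoint hdisjSW
  rw [hcc] at hb
  have h1 : (I.card : ℤ) + (isoSet G A' S').card ≤ (isoSet G A (S' ∪ W)).card := by
    exact_mod_cast hcard
  push_cast at hb ⊢
  omega

/-- Core: given a maximal deficiency set `W` (with mild hypotheses), the part `W ∪ I`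
can be covered by disjoint `K11`/`K12` components of `G`. -/
lemma core_piece {G : SimpleGraph V} {A W : Finset V}
    (hcond : ∀ S ⊆ A, (isoSet G A S).card ≤ 2 * S.card)
    (hWA : W ⊆ A) (hWne : W.Nonempty)
    (hPhi3 : -3 ≤ ((isoSet G A W).card : ℤ) - 2 * W.card)
    (hErase : ∀ c ∈ W, (W.erase c).Nonempty →
        ((isoSet G A (W.erase c)).card : ℤ) - 2 * (W.erase c).card
          ≤ ((isoSet G A W).card : ℤ) - 2 * W.card + 1)
    (hSing : W.card = 1 → -1 ≤ ((isoSet G A W).card : ℤ) - 2 * W.card) :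
    ∃ Fp : SimpleGraph V, Fp ≤ G ∧
      (∀ z ∈ Fp.support, z ∈ W ∪ isoSet G A W) ∧
      (∀ x ∈ W ∪ isoSet G A W, IsK11Comp Fp x ∨ IsK12Comp Fp x) := by
  set I := isoSet G A W with hI
  have hIA : I ⊆ A := isoSet_subset
  have hIW : Disjoint I W := by
    rw [Finset.disjoint_left]
    intro a ha haW
    exact (mem_isoSet.1 ha).1.2 haW
  -- Hall condition
  set N : V → Finset V := fun x => W.filter (fun w => G.Adj x w) with hN
  have hHall : ∀ s ⊆ I, s.card ≤ 2 * (s.biUnion N).card := by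
    intro s hs
    set T := s.biUnion N with hT
    have hTW : T ⊆ W := by
      intro w hw
      obtain ⟨x, hx, hxw⟩ := Finset.mem_biUnion.1 hw
      exact (Finset.mem_filter.1 hxw).1
    have hsub : s ⊆ isoSet G A T := by
      intro x hx
      obtain ⟨⟨hxA, hxW⟩, hcl⟩ := mem_isoSet.1 (hs hx)
      refine mem_isoSet.2 ⟨⟨hxA, fun hxT => hxW (hTW hxT)⟩, ?_⟩
      intro w hadj hwA
      exact Finset.mem_biUnion.2 ⟨x, hx, Finset.mem_filter.2 ⟨hcl w hadj hwA, hadj⟩⟩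
    calc s.card ≤ (isoSet G A T).card := Finset.card_le_card hsub
      _ ≤ 2 * T.card := hcond T (hTW.trans hWA)
  obtain ⟨m, hmN, hmfib⟩ := hall2 N hHall
  have hmW : ∀ x ∈ I, m x ∈ W := fun x hx => (Finset.mem_filter.1 (hmN x hx)).1
  have hmadj : ∀ x ∈ I, G.Adj x (m x) := fun x hx => (Finset.mem_filter.1 (hmN x hx)).2
  have hfibsum : ∑ c ∈ W, (fib m I c).card = I.card :=
    (Finset.card_eq_sum_card_fiberwise hmW).symm
  by_cases hall0 : ∀ c ∈ W, (fib m I c).Nonempty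
  · obtain ⟨h1, h2, h3⟩ := starsCover hmadj hmW hIW hmfib hall0
    exact ⟨stars m I, h1, h2, h3⟩
  · push_neg at hall0
    obtain ⟨c, hcW, hcne⟩ := hall0
    have hc0 : fib m I c = ∅ := hcne
    -- at most one leafless center
    have honly : ∀ d ∈ W, d ≠ c → (fib m I d).Nonempty := by
      intro d hd hdc
      by_contra hdne
      have hd0 : fib m I d = ∅ := Finset.not_nonempty_iff_eq_empty.1 hdne
      have hdW' : d ∈ W.erase c := Finset.mem_erase.2 ⟨hdc, hd⟩
      have hsum1 : ∑ c' ∈ W, (fib m I c').card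
          = (fib m I c).card + ∑ c' ∈ W.erase c, (fib m I c').card :=
        (Finset.add_sum_erase _ _ hcW).symm
      have hsum2 : ∑ c' ∈ W.erase c, (fib m I c').card
          = (fib m I d).card + ∑ c' ∈ (W.erase c).erase d, (fib m I c').card :=
        (Finset.add_sum_erase _ _ hdW').symm
      have hsum3 : ∑ c' ∈ (W.erase c).erase d, (fib m I c').card
          ≤ ∑ _c' ∈ (W.erase c).erase d, 2 :=
        Finset.sum_le_sum (fun i _ => hmfib i)
      rw [Finset.sum_const, smul_eq_mul] at hsum3
      have hcard2 : ((W.erase c).erase d).card = W.card - 1 - 1 := by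
        rw [Finset.card_erase_of_mem hdW', Finset.card_erase_of_mem hcW]
      have hWc : 1 ≤ W.card := Finset.card_pos.2 hWne
      have hc0' : (fib m I c).card = 0 := by rw [hc0]; rfl
      have hd0' : (fib m I d).card = 0 := by rw [hd0]; rfl
      -- I.card ≤ 2*(W.card - 2), contradicting hPhi3
      have hW2 : 2 ≤ W.card := by
        by_contra h
        push_neg at h
        have h1 : W.card ≤ 1 := by omega
        exact hdc (Finset.card_le_one.1 h1 d hd c hcW)
      have : (I.card : ℤ) ≤ 2 * ((W.card : ℤ) - 2) := by
        have : I.card ≤ 2 * (W.card - 1 - 1) := by omega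
        have hc := this
        push_cast
        omega
      omega
    -- c has a neighbour in I
    have hcy : ∃ y ∈ I, G.Adj c y := by
      by_contra hno
      push_neg at hno
      have hsub : I ⊆ isoSet G A (W.erase c) := by
        intro x hx
        obtain ⟨⟨hxA, hxW⟩, hcl⟩ := mem_isoSet.1 hx
        refine mem_isoSet.2 ⟨⟨hxA, fun h => hxW (Finset.mem_of_mem_erase h)⟩, ?_⟩
        intro w hadj hwA
        have hwW := hcl w hadj hwA
        refine Finset.mem_erase.2 ⟨?_, hwW⟩
        rintro rfl
        exact hno x hx hadj.symm
      by_cases hen : (W.erase c).Nonempty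
      · have h1 := hErase c hcW hen
        have h2 : I.card ≤ (isoSet G A (W.erase c)).card := Finset.card_le_card hsub
        have hce : (W.erase c).card = W.card - 1 := Finset.card_erase_of_mem hcW
        have hWc : 1 ≤ W.card := Finset.card_pos.2 hWne
        rw [hce] at h1
        have h2' : (I.card : ℤ) ≤ (isoSet G A (W.erase c)).card := by exact_mod_cast h2
        have hcast : ((W.card - 1 : ℕ) : ℤ) = (W.card : ℤ) - 1 := by
          push_cast [hWc]; omega
        rw [hcast] at h1
        omega
      · have hW1 : W.card = 1 := by
          rw [Finset.not_nonempty_iff_eq_empty] at hen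
          have := Finset.card_erase_of_mem hcW
          rw [hen] at this
          simp at this
          have hWc : 1 ≤ W.card := Finset.card_pos.2 hWne
          omega
        have hWsing : W = {c} := by
          obtain ⟨w, hw⟩ := Finset.card_eq_one.1 hW1
          rw [hw] at hcW ⊢
          simp at hcW
          rw [hcW]
        have hI0 : I.card = 0 := by
          rw [← hfibsum, hWsing, Finset.sum_singleton, hc0]
          rfl
        have := hSing hW1
        rw [hI0, hW1] at this
        norm_num at this
    obtain ⟨y, hyI, hcyadj⟩ := hcy
    have hc'W : m y ∈ W := hmW y hyI
    have hyfib : y ∈ fib m I (m y) := Finset.mem_filter.2 ⟨hyI, rfl⟩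
    have hc'ne : m y ≠ c := by
      intro h
      have : y ∈ fib m I c := Finset.mem_filter.2 ⟨hyI, h⟩
      rw [hc0] at this
      exact absurd this (Finset.notMem_empty y)
    have hyW : y ∉ W := (Finset.disjoint_left.1 hIW) hyI
    by_cases h2fib : (fib m I (m y)).card = 2
    · -- move `y` to `c`
      set m' := Function.update m y c with hm'
      have hm'y : m' y = c := Function.update_self y c m
      have hm'x : ∀ x ≠ y, m' x = m x := fun x hx => Function.update_of_ne hx c m
      have hm'W : ∀ x ∈ I, m' x ∈ W := by
        intro x hx
        by_cases hxy : x = y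
        · subst hxy; rw [hm'y]; exact hcW
        · rw [hm'x x hxy]; exact hmW x hx
      have hm'adj : ∀ x ∈ I, G.Adj x (m' x) := by
        intro x hx
        by_cases hxy : x = y
        · subst hxy; rw [hm'y]; exact hcyadj.symm
        · rw [hm'x x hxy]; exact hmadj x hx
      have hfib'c : fib m' I c ⊆ {y} := by
        intro x hx
        obtain ⟨hxI, hxc⟩ := Finset.mem_filter.1 hx
        by_cases hxy : x = y
        · simp [hxy]
        · rw [hm'x x hxy] at hxc
          have : x ∈ fib m I c := Finset.mem_filter.2 ⟨hxI, hxc⟩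
          rw [hc0] at this
          exact absurd this (Finset.notMem_empty x)
      have hfib'sub : ∀ d, d ≠ c → fib m' I d ⊆ fib m I d := by
        intro d hd x hx
        obtain ⟨hxI, hxd⟩ := Finset.mem_filter.1 hx
        by_cases hxy : x = y
        · subst hxy; rw [hm'y] at hxd; exact absurd hxd.symm hd
        · rw [hm'x x hxy] at hxd; exact Finset.mem_filter.2 ⟨hxI, hxd⟩
      have hm'fib : ∀ d, (fib m' I d).card ≤ 2 := by
        intro d
        by_cases hd : d = c
        · rw [hd]
          calc (fib m' I c).card ≤ ({y} : Finset V).card := Finset.card_le_card hfib'c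
            _ ≤ 2 := by simp
        · exact le_trans (Finset.card_le_card (hfib'sub d hd)) (hmfib d)
      have hm'ne : ∀ d ∈ W, (fib m' I d).Nonempty := by
        intro d hd
        by_cases hdc : d = c
        · subst hdc
          exact ⟨y, Finset.mem_filter.2 ⟨hyI, hm'y⟩⟩
        by_cases hdc' : d = m y
        · rw [hdc']
          obtain ⟨x, hxf, hxy⟩ :=
            Finset.exists_mem_ne (s := fib m I (m y)) (by omega) y
          obtain ⟨hxI, hxd⟩ := Finset.mem_filter.1 hxf
          exact ⟨x, Finset.mem_filter.2 ⟨hxI, by rw [hm'x x hxy]; exact hxd⟩⟩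
        · obtain ⟨x, hxf⟩ := honly d hd hdc
          obtain ⟨hxI, hxd⟩ := Finset.mem_filter.1 hxf
          have hxy : x ≠ y := by
            rintro rfl
            exact hdc' hxd.symm
          exact ⟨x, Finset.mem_filter.2 ⟨hxI, by rw [hm'x x hxy]; exact hxd⟩⟩
      obtain ⟨h1, h2, h3⟩ := starsCover hm'adj hm'W hIW hm'fib hm'ne
      exact ⟨stars m' I, h1, h2, h3⟩
    · -- P3 route: fib c' = {y}
      have h1fib : fib m I (m y) = {y} := by
        have hle := hmfib (m y)
        have hpos : 0 < (fib m I (m y)).card := Finset.card_pos.2 ⟨y, hyfib⟩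
        have hone : (fib m I (m y)).card = 1 := by omega
        obtain ⟨w, hw⟩ := Finset.card_eq_one.1 hone
        rw [hw] at hyfib ⊢
        simp at hyfib
        rw [hyfib]
      -- piece 1 : P3 with center y and leaves c, c'
      have hcadj : G.Adj c y := hcyadj
      have hc'adj : G.Adj (m y) y := (hmadj y hyI).symm
      have hP3 := starsCover (G := G) (m := fun _ => y) (I := {c, m y}) (W := {y})
        (by intro x hx
            rcases Finset.mem_insert.1 hx with rfl | hx
            · exact hcadj
            · rw [Finset.mem_singleton] at hx; subst hx; exact hc'adj)
        (by intro x hx; exact Finset.mem_singleton_self y)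
        (by rw [Finset.disjoint_left]
            intro a ha hay
            rw [Finset.mem_singleton] at hay
            subst hay
            rcases Finset.mem_insert.1 ha with h | h
            · exact hyW (h ▸ hcW)
            · rw [Finset.mem_singleton] at h; exact hyW (h ▸ hc'W))
        (by intro d
            calc (fib (fun _ => y) {c, m y} d).card ≤ ({c, m y} : Finset V).card :=
                  Finset.card_le_card (Finset.filter_subset _ _)
              _ ≤ 2 := Finset.card_insert_le _ _ |>.trans (by simp))
        (by intro d hd
            rw [Finset.mem_singleton] at hd
            subst hd
            exact ⟨c, Finset.mem_filter.2 ⟨Finset.mem_insert_self _ _, rfl⟩⟩)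
      -- piece 2 : remaining stars
      have hRest := starsCover (G := G) (m := m) (I := I.erase y) (W := W \ {c, m y})
        (by intro x hx; exact hmadj x (Finset.mem_of_mem_erase hx))
        (by intro x hx
            have hxI := Finset.mem_of_mem_erase hx
            have hxy := Finset.ne_of_mem_erase hx
            refine Finset.mem_sdiff.2 ⟨hmW x hxI, ?_⟩
            intro hmem
            rcases Finset.mem_insert.1 hmem with h | h
            · have : x ∈ fib m I c := Finset.mem_filter.2 ⟨hxI, h⟩
              rw [hc0] at this
              exact absurd this (Finset.notMem_empty x)
            · rw [Finset.mem_singleton] at h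
              have : x ∈ fib m I (m y) := Finset.mem_filter.2 ⟨hxI, h⟩
              rw [h1fib, Finset.mem_singleton] at this
              exact hxy this)
        (Disjoint.mono (Finset.erase_subset y I) Finset.sdiff_subset hIW)
        (by intro d
            exact le_trans (Finset.card_le_card (fun x hx => by
              obtain ⟨hxI, hxd⟩ := Finset.mem_filter.1 hx
              exact Finset.mem_filter.2 ⟨Finset.mem_of_mem_erase hxI, hxd⟩)) (hmfib d))
        (by intro d hd
            obtain ⟨hdW, hdnot⟩ := Finset.mem_sdiff.1 hd
            have hdc : d ≠ c := fun h => hdnot (h ▸ Finset.mem_insert_self _ _)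
            have hdc' : d ≠ m y := fun h => hdnot (by
              rw [h]; exact Finset.mem_insert_of_mem (Finset.mem_singleton_self _))
            obtain ⟨x, hxf⟩ := honly d hdW hdc
            obtain ⟨hxI, hxd⟩ := Finset.mem_filter.1 hxf
            have hxy : x ≠ y := by
              rintro rfl
              exact hdc' hxd.symm
            exact ⟨x, Finset.mem_filter.2
              ⟨Finset.mem_erase.2 ⟨hxy, hxI⟩, hxd⟩⟩)
      obtain ⟨hq1, hq2, hq3⟩ := hP3
      obtain ⟨hr1, hr2, hr3⟩ := hRest
      have hdisjBC : Disjoint ({y} ∪ {c, m y}) ((W \ {c, m y}) ∪ I.erase y) := by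
        rw [Finset.disjoint_left]
        intro a ha hb
        rcases Finset.mem_union.1 ha with h | h
        · rw [Finset.mem_singleton] at h
          subst h
          rcases Finset.mem_union.1 hb with h' | h'
          · exact hyW (Finset.mem_sdiff.1 h').1
          · exact (Finset.ne_of_mem_erase h') rfl
        · rcases Finset.mem_union.1 hb with h' | h'
          · exact (Finset.mem_sdiff.1 h').2 h
          · have haW : a ∈ W := by
              rcases Finset.mem_insert.1 h with rfl | hh
              · exact hcW
              · rw [Finset.mem_singleton] at hh; exact hh ▸ hc'W
            exact (Finset.disjoint_left.1 hIW) (Finset.mem_of_mem_erase h') haW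
      obtain ⟨hs1, hs2, hs3⟩ := combine hq1 hr1 hq2 hr2 hdisjBC hq3 hr3
      refine ⟨_, hs1, ?_, ?_⟩
      · intro z hz
        have := hs2 z hz
        rcases Finset.mem_union.1 this with h | h
        · rcases Finset.mem_union.1 h with h' | h'
          · rw [Finset.mem_singleton] at h'
            exact h' ▸ Finset.mem_union_right _ hyI
          · rcases Finset.mem_insert.1 h' with rfl | h''
            · exact Finset.mem_union_left _ hcW
            · rw [Finset.mem_singleton] at h''
              exact h'' ▸ Finset.mem_union_left _ hc'W
        · rcases Finset.mem_union.1 h with h' | h'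
          · exact Finset.mem_union_left _ (Finset.mem_sdiff.1 h').1
          · exact Finset.mem_union_right _ (Finset.mem_of_mem_erase h')
      · intro x hx
        apply hs3
        rcases Finset.mem_union.1 hx with hxW | hxI'
        · by_cases hxcc : x ∈ ({c, m y} : Finset V)
          · exact Finset.mem_union_left _ (Finset.mem_union_right _ hxcc)
          · exact Finset.mem_union_right _
              (Finset.mem_union_left _ (Finset.mem_sdiff.2 ⟨hxW, hxcc⟩))
        · by_cases hxy : x = y
          · subst hxy
            exact Finset.mem_union_left _
              (Finset.mem_union_left _ (Finset.mem_singleton_self _))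
          · exact Finset.mem_union_right _
              (Finset.mem_union_right _ (Finset.mem_erase.2 ⟨hxy, hxI'⟩))

end SCF13
end C6

section C7
open scoped Classical
set_option linter.unusedSectionVars false
set_option linter.unusedVariables false

namespace SCF13
variable {V : Type*} [Fintype V]

lemma ak_step {G : SimpleGraph V} {A R : Finset V} (hRA : R ⊆ A)
    {Fp : SimpleGraph V} (hFp1 : Fp ≤ G) (hFp2 : ∀ z ∈ Fp.support, z ∈ R)
    (hFp3 : ∀ x ∈ R, IsK11Comp Fp x ∨ IsK12Comp Fp x)
    (hIH : ∃ F' : SimpleGraph V, F' ≤ G ∧ (∀ z ∈ F'.support, z ∈ A \ R) ∧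
        (∀ x ∈ A \ R, IsK11Comp F' x ∨ IsK12Comp F' x)) :
    ∃ F : SimpleGraph V, F ≤ G ∧ (∀ z ∈ F.support, z ∈ A) ∧
      (∀ x ∈ A, IsK11Comp F x ∨ IsK12Comp F x) := by
  obtain ⟨F', h1, h2, h3⟩ := hIH
  have hdisj : Disjoint R (A \ R) := Finset.disjoint_sdiff
  obtain ⟨c1, c2, c3⟩ := combine hFp1 h1 hFp2 h2 hdisj hFp3 h3
  refine ⟨Fp ⊔ F', c1, ?_, ?_⟩
  · intro z hz
    rcases Finset.mem_union.1 (c2 z hz) with h | h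
    · exact hRA h
    · exact (Finset.mem_sdiff.1 h).1
  · intro x hx
    apply c3
    by_cases hxR : x ∈ R
    · exact Finset.mem_union_left _ hxR
    · exact Finset.mem_union_right _ (Finset.mem_sdiff.2 ⟨hx, hxR⟩)

lemma recur_bound_pair {G : SimpleGraph V} {A : Finset V} {p q : V}
    (hp : p ∈ A) (hq : q ∈ A) (hpq : p ≠ q)
    (hbound : ∀ T ⊆ A, 2 ≤ T.card → ((isoSet G A T).card : ℤ) - 2 * T.card ≤ -4) :
    ∀ S' ⊆ A \ ({p, q} : Finset V),
      (isoSet G (A \ ({p, q} : Finset V)) S').card ≤ 2 * S'.card := by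
  intro S' hS'
  have hpqA : ({p, q} : Finset V) ⊆ A := by
    intro x hx
    rcases Finset.mem_insert.1 hx with rfl | hx
    · exact hp
    · rw [Finset.mem_singleton] at hx; exact hx ▸ hq
  have hsub : isoSet G (A \ ({p, q} : Finset V)) S' ⊆ isoSet G A (S' ∪ {p, q}) := by
    intro x hx
    obtain ⟨⟨hxA', hxS'⟩, hcl⟩ := mem_isoSet.1 hx
    obtain ⟨hxA, hxpq⟩ := Finset.mem_sdiff.1 hxA'
    refine mem_isoSet.2 ⟨⟨hxA, ?_⟩, ?_⟩
    · intro hmem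
      rcases Finset.mem_union.1 hmem with h | h
      · exact hxS' h
      · exact hxpq h
    · intro w hadj hwA
      by_cases hwpq : w ∈ ({p, q} : Finset V)
      · exact Finset.mem_union_right _ hwpq
      · exact Finset.mem_union_left _
          (hcl w hadj (Finset.mem_sdiff.2 ⟨hwA, hwpq⟩))
  have hTA : S' ∪ {p, q} ⊆ A := by
    apply Finset.union_subset _ hpqA
    intro a ha
    exact (Finset.mem_sdiff.1 (hS' ha)).1
  have hT2 : 2 ≤ (S' ∪ {p, q}).card := by
    calc 2 = ({p, q} : Finset V).card := (Finset.card_pair hpq).symm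
      _ ≤ _ := Finset.card_le_card Finset.subset_union_right
  have hb := hbound _ hTA hT2
  have hTle : (S' ∪ {p, q}).card ≤ S'.card + 2 := by
    calc (S' ∪ {p, q}).card ≤ S'.card + ({p, q} : Finset V).card := Finset.card_union_le _ _
      _ = S'.card + 2 := by rw [Finset.card_pair hpq]
  have hle := Finset.card_le_card hsub
  have hle' : ((isoSet G (A \ ({p, q} : Finset V)) S').card : ℤ)
      ≤ (isoSet G A (S' ∪ {p, q})).card := by exact_mod_cast hle
  have hTle' : ((S' ∪ {p, q}).card : ℤ) ≤ (S'.card : ℤ) + 2 := by exact_mod_cast hTle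
  have : ((isoSet G (A \ ({p, q} : Finset V)) S').card : ℤ) ≤ 2 * S'.card := by
    nlinarith [hb, hle', hTle']
  exact_mod_cast this

/-- Amahashi–Kano type theorem: the isolated-vertex condition on `A` gives a
`{K11,K12}`-cover of `A` inside `G`. -/
theorem AK (G : SimpleGraph V) :
    ∀ (n : ℕ) (A : Finset V), A.card ≤ n →
      (∀ S ⊆ A, (isoSet G A S).card ≤ 2 * S.card) →
      ∃ F : SimpleGraph V, F ≤ G ∧ (∀ z ∈ F.support, z ∈ A) ∧
        (∀ x ∈ A, IsK11Comp F x ∨ IsK12Comp F x) := by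
  intro n
  induction n with
  | zero =>
    intro A hcard hcond
    have hA : A = ∅ := Finset.card_eq_zero.1 (by omega)
    refine ⟨⊥, bot_le, ?_, ?_⟩
    · intro z hz
      obtain ⟨w, hw⟩ := hz
      exact absurd hw (by simp)
    · intro x hx
      rw [hA] at hx
      exact absurd hx (Finset.notMem_empty x)
  | succ n ih =>
    intro A hcard hcond
    by_cases hA : A = ∅
    · refine ⟨⊥, bot_le, ?_, ?_⟩
      · intro z hz
        obtain ⟨w, hw⟩ := hz
        exact absurd hw (by simp)
      · intro x hx
        rw [hA] at hx
        exact absurd hx (Finset.notMem_empty x)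
    have hAne : A.Nonempty := Finset.nonempty_iff_ne_empty.2 hA
    have hnbr : ∀ a ∈ A, ∃ w ∈ A, G.Adj a w := by
      intro a ha
      by_contra hno
      push_neg at hno
      have hmem : a ∈ isoSet G A ∅ :=
        mem_isoSet.2 ⟨⟨ha, Finset.notMem_empty a⟩,
          fun w hw hwA => absurd hw (hno w hwA)⟩
      have h0 := hcond ∅ (Finset.empty_subset A)
      rw [Finset.card_empty, mul_zero] at h0
      have := Finset.card_pos.2 ⟨a, hmem⟩
      omega
    set Phi : Finset V → ℤ := fun T => ((isoSet G A T).card : ℤ) - 2 * T.card with hPhiDef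
    set key : Finset V → ℤ := fun T => Phi T * ((A.card : ℤ) + 1) + T.card with hkeyDef
    have hPhiEval : ∀ T, Phi T = ((isoSet G A T).card : ℤ) - 2 * T.card := fun T => rfl
    set cand := A.powerset.filter (fun T => T.Nonempty) with hcand
    have hmemcand : ∀ T, T ∈ cand ↔ T ⊆ A ∧ T.Nonempty := by
      intro T
      rw [hcand, Finset.mem_filter, Finset.mem_powerset]
    have hcandne : cand.Nonempty := by
      obtain ⟨a, ha⟩ := hAne
      exact ⟨{a}, (hmemcand {a}).2 ⟨Finset.singleton_subset_iff.2 ha,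
        ⟨a, Finset.mem_singleton_self a⟩⟩⟩
    obtain ⟨W, hWc, hWmax⟩ := Finset.exists_max_image cand key hcandne
    obtain ⟨hWA, hWne⟩ := (hmemcand W).1 hWc
    have hmaxPhi : ∀ T ⊆ A, T.Nonempty → Phi T ≤ Phi W := by
      intro T hTA hTne
      by_contra hgt
      push_neg at hgt
      have hkeyle := hWmax T ((hmemcand T).2 ⟨hTA, hTne⟩)
      have hcardsW : (W.card : ℤ) ≤ A.card := by exact_mod_cast Finset.card_le_card hWA
      have hcardsT : (0 : ℤ) ≤ T.card := by positivity
      have hK : (0 : ℤ) < (A.card : ℤ) + 1 := by positivity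
      have h1 : (1 : ℤ) ≤ Phi T - Phi W := by omega
      have h2 : (A.card : ℤ) + 1 ≤ (Phi T - Phi W) * ((A.card : ℤ) + 1) :=
        le_mul_of_one_le_left hK.le h1
      rw [sub_mul] at h2
      rw [hkeyDef] at hkeyle
      simp only at hkeyle
      linarith
    have hmaxCard : ∀ T ⊆ A, T.Nonempty → Phi T = Phi W → T.card ≤ W.card := by
      intro T hTA hTne hPhiEq
      have hkeyle := hWmax T ((hmemcand T).2 ⟨hTA, hTne⟩)
      rw [hkeyDef] at hkeyle
      simp only at hkeyle
      rw [hPhiEq] at hkeyle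
      have : (T.card : ℤ) ≤ W.card := by linarith
      exact_mod_cast this
    have hPhiW0 : Phi W ≤ 0 := by
      have h := hcond W hWA
      have h' : ((isoSet G A W).card : ℤ) ≤ 2 * W.card := by exact_mod_cast h
      rw [hPhiEval]
      omega
    have hPhiWm2 : -2 ≤ Phi W := by
      obtain ⟨a, ha⟩ := hAne
      have h1 : Phi {a} ≤ Phi W := hmaxPhi {a} (Finset.singleton_subset_iff.2 ha)
        ⟨a, Finset.mem_singleton_self a⟩
      have h2 : (0 : ℤ) ≤ ((isoSet G A {a}).card : ℤ) := by positivity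
      rw [hPhiEval {a}, Finset.card_singleton] at h1
      omega
    by_cases hguard : Phi W = -2 ∧ W.card = 1
    · -- FALLBACK branch
      have hstrict2 : ∀ T ⊆ A, 2 ≤ T.card → Phi T ≤ -3 := by
        intro T hTA hT2
        have hTne : T.Nonempty := Finset.card_pos.1 (by omega)
        have h1 := hmaxPhi T hTA hTne
        by_contra h
        push_neg at h
        have hEq : Phi T = Phi W := by omega
        have := hmaxCard T hTA hTne hEq
        omega
      have hA2 : 2 ≤ A.card := by
        by_contra h
        push_neg at h
        have hA1 : A.card = 1 := by
          have := Finset.card_pos.2 hAne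
          omega
        obtain ⟨a, ha⟩ := Finset.card_eq_one.1 hA1
        obtain ⟨w, hwA, hadj⟩ := hnbr a (by rw [ha]; exact Finset.mem_singleton_self a)
        rw [ha, Finset.mem_singleton] at hwA
        exact G.loopless.irrefl a (hwA ▸ hadj)
      set cand2 := A.powerset.filter (fun T => 2 ≤ T.card) with hcand2
      have hmemcand2 : ∀ T, T ∈ cand2 ↔ T ⊆ A ∧ 2 ≤ T.card := by
        intro T
        rw [hcand2, Finset.mem_filter, Finset.mem_powerset]
      have hcand2ne : cand2.Nonempty := by
        obtain ⟨a, ha, b, hb, hab⟩ := Finset.one_lt_card.1 hA2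
        refine ⟨{a, b}, (hmemcand2 {a, b}).2 ⟨?_, ?_⟩⟩
        · intro x hx
          rcases Finset.mem_insert.1 hx with rfl | hx
          · exact ha
          · rw [Finset.mem_singleton] at hx; exact hx ▸ hb
        · rw [Finset.card_pair hab]
      obtain ⟨W₂, hW₂c, hW₂max⟩ := Finset.exists_max_image cand2 Phi hcand2ne
      obtain ⟨hW₂A, hW₂2⟩ := (hmemcand2 W₂).1 hW₂c
      have hW₂ne : W₂.Nonempty := Finset.card_pos.1 (by omega)
      have hpsile : Phi W₂ ≤ -3 := hstrict2 W₂ hW₂A hW₂2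
      by_cases hpsi : Phi W₂ = -3
      · -- core with W₂
        obtain ⟨Fp, hFp1, hFp2, hFp3⟩ := core_piece hcond hW₂A hW₂ne
          (by rw [← hPhiEval]; omega)
          (by intro c hc hen
              have h1 := hmaxPhi (W₂.erase c) ((Finset.erase_subset c W₂).trans hW₂A) hen
              rw [hPhiEval (W₂.erase c)] at h1
              rw [← hPhiEval W₂]
              have h2 := hguard.1
              omega)
          (fun h => absurd h (by omega))
        have hRA : W₂ ∪ isoSet G A W₂ ⊆ A := Finset.union_subset hW₂A isoSet_subset
        have hRrec := recur_bound hW₂A (fun T hTA hWT => by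
          have hT2 : 2 ≤ T.card := le_trans hW₂2 (Finset.card_le_card hWT)
          have h3 := hW₂max T ((hmemcand2 T).2 ⟨hTA, hT2⟩)
          rw [hPhiEval T, hPhiEval W₂] at h3
          exact h3)
        have hcardA' : (A \ (W₂ ∪ isoSet G A W₂)).card ≤ n := by
          have hss : A \ (W₂ ∪ isoSet G A W₂) ⊂ A := by
            apply Finset.sdiff_ssubset hRA
            exact hW₂ne.mono Finset.subset_union_left
          have := Finset.card_lt_card hss
          omega
        exact ak_step hRA hFp1 hFp2 hFp3 (ih (A \ (W₂ ∪ isoSet G A W₂)) hcardA' hRrec)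
      · -- P2 route
        have hm4 : ∀ T ⊆ A, 2 ≤ T.card → Phi T ≤ -4 := by
          intro T hTA hT2
          have := hW₂max T ((hmemcand2 T).2 ⟨hTA, hT2⟩)
          omega
        obtain ⟨p, hp⟩ := hAne
        obtain ⟨q, hqA, hadj⟩ := hnbr p hp
        have hpq : p ≠ q := fun h => G.loopless.irrefl p (h ▸ hadj)
        obtain ⟨hFp1, hFp2, hFp3⟩ := starsCover (G := G) (m := fun _ => p)
          (I := {q}) (W := {p})
          (by intro x hx
              rw [Finset.mem_singleton] at hx
              exact hx ▸ hadj.symm)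
          (by intro x hx; exact Finset.mem_singleton_self p)
          (by rw [Finset.disjoint_left]
              intro a ha hb
              rw [Finset.mem_singleton] at ha hb
              exact hpq (hb.symm.trans ha))
          (by intro d
              calc (fib (fun _ => p) {q} d).card ≤ ({q} : Finset V).card :=
                    Finset.card_le_card (Finset.filter_subset _ _)
                _ ≤ 2 := by simp)
          (by intro d hd
              rw [Finset.mem_singleton] at hd
              exact ⟨q, Finset.mem_filter.2 ⟨Finset.mem_singleton_self q, hd ▸ rfl⟩⟩)
        have hRpq : ({p} ∪ {q} : Finset V) = ({p, q} : Finset V) := by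
          ext x
          simp [Finset.mem_insert]
        rw [hRpq] at hFp2 hFp3
        have hRA : ({p, q} : Finset V) ⊆ A := by
          intro x hx
          rcases Finset.mem_insert.1 hx with rfl | hx
          · exact hp
          · rw [Finset.mem_singleton] at hx; exact hx ▸ hqA
        have hRrec := recur_bound_pair hp hqA hpq (fun T hTA hT2 => by
          have h3 := hm4 T hTA hT2
          rw [hPhiEval T] at h3
          exact h3)
        have hcardA' : (A \ ({p, q} : Finset V)).card ≤ n := by
          have hss : A \ ({p, q} : Finset V) ⊂ A := by
            apply Finset.sdiff_ssubset hRA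
            exact ⟨p, Finset.mem_insert_self _ _⟩
          have := Finset.card_lt_card hss
          omega
        exact ak_step hRA hFp1 hFp2 hFp3 (ih (A \ ({p, q} : Finset V)) hcardA' hRrec)
    · -- MAIN branch
      obtain ⟨Fp, hFp1, hFp2, hFp3⟩ := core_piece hcond hWA hWne
        (by rw [← hPhiEval]; omega)
        (by intro c hc hen
            have h1 := hmaxPhi (W.erase c) ((Finset.erase_subset c W).trans hWA) hen
            rw [hPhiEval (W.erase c)] at h1
            rw [← hPhiEval W]
            omega)
        (by intro h1
            rw [← hPhiEval]
            have h2 : Phi W ≠ -2 := fun hh => hguard ⟨hh, h1⟩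
            omega)
      have hRA : W ∪ isoSet G A W ⊆ A := Finset.union_subset hWA isoSet_subset
      have hRrec := recur_bound hWA (fun T hTA hWT => by
        have hTne : T.Nonempty := hWne.mono hWT
        have h3 := hmaxPhi T hTA hTne
        rw [hPhiEval T, hPhiEval W] at h3
        exact h3)
      have hcardA' : (A \ (W ∪ isoSet G A W)).card ≤ n := by
        have hss : A \ (W ∪ isoSet G A W) ⊂ A := by
          apply Finset.sdiff_ssubset hRA
          exact hWne.mono Finset.subset_union_left
        have := Finset.card_lt_card hss
        omega
      exact ak_step hRA hFp1 hFp2 hFp3 (ih (A \ (W ∪ isoSet G A W)) hcardA' hRrec)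

end SCF13
end C7

section C8
open scoped Classical
set_option linter.unusedSectionVars false
set_option linter.unusedVariables false
set_option maxHeartbeats 1000000

namespace SCF13
variable {V : Type*} [Fintype V]

lemma iso_trans {G : SimpleGraph V} {u v : V} {T : Finset V}
    (hT : T ⊆ Finset.univ \ ({u, v} : Finset V)) :
    isoSet G (Finset.univ \ ({u, v} : Finset V)) T
      = isoSet G Finset.univ (T ∪ {u, v}) := by
  ext x
  rw [mem_isoSet, mem_isoSet]
  constructor
  · rintro ⟨⟨hxA, hxT⟩, hcl⟩
    rw [Finset.mem_sdiff] at hxA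
    refine ⟨⟨Finset.mem_univ x, ?_⟩, ?_⟩
    · intro h
      rcases Finset.mem_union.1 h with h | h
      · exact hxT h
      · exact hxA.2 h
    · intro w hadj _
      by_cases hwuv : w ∈ ({u, v} : Finset V)
      · exact Finset.mem_union_right _ hwuv
      · exact Finset.mem_union_left _
          (hcl w hadj (Finset.mem_sdiff.2 ⟨Finset.mem_univ w, hwuv⟩))
  · rintro ⟨⟨_, hx⟩, hcl⟩
    have hxT : x ∉ T := fun h => hx (Finset.mem_union_left _ h)
    have hxuv : x ∉ ({u, v} : Finset V) := fun h => hx (Finset.mem_union_right _ h)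
    refine ⟨⟨Finset.mem_sdiff.2 ⟨Finset.mem_univ x, hxuv⟩, hxT⟩, ?_⟩
    intro w hadj hwA
    rcases Finset.mem_union.1 (hcl w hadj (Finset.mem_univ w)) with h | h
    · exact h
    · exact absurd h (Finset.mem_sdiff.1 hwA).2

lemma card_union_uv {u v : V} (huv : u ≠ v) {T : Finset V}
    (hT : T ⊆ Finset.univ \ ({u, v} : Finset V)) :
    (T ∪ ({u, v} : Finset V)).card = T.card + 2 := by
  have hdisj : Disjoint T ({u, v} : Finset V) := by
    rw [Finset.disjoint_left]
    intro a ha hb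
    exact (Finset.mem_sdiff.1 (hT ha)).2 hb
  rw [Finset.card_union_of_disjoint hdisj, Finset.card_pair huv]

/-- MAIN CONSTRUCTION for the hard direction. -/
lemma main_construct (G : SimpleGraph V) {u v : V} (he : G.Adj u v)
    (hA : ∀ S : Finset V, (isoSet G Finset.univ S).card ≤ 2 * S.card)
    (hB : ∀ S : Finset V, u ∈ S → v ∈ S →
      ((isoSet G Finset.univ S).card : ℤ) ≤ 2 * S.card - 3) :
    ∃ F, IsK11K12CycleFactor G F ∧ F.Adj u v := by
  have huv : u ≠ v := he.ne
  set A₀ : Finset V := Finset.univ \ ({u, v} : Finset V) with hA₀def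
  -- the "translated" bound on A₀
  have hBA : ∀ T ⊆ A₀, ((isoSet G A₀ T).card : ℤ) ≤ 2 * T.card + 1 := by
    intro T hT
    rw [iso_trans hT]
    have h1 := hB (T ∪ {u, v})
      (Finset.mem_union_right _ (Finset.mem_insert_self _ _))
      (Finset.mem_union_right _ (Finset.mem_insert_of_mem (Finset.mem_singleton_self _)))
    rw [card_union_uv huv hT] at h1
    push_cast at h1 ⊢
    omega
  have hmemuv : ∀ x, x ∈ A₀ ↔ ¬(x = u ∨ x = v) := by
    intro x
    rw [hA₀def, Finset.mem_sdiff]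
    simp [Finset.mem_insert]
  by_cases hc : ∀ S ⊆ A₀, (isoSet G A₀ S).card ≤ 2 * S.card
  · -- the P2 {u,v} suffices
    obtain ⟨F₀, h1, h2, h3⟩ := AK G A₀.card A₀ le_rfl hc
    obtain ⟨hp1, hp2, hp3⟩ := starsCover (G := G) (m := fun _ => u) (I := {v}) (W := {u})
      (by intro x hx; rw [Finset.mem_singleton] at hx; exact hx ▸ he.symm)
      (by intro x hx; exact Finset.mem_singleton_self u)
      (by rw [Finset.disjoint_left]
          intro a ha hb
          rw [Finset.mem_singleton] at ha hb
          exact huv (hb.symm.trans ha))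
      (by intro d
          calc (fib (fun _ => u) {v} d).card ≤ ({v} : Finset V).card :=
                Finset.card_le_card (Finset.filter_subset _ _)
            _ ≤ 2 := by simp)
      (by intro d hd
          rw [Finset.mem_singleton] at hd
          exact ⟨v, Finset.mem_filter.2 ⟨Finset.mem_singleton_self v, hd ▸ rfl⟩⟩)
    have hdisj : Disjoint ({u} ∪ {v} : Finset V) A₀ := by
      rw [Finset.disjoint_left]
      intro a ha hb
      rw [hmemuv a] at hb
      rcases Finset.mem_union.1 ha with h | h
      · exact hb (Or.inl (Finset.mem_singleton.1 h))
      · exact hb (Or.inr (Finset.mem_singleton.1 h))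
    obtain ⟨c1, c2, c3⟩ := combine hp1 h1 hp2 h2 hdisj hp3 h3
    refine ⟨_, ⟨c1, fun x => ?_⟩, ?_⟩
    · have hx : x ∈ ({u} ∪ {v} : Finset V) ∪ A₀ := by
        by_cases hxuv : x = u ∨ x = v
        · rcases hxuv with rfl | rfl
          · exact Finset.mem_union_left _ (Finset.mem_union_left _ (Finset.mem_singleton_self x))
          · exact Finset.mem_union_left _ (Finset.mem_union_right _ (Finset.mem_singleton_self x))
        · exact Finset.mem_union_right _ ((hmemuv x).2 hxuv)
      rcases c3 x hx with h | h
      · exact Or.inl h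
      · exact Or.inr (Or.inl h)
    · apply SimpleGraph.sup_adj _ _ _ _ |>.2
      left
      rw [stars_adj]
      exact ⟨huv, Or.inr ⟨Finset.mem_singleton_self v, rfl⟩⟩
  · -- a violator exists; take a minimal one
    push_neg at hc
    obtain ⟨S₀, hS₀A, hS₀v⟩ := hc
    set viol := A₀.powerset.filter (fun T => 2 * T.card < (isoSet G A₀ T).card) with hviol
    have hS₀mem : S₀ ∈ viol := by
      rw [hviol, Finset.mem_filter, Finset.mem_powerset]
      exact ⟨hS₀A, by omega⟩
    obtain ⟨S₁, hS₁mem, hS₁min⟩ := Finset.exists_min_image viol Finset.card ⟨S₀, hS₀mem⟩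
    rw [hviol, Finset.mem_filter, Finset.mem_powerset] at hS₁mem
    obtain ⟨hS₁A, hS₁v⟩ := hS₁mem
    have hS₁min' : ∀ T ⊆ A₀, T.card < S₁.card → (isoSet G A₀ T).card ≤ 2 * T.card := by
      intro T hTA hTc
      by_contra h
      push_neg at h
      have : T ∈ viol := by
        rw [hviol, Finset.mem_filter, Finset.mem_powerset]
        exact ⟨hTA, h⟩
      have := hS₁min T this
      omega
    -- exact count
    have hIub := hBA S₁ hS₁A
    have hIcard : ((isoSet G A₀ S₁).card : ℤ) = 2 * S₁.card + 1 := by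
      have : (2 * S₁.card : ℤ) < (isoSet G A₀ S₁).card := by exact_mod_cast hS₁v
      omega
    have hI1A : isoSet G A₀ S₁ ⊆ A₀ := isoSet_subset
    have hI1S : Disjoint (isoSet G A₀ S₁) S₁ := by
      rw [Finset.disjoint_left]
      intro a ha hb
      exact (mem_isoSet.1 ha).1.2 hb
    -- find x₀ ∈ I₁ adjacent to u or v
    have hx₀ex : ∃ x₀ ∈ isoSet G A₀ S₁, G.Adj u x₀ ∨ G.Adj v x₀ := by
      by_contra hno
      push_neg at hno
      have hsub : isoSet G A₀ S₁ ⊆ isoSet G Finset.univ S₁ := by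
        intro x hx
        obtain ⟨⟨hxA, hxS⟩, hcl⟩ := mem_isoSet.1 hx
        refine mem_isoSet.2 ⟨⟨Finset.mem_univ x, hxS⟩, ?_⟩
        intro w hadj _
        by_cases hwA : w ∈ A₀
        · exact hcl w hadj hwA
        · exfalso
          rw [hmemuv w, not_not] at hwA
          rcases hwA with rfl | rfl
          · exact (hno x hx).1 hadj.symm
          · exact (hno x hx).2 hadj.symm
      have h1 := Finset.card_le_card hsub
      have h2 := hA S₁
      omega
    obtain ⟨x₀, hx₀I, hx₀adj⟩ := hx₀ex
    have hx₀A : x₀ ∈ A₀ := hI1A hx₀I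
    have hx₀u : x₀ ≠ u := by
      intro h
      rw [hmemuv x₀] at hx₀A
      exact hx₀A (Or.inl h)
    have hx₀v : x₀ ≠ v := by
      intro h
      rw [hmemuv x₀] at hx₀A
      exact hx₀A (Or.inr h)
    -- P3 piece containing u, v, x₀ and the edge uv
    have hP3 : ∃ Fp : SimpleGraph V, Fp ≤ G ∧
        (∀ z ∈ Fp.support, z ∈ ({u, v, x₀} : Finset V)) ∧
        (∀ x ∈ ({u, v, x₀} : Finset V), IsK11Comp Fp x ∨ IsK12Comp Fp x) ∧
        Fp.Adj u v := by
      rcases hx₀adj with hadj | hadj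
      · obtain ⟨hp1, hp2, hp3⟩ := starsCover (G := G) (m := fun _ => u)
          (I := {x₀, v}) (W := {u})
          (by intro x hx
              rcases Finset.mem_insert.1 hx with rfl | hx
              · exact hadj.symm
              · rw [Finset.mem_singleton] at hx; exact hx ▸ he.symm)
          (by intro x hx; exact Finset.mem_singleton_self u)
          (by rw [Finset.disjoint_left]
              intro a ha hb
              rw [Finset.mem_singleton] at hb
              subst hb
              rcases Finset.mem_insert.1 ha with h | h
              · exact hx₀u h.symm
              · rw [Finset.mem_singleton] at h; exact huv h)
          (by intro d
              calc (fib (fun _ => u) {x₀, v} d).card ≤ ({x₀, v} : Finset V).card :=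
                    Finset.card_le_card (Finset.filter_subset _ _)
                _ ≤ 2 := Finset.card_insert_le _ _ |>.trans (by simp))
          (by intro d hd
              rw [Finset.mem_singleton] at hd
              exact ⟨x₀, Finset.mem_filter.2 ⟨Finset.mem_insert_self _ _, hd ▸ rfl⟩⟩)
        have hset : ({u} ∪ {x₀, v} : Finset V) = ({u, v, x₀} : Finset V) := by
          ext x
          simp only [Finset.mem_union, Finset.mem_insert, Finset.mem_singleton]
          tauto
        rw [hset] at hp2 hp3
        refine ⟨_, hp1, hp2, hp3, ?_⟩
        rw [stars_adj]
        refine ⟨huv, Or.inr ⟨?_, rfl⟩⟩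
        exact Finset.mem_insert_of_mem (Finset.mem_singleton_self v)
      · obtain ⟨hp1, hp2, hp3⟩ := starsCover (G := G) (m := fun _ => v)
          (I := {x₀, u}) (W := {v})
          (by intro x hx
              rcases Finset.mem_insert.1 hx with rfl | hx
              · exact hadj.symm
              · rw [Finset.mem_singleton] at hx; exact hx ▸ he)
          (by intro x hx; exact Finset.mem_singleton_self v)
          (by rw [Finset.disjoint_left]
              intro a ha hb
              rw [Finset.mem_singleton] at hb
              subst hb
              rcases Finset.mem_insert.1 ha with h | h
              · exact hx₀v h.symm
              · rw [Finset.mem_singleton] at h; exact huv h.symm)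
          (by intro d
              calc (fib (fun _ => v) {x₀, u} d).card ≤ ({x₀, u} : Finset V).card :=
                    Finset.card_le_card (Finset.filter_subset _ _)
                _ ≤ 2 := Finset.card_insert_le _ _ |>.trans (by simp))
          (by intro d hd
              rw [Finset.mem_singleton] at hd
              exact ⟨x₀, Finset.mem_filter.2 ⟨Finset.mem_insert_self _ _, hd ▸ rfl⟩⟩)
        have hset : ({v} ∪ {x₀, u} : Finset V) = ({u, v, x₀} : Finset V) := by
          ext x
          simp only [Finset.mem_union, Finset.mem_insert, Finset.mem_singleton]
          tauto
        rw [hset] at hp2 hp3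
        refine ⟨_, hp1, hp2, hp3, ?_⟩
        have : (stars (fun _ => v) {x₀, u}).Adj v u := by
          rw [stars_adj]
          refine ⟨huv.symm, Or.inr ⟨?_, rfl⟩⟩
          exact Finset.mem_insert_of_mem (Finset.mem_singleton_self u)
        exact this.symm
    obtain ⟨Fp, hFp1, hFp2, hFp3, hFpuv⟩ := hP3
    -- stars on S₁ covering I₁ \ {x₀}
    set I₁' := (isoSet G A₀ S₁).erase x₀ with hI₁'def
    have hI₁'card : (I₁'.card : ℤ) = 2 * S₁.card := by
      rw [hI₁'def, Finset.card_erase_of_mem hx₀I]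
      have hpos : 0 < (isoSet G A₀ S₁).card := by omega
      push_cast [hpos]
      omega
    have hHallc : ∀ s ⊆ I₁', s.card ≤ 2 * (s.biUnion (fun x => S₁.filter (G.Adj x ·))).card := by
      intro s hs
      set T := s.biUnion (fun x => S₁.filter (G.Adj x ·)) with hT
      have hTS : T ⊆ S₁ := by
        intro w hw
        obtain ⟨x, hx, hxw⟩ := Finset.mem_biUnion.1 hw
        exact (Finset.mem_filter.1 hxw).1
      have hsub : s ⊆ isoSet G A₀ T := by
        intro x hx
        have hxI : x ∈ isoSet G A₀ S₁ := Finset.mem_of_mem_erase (hs hx)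
        obtain ⟨⟨hxA, hxS⟩, hcl⟩ := mem_isoSet.1 hxI
        refine mem_isoSet.2 ⟨⟨hxA, fun hxT => hxS (hTS hxT)⟩, ?_⟩
        intro w hadj hwA
        exact Finset.mem_biUnion.2 ⟨x, hx, Finset.mem_filter.2 ⟨hcl w hadj hwA, hadj⟩⟩
      by_cases hTeq : T = S₁
      · have h1 : s.card ≤ I₁'.card := Finset.card_le_card hs
        rw [hTeq]
        omega
      · have hTss : T ⊂ S₁ := Finset.ssubset_iff_subset_ne.2 ⟨hTS, hTeq⟩
        have h2 := hS₁min' T (hTS.trans hS₁A) (Finset.card_lt_card hTss)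
        calc s.card ≤ (isoSet G A₀ T).card := Finset.card_le_card hsub
          _ ≤ 2 * T.card := h2
    obtain ⟨m, hmN, hmfib⟩ := hall2 _ hHallc
    have hmS : ∀ x ∈ I₁', m x ∈ S₁ := fun x hx => (Finset.mem_filter.1 (hmN x hx)).1
    have hmadj : ∀ x ∈ I₁', G.Adj x (m x) := fun x hx => (Finset.mem_filter.1 (hmN x hx)).2
    have hfibsum : ∑ c ∈ S₁, (fib m I₁' c).card = I₁'.card :=
      (Finset.card_eq_sum_card_fiberwise hmS).symm
    have honly : ∀ c ∈ S₁, (fib m I₁' c).Nonempty := by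
      intro c hcS
      by_contra hcne
      have hc0 : (fib m I₁' c).card = 0 := by
        rw [Finset.not_nonempty_iff_eq_empty.1 hcne]; rfl
      have hsum1 : ∑ c' ∈ S₁, (fib m I₁' c').card
          = (fib m I₁' c).card + ∑ c' ∈ S₁.erase c, (fib m I₁' c').card :=
        (Finset.add_sum_erase _ _ hcS).symm
      have hsum3 : ∑ c' ∈ S₁.erase c, (fib m I₁' c').card ≤ (S₁.erase c).card • 2 :=
        Finset.sum_le_card_nsmul _ _ 2 (fun i _ => hmfib i)
      rw [smul_eq_mul] at hsum3
      have hce : (S₁.erase c).card = S₁.card - 1 := Finset.card_erase_of_mem hcS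
      have hS₁pos : 0 < S₁.card := Finset.card_pos.2 ⟨c, hcS⟩
      omega
    obtain ⟨hq1, hq2, hq3⟩ := starsCover hmadj hmS
      (by rw [Finset.disjoint_left]
          intro a ha hb
          exact (Finset.disjoint_left.1 hI1S) (Finset.mem_of_mem_erase ha) hb)
      hmfib honly
    -- recursion on A' = A₀ \ (S₁ ∪ I₁)
    have hrec := recur_bound (G := G) hS₁A (fun T hTA hS₁T => by
      have h1 := hBA T hTA
      omega)
    obtain ⟨F', hr1, hr2, hr3⟩ := AK G (A₀ \ (S₁ ∪ isoSet G A₀ S₁)).card _ le_rfl hrec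
    -- combine the three pieces
    have hdisj1 : Disjoint (S₁ ∪ I₁') (A₀ \ (S₁ ∪ isoSet G A₀ S₁)) := by
      rw [Finset.disjoint_left]
      intro a ha hb
      obtain ⟨_, hb2⟩ := Finset.mem_sdiff.1 hb
      rcases Finset.mem_union.1 ha with h | h
      · exact hb2 (Finset.mem_union_left _ h)
      · exact hb2 (Finset.mem_union_right _ (Finset.mem_of_mem_erase h))
    obtain ⟨d1, d2, d3⟩ := combine hq1 hr1 hq2 hr2 hdisj1 hq3 hr3
    have hdisj2 : Disjoint ({u, v, x₀} : Finset V)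
        ((S₁ ∪ I₁') ∪ (A₀ \ (S₁ ∪ isoSet G A₀ S₁))) := by
      rw [Finset.disjoint_left]
      intro a ha hb
      have haA : a ∈ A₀ ∨ a = x₀ → a ∉ ({u, v} : Finset V) := by
        intro h hmem
        rcases h with h | rfl
        · rw [hmemuv a] at h
          rcases Finset.mem_insert.1 hmem with h' | h'
          · exact h (Or.inl h')
          · exact h (Or.inr (Finset.mem_singleton.1 h'))
        · rcases Finset.mem_insert.1 hmem with h' | h'
          · exact hx₀u h'
          · exact hx₀v (Finset.mem_singleton.1 h')
      rcases Finset.mem_insert.1 ha with rfl | ha'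
      · -- a = u
        rcases Finset.mem_union.1 hb with h | h
        · rcases Finset.mem_union.1 h with h' | h'
          · exact haA (Or.inl (hS₁A h')) (Finset.mem_insert_self _ _)
          · exact haA (Or.inl (hI1A (Finset.mem_of_mem_erase h'))) (Finset.mem_insert_self _ _)
        · exact haA (Or.inl (Finset.mem_sdiff.1 h).1) (Finset.mem_insert_self _ _)
      rcases Finset.mem_insert.1 ha' with rfl | ha''
      · -- a = v
        have hmem : a ∈ ({u, a} : Finset V) :=
          Finset.mem_insert_of_mem (Finset.mem_singleton_self a)
        rcases Finset.mem_union.1 hb with h | h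
        · rcases Finset.mem_union.1 h with h' | h'
          · exact haA (Or.inl (hS₁A h')) hmem
          · exact haA (Or.inl (hI1A (Finset.mem_of_mem_erase h'))) hmem
        · exact haA (Or.inl (Finset.mem_sdiff.1 h).1) hmem
      · -- a = x₀
        rw [Finset.mem_singleton] at ha''
        subst ha''
        rcases Finset.mem_union.1 hb with h | h
        · rcases Finset.mem_union.1 h with h' | h'
          · exact (Finset.disjoint_left.1 hI1S) hx₀I h'
          · exact (Finset.ne_of_mem_erase h') rfl
        · exact (Finset.mem_sdiff.1 h).2 (Finset.mem_union_right _ hx₀I)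
    obtain ⟨e1, e2, e3⟩ := combine hFp1 d1 hFp2 d2 hdisj2 hFp3 d3
    refine ⟨_, ⟨e1, fun x => ?_⟩, ?_⟩
    · have hx : x ∈ ({u, v, x₀} : Finset V)
          ∪ ((S₁ ∪ I₁') ∪ (A₀ \ (S₁ ∪ isoSet G A₀ S₁))) := by
        by_cases hxuv : x = u ∨ x = v
        · apply Finset.mem_union_left
          rcases hxuv with rfl | rfl
          · exact Finset.mem_insert_self _ _
          · exact Finset.mem_insert_of_mem (Finset.mem_insert_self _ _)
        · have hxA : x ∈ A₀ := (hmemuv x).2 hxuv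
          by_cases hxS : x ∈ S₁
          · exact Finset.mem_union_right _
              (Finset.mem_union_left _ (Finset.mem_union_left _ hxS))
          by_cases hxI : x ∈ isoSet G A₀ S₁
          · by_cases hxx : x = x₀
            · subst hxx
              exact Finset.mem_union_left _ (Finset.mem_insert_of_mem
                (Finset.mem_insert_of_mem (Finset.mem_singleton_self _)))
            · exact Finset.mem_union_right _ (Finset.mem_union_left _
                (Finset.mem_union_right _ (Finset.mem_erase.2 ⟨hxx, hxI⟩)))
          · exact Finset.mem_union_right _ (Finset.mem_union_right _
              (Finset.mem_sdiff.2 ⟨hxA, fun h =>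
                (Finset.mem_union.1 h).elim hxS hxI⟩))
      rcases e3 x hx with h | h
      · exact Or.inl h
      · exact Or.inr (Or.inl h)
    · exact (SimpleGraph.sup_adj _ _ _ _).2 (Or.inl hFpuv)

end SCF13
end C8



/-- in a graph having a `{K_{1,1}, K_{1,2}, C_m : m ≥ 3}`-factor, an edge
`uv` lies in no such factor iff there is `S` containing `u, v` with
`2|S| - 2 ≤ iso(G-S) ≤ 2|S|`. -/
theorem stmt13 {V : Type*} [Fintype V] (G : SimpleGraph V)
    (hfac : ∃ F, IsK11K12CycleFactor G F) (u v : V) (he : G.Adj u v) :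
    (¬ ∃ F, IsK11K12CycleFactor G F ∧ F.Adj u v) ↔
      ∃ S : Set V, u ∈ S ∧ v ∈ S ∧
        2 * (S.ncard : ℤ) - 2 ≤ (iso G S : ℤ) ∧ (iso G S : ℤ) ≤ 2 * (S.ncard : ℤ) := by
  classical
  obtain ⟨F₀, hF₀⟩ := hfac
  have hdeg₀ := SCF13.deg12 hF₀.2
  have hA : ∀ S : Finset V, (SCF13.isoSet G Finset.univ S).card ≤ 2 * S.card :=
    fun S => SCF13.factor_iso_bound hF₀.1 hdeg₀ S
  constructor
  · intro hno
    by_contra hnS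
    apply hno
    apply SCF13.main_construct G he hA
    intro S huS hvS
    by_contra hcon
    push_neg at hcon
    apply hnS
    refine ⟨(↑S : Set V), Finset.mem_coe.2 huS, Finset.mem_coe.2 hvS, ?_, ?_⟩
    · rw [Set.ncard_coe_finset, SCF13.iso_eq_isoSet, Finset.toFinset_coe]
      omega
    · rw [Set.ncard_coe_finset, SCF13.iso_eq_isoSet, Finset.toFinset_coe]
      have h3 := hA S
      push_cast
      omega
  · rintro ⟨S, huS, hvS, h1, h2⟩ ⟨F, hFfac, hFuv⟩
    apply SCF13.factor_edge_contra hFfac.1 hFfac.2 hFuv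
      (Set.mem_toFinset.2 huS) (Set.mem_toFinset.2 hvS)
    rw [← Set.ncard_eq_toFinset_card' S, ← SCF13.iso_eq_isoSet]
    exact h1
end
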